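/- arXiv:2602.00657 — 8 statements merged into one kernel-verified Lean document; each statement's English description precedes it below -/
import Mathlib

section
/- Let G be a finite simple graph containing four pairwise false twins u₁, u₂, u₃, u₄ such that N[u₁], N[u₂], N[u₃], N[u₄] ∈ B. Then for every non-clashing teaching map T of size 1 for B, there exists i ∈ {1,2,3,4} such that T(N[uᵢ]) = {uᵢ}. -/
/-- The closed neighborhood `N[v]` of a vertex `v` in a graph `G`. -/
def cN {V : Type*} (G : SimpleGraph V) (v : V) : Set V :=
  insert v {u | G.Adj v u}

/-- A vertex `w` distinguishes `N[u]` and `N[v]` if it lies in exactly one of them. -/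
def Distinguishes {V : Type*} (G : SimpleGraph V) (w u v : V) : Prop :=
  Xor' (w ∈ cN G u) (w ∈ cN G v)

/-- `T` is a non-clashing teaching map for the family `B` of closed neighborhoods of `G`. -/
def IsNCTM {V : Type*} (G : SimpleGraph V) (B : Set (Set V)) (T : Set V → Set V) : Prop :=
  ∀ u v : V, cN G u ∈ B → cN G v ∈ B → cN G u ≠ cN G v →
    ∃ w ∈ T (cN G u) ∪ T (cN G v), Distinguishes G w u v

/-- If a graph `G` contains four pairwise false twins `u 0, u 1, u 2, u 3` whose closed
neighborhoods all belong to `B`, then every non-clashing teaching map of size `1` for `B`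
satisfies `T (N[u i]) = {u i}` for some `i`. -/
theorem stmt0 {V : Type*} [Fintype V] (G : SimpleGraph V)
    (B : Set (Set V)) (hB : B ⊆ {S | ∃ v : V, S = cN G v})
    (u : Fin 4 → V) (hinj : Function.Injective u)
    (htwin : ∀ i j : Fin 4, G.neighborSet (u i) = G.neighborSet (u j))
    (hmem : ∀ i : Fin 4, cN G (u i) ∈ B)
    (T : Set V → Set V)
    (hnc : IsNCTM G B T)
    (hsize : ∀ S ∈ B, (T S).ncard ≤ 1) :
    ∃ i : Fin 4, T (cN G (u i)) = {u i} := by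
  classical
  by_contra hcon
  push_neg at hcon
  -- basic facts
  have hadj : ∀ i j : Fin 4, i ≠ j → ¬ G.Adj (u i) (u j) := by
    intro i j hij hA
    have h1 : u j ∈ G.neighborSet (u i) := hA
    rw [htwin i j] at h1
    exact G.irrefl h1
  have hnm : ∀ i j : Fin 4, i ≠ j → u i ∉ cN G (u j) := by
    intro i j hij h
    rcases Set.mem_insert_iff.mp h with h | h
    · exact hij (hinj h)
    · exact hadj j i (Ne.symm hij) h
  have hne : ∀ i j : Fin 4, i ≠ j → cN G (u i) ≠ cN G (u j) := by
    intro i j hij h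
    exact hnm i j hij (h ▸ Set.mem_insert _ _)
  have hdw : ∀ (i j : Fin 4) (w : V), i ≠ j → Distinguishes G w (u i) (u j) →
      w = u i ∨ w = u j := by
    intro i j w hij hd
    rcases hd with ⟨h1, h2⟩ | ⟨h1, h2⟩
    · left
      rcases Set.mem_insert_iff.mp h1 with h | h
      · exact h
      · exfalso
        apply h2
        have h3 : w ∈ G.neighborSet (u i) := h
        rw [htwin i j] at h3
        exact Set.mem_insert_iff.mpr (Or.inr h3)
    · right
      rcases Set.mem_insert_iff.mp h1 with h | h
      · exact h
      · exfalso
        apply h2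
        have h3 : w ∈ G.neighborSet (u j) := h
        rw [htwin j i] at h3
        exact Set.mem_insert_iff.mpr (Or.inr h3)
  -- each T(N[u i]) does not contain u i
  have hni : ∀ i : Fin 4, u i ∉ T (cN G (u i)) := by
    intro i hmemi
    apply hcon i
    have hone := hsize _ (hmem i)
    rw [Set.ncard_le_one (Set.toFinite _)] at hone
    ext x
    constructor
    · intro hx; exact hone x hx (u i) hmemi
    · intro hx; rw [Set.mem_singleton_iff] at hx; rw [hx]; exact hmemi
  -- no T-set contains two distinct twins
  have key : ∀ i j k : Fin 4, j ≠ k → u j ∈ T (cN G (u i)) → u k ∈ T (cN G (u i)) → False := by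
    intro i j k hjk hj hk
    have hone := hsize _ (hmem i)
    rw [Set.ncard_le_one (Set.toFinite _)] at hone
    exact hjk (hinj (hone _ hj _ hk))
  -- for each pair, one twin's T-set contains the other twin
  have hpair : ∀ i j : Fin 4, i ≠ j →
      u j ∈ T (cN G (u i)) ∨ u i ∈ T (cN G (u j)) := by
    intro i j hij
    obtain ⟨w, hw, hd⟩ := hnc (u i) (u j) (hmem i) (hmem j) (hne i j hij)
    rcases hdw i j w hij hd with rfl | rfl
    · right
      rcases hw with hw | hw
      · exact absurd hw (hni i)
      · exact hw
    · left
      rcases hw with hw | hw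
      · exact hw
      · exact absurd hw (hni j)
  have n01 : (0 : Fin 4) ≠ 1 := by decide
  have n02 : (0 : Fin 4) ≠ 2 := by decide
  have n03 : (0 : Fin 4) ≠ 3 := by decide
  have n12 : (1 : Fin 4) ≠ 2 := by decide
  have n13 : (1 : Fin 4) ≠ 3 := by decide
  have n23 : (2 : Fin 4) ≠ 3 := by decide
  have n10 : (1 : Fin 4) ≠ 0 := by decide
  have n20 : (2 : Fin 4) ≠ 0 := by decide
  have n30 : (3 : Fin 4) ≠ 0 := by decide
  have n21 : (2 : Fin 4) ≠ 1 := by decide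
  have n31 : (3 : Fin 4) ≠ 1 := by decide
  have n32 : (3 : Fin 4) ≠ 2 := by decide
  rcases hpair 0 1 n01 with h1 | h1 <;>
  rcases hpair 0 2 n02 with h2 | h2 <;>
  rcases hpair 0 3 n03 with h3 | h3 <;>
  rcases hpair 1 2 n12 with h4 | h4 <;>
  rcases hpair 1 3 n13 with h5 | h5 <;>
  rcases hpair 2 3 n23 with h6 | h6 <;>
  all_goals first
  | exact key 0 1 2 n12 h1 h2
  | exact key 0 1 3 n13 h1 h3
  | exact key 0 2 3 n23 h2 h3
  | exact key 1 0 2 n02 h1 h4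
  | exact key 1 0 3 n03 h1 h5
  | exact key 1 2 3 n23 h4 h5
  | exact key 2 0 1 n01 h2 h4
  | exact key 2 0 3 n03 h2 h6
  | exact key 2 1 3 n13 h4 h6
  | exact key 3 0 1 n01 h3 h5
  | exact key 3 0 2 n02 h3 h6
  | exact key 3 1 2 n12 h5 h6
end

section
/- Let φ be a 3-CNF formula with variables x₁,…,xₙ and clauses C₁,…,Cₘ, each clause containing three literals on distinct variables. Construct the graph G as follows: for each clause Cⱼ there is a vertex cⱼ; for each i ∈ [n] there are vertices vᵢ, tᵢ, fᵢ with tᵢ and fᵢ adjacent to vᵢ; there is a dummy vertex v₀; for each i ∈ {0} ∪ [n] there are vertices Vᵢ = {vᵢ⁰, vᵢ¹, vᵢ², vᵢ³, vᵢ⁴} and vᵢ*, where vᵢ* is adjacent to every vertex of Vᵢ and every vertex of Vᵢ ∪ {vᵢ*} is adjacent to vᵢ; for each i ∈ [n] and j ∈ [m], if literal xᵢ occurs in Cⱼ then fᵢ is adjacent to cⱼ, if literal ¬xᵢ occurs in Cⱼ then tᵢ is adjacent to cⱼ, and in either case there is a vertex c_{j,i} adjacent to vᵢ, cⱼ, vᵢ*,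 and every vertex of Vᵢ; finally the set {cⱼ : j ∈ [m]} ∪ {vᵢ : i ∈ {0} ∪ [n]} forms a clique. Let B = {N[w] : w ∈ {cⱼ : j ∈ [m]} ∪ ⋃_{i ∈ {0} ∪ [n]} ({vᵢ, vᵢ*} ∪ {vᵢ¹, vᵢ², vᵢ³, vᵢ⁴})}. Then φ is satisfiable if and only if NCTD(B) ≤ 1. -/
/-- Raw vertex names of the reduction graph for `N-NCTD`:
`cl j` is the clause vertex `c_j`; `vr i` is the variable vertex `v_i` (`vr none` is the
dummy vertex `v_0`); `lit i true` is `t_i` and `lit i false` is `f_i`; `vp i p` is `v_i^p`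
for `p ∈ {0,…,4}` (the set `V_i`); `vstar i` is `v_i^⋆`; `cji j i` is `c_{j,i}`. -/
inductive RVtx (n m : ℕ) where
  | cl (j : Fin m)
  | vr (i : Option (Fin n))
  | lit (i : Fin n) (b : Bool)
  | vp (i : Option (Fin n)) (p : Fin 5)
  | vstar (i : Option (Fin n))
  | cji (j : Fin m) (i : Fin n)

/-- A raw vertex name is an actual vertex; `c_{j,i}` exists only when variable `x_i`
occurs in clause `C_j`. -/
def RValid {n m : ℕ} (Cl : Fin m → Fin 3 → Fin n × Bool) : RVtx n m → Prop
  | RVtx.cji j i => ∃ a : Fin 3, (Cl j a).1 = i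
  | _ => True

/-- The edges of the reduction graph (one orientation each; symmetrized by `fromRel`):
`t_i, f_i ∼ v_i`; `f_i ∼ c_j` when `x_i ∈ C_j` and `t_i ∼ c_j` when `¬x_i ∈ C_j`;
`v_i^⋆, v_i^p ∼ v_i` and `v_i^p ∼ v_i^⋆`; `c_{j,i} ∼ v_i, c_j, v_i^⋆, v_i^p`;
and the clause and variable vertices form a clique. -/
def redRel {n m : ℕ} (Cl : Fin m → Fin 3 → Fin n × Bool) : RVtx n m → RVtx n m → Prop
  | RVtx.lit i _, RVtx.vr i' => i' = some i
  | RVtx.lit i b, RVtx.cl j => ∃ a : Fin 3, Cl j a = (i, !b)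
  | RVtx.vp i _, RVtx.vstar i' => i' = i
  | RVtx.vp i _, RVtx.vr i' => i' = i
  | RVtx.vstar i, RVtx.vr i' => i' = i
  | RVtx.cji _ i, RVtx.vr i' => i' = some i
  | RVtx.cji j _, RVtx.cl j' => j' = j
  | RVtx.cji _ i, RVtx.vstar i' => i' = some i
  | RVtx.cji _ i, RVtx.vp i' _ => i' = some i
  | RVtx.cl _, RVtx.cl _ => True
  | RVtx.cl _, RVtx.vr _ => True
  | RVtx.vr _, RVtx.vr _ => True
  | _, _ => False

/-- The vertex set of the reduction graph. -/
def RedVert {n m : ℕ} (Cl : Fin m → Fin 3 → Fin n × Bool) : Type _ :=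
  {x : RVtx n m // RValid Cl x}

/-- The reduction graph `G` built from the 3-CNF formula `Cl`. -/
def redGraph {n m : ℕ} (Cl : Fin m → Fin 3 → Fin n × Bool) : SimpleGraph (RedVert Cl) :=
  SimpleGraph.fromRel (fun a b => redRel Cl a.1 b.1)

/-- The vertices whose closed neighborhoods belong to `B`: all `c_j`, `v_i`, `v_i^⋆`,
and `v_i^p` for `p ∈ {1,2,3,4}` (but not `v_i^0`, nor the literal and `c_{j,i}` vertices). -/
def inB {n m : ℕ} : RVtx n m → Prop
  | RVtx.cl _ => True
  | RVtx.vr _ => True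
  | RVtx.vstar _ => True
  | RVtx.vp _ p => p ≠ 0
  | _ => False

/-- The family `B` of closed neighborhoods of the reduction graph. -/
def redB {n m : ℕ} (Cl : Fin m → Fin 3 → Fin n × Bool) : Set (Set (RedVert Cl)) :=
  {S | ∃ w : RedVert Cl, inB w.1 ∧ S = cN (redGraph Cl) w}

namespace NRed
open RVtx

variable {n m : ℕ} {Cl : Fin m → Fin 3 → Fin n × Bool}

lemma mem_cN_iff (x y : RedVert Cl) :
    x ∈ cN (redGraph Cl) y ↔ (x.1 = y.1 ∨ redRel Cl y.1 x.1 ∨ redRel Cl x.1 y.1) := by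
  unfold cN redGraph
  simp only [Set.mem_insert_iff, Set.mem_setOf_eq, SimpleGraph.fromRel_adj]
  constructor
  · rintro (h | ⟨-, h⟩)
    · exact Or.inl (by rw [h])
    · exact Or.inr h
  · rintro (h | h)
    · exact Or.inl (Subtype.ext h)
    · by_cases he : x = y
      · exact Or.inl he
      · exact Or.inr ⟨fun hh => he hh.symm, h⟩

@[simp] lemma mem_cN_mk (a b : RVtx n m) (ha : RValid Cl a) (hb : RValid Cl b) :
    @Membership.mem (RedVert Cl) (Set (RedVert Cl)) _ (cN (redGraph Cl) (Subtype.mk b hb))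
      (Subtype.mk a ha) ↔ (a = b ∨ redRel Cl b a ∨ redRel Cl a b) :=
  mem_cN_iff _ _

@[simp] lemma mk_eq_mk (a b : RVtx n m) (ha : RValid Cl a) (hb : RValid Cl b) :
    @Eq (RedVert Cl) (Subtype.mk a ha) (Subtype.mk b hb) ↔ a = b :=
  ⟨fun h => congrArg Subtype.val h, fun h => Subtype.ext h⟩

@[simp] lemma var_eq_mk (w : RedVert Cl) (b : RVtx n m) (hb : RValid Cl b) :
    @Eq (RedVert Cl) w (Subtype.mk b hb) ↔ w.1 = b :=
  ⟨fun h => congrArg Subtype.val h, fun h => Subtype.ext h⟩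

@[simp] lemma mk_eq_var (w : RedVert Cl) (b : RVtx n m) (hb : RValid Cl b) :
    @Eq (RedVert Cl) (Subtype.mk b hb) w ↔ b = w.1 :=
  ⟨fun h => congrArg Subtype.val h, fun h => Subtype.ext h⟩

@[simp] lemma mem_cN_var_mk (x : RedVert Cl) (b : RVtx n m) (hb : RValid Cl b) :
    @Membership.mem (RedVert Cl) (Set (RedVert Cl)) _ (cN (redGraph Cl) (Subtype.mk b hb))
      x ↔ (x.1 = b ∨ redRel Cl b x.1 ∨ redRel Cl x.1 b) :=
  mem_cN_iff _ _

@[simp] lemma mem_cN_mk_var (a : RVtx n m) (ha : RValid Cl a) (y : RedVert Cl) :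
    @Membership.mem (RedVert Cl) (Set (RedVert Cl)) _ (cN (redGraph Cl) y)
      (Subtype.mk a ha) ↔ (a = y.1 ∨ redRel Cl y.1 a ∨ redRel Cl a y.1) :=
  mem_cN_iff _ _

@[simp] lemma mem_cN_cji_mk (j : Fin m) (i : Fin n) (ha : ∃ a : Fin 3, (Cl j a).1 = i)
    (b : RVtx n m) (hb : RValid Cl b) :
    @Membership.mem (RedVert Cl) (Set (RedVert Cl)) _ (cN (redGraph Cl) (Subtype.mk b hb))
      (Subtype.mk (RVtx.cji j i) ha) ↔
      (RVtx.cji j i = b ∨ redRel Cl b (RVtx.cji j i) ∨ redRel Cl (RVtx.cji j i) b) :=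
  mem_cN_iff _ _

instance : Finite (RVtx n m) := by
  let f : RVtx n m → (Fin m ⊕ Option (Fin n) ⊕ (Fin n × Bool) ⊕ (Option (Fin n) × Fin 5) ⊕ Option (Fin n) ⊕ (Fin m × Fin n))
    | RVtx.cl j => Sum.inl j
    | RVtx.vr i => Sum.inr (Sum.inl i)
    | RVtx.lit i b => Sum.inr (Sum.inr (Sum.inl (i, b)))
    | RVtx.vp i p => Sum.inr (Sum.inr (Sum.inr (Sum.inl (i, p))))
    | RVtx.vstar i => Sum.inr (Sum.inr (Sum.inr (Sum.inr (Sum.inl i))))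
    | RVtx.cji j i => Sum.inr (Sum.inr (Sum.inr (Sum.inr (Sum.inr (j, i)))))
  apply Finite.of_injective f
  intro a b hab
  cases a <;> cases b <;> simp_all [f]

instance : Finite (RedVert Cl) := Subtype.finite

variable (Cl) in
def vCl (j : Fin m) : RedVert Cl := ⟨RVtx.cl j, @id (RValid Cl (RVtx.cl j)) True.intro⟩
variable (Cl) in
def vVr (i : Option (Fin n)) : RedVert Cl := ⟨RVtx.vr i, @id (RValid Cl (RVtx.vr i)) True.intro⟩
variable (Cl) in
def vLit (i : Fin n) (b : Bool) : RedVert Cl := ⟨RVtx.lit i b, @id (RValid Cl (RVtx.lit i b)) True.intro⟩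
variable (Cl) in
def vVp (i : Option (Fin n)) (p : Fin 5) : RedVert Cl := ⟨RVtx.vp i p, @id (RValid Cl (RVtx.vp i p)) True.intro⟩
variable (Cl) in
def vVs (i : Option (Fin n)) : RedVert Cl := ⟨RVtx.vstar i, @id (RValid Cl (RVtx.vstar i)) True.intro⟩

lemma cN_ne_of {u v w : RedVert Cl}
    (h : Xor' (w ∈ cN (redGraph Cl) u) (w ∈ cN (redGraph Cl) v)) :
    cN (redGraph Cl) u ≠ cN (redGraph Cl) v := by
  intro he
  rw [he] at h
  rcases h with ⟨h1, h2⟩ | ⟨h1, h2⟩ <;> exact h2 h1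

-- sanity membership computations
example (i : Option (Fin n)) (p : Fin 5) :
    vVp Cl i p ∈ cN (redGraph Cl) (vVs Cl i) := by
  simp [mem_cN_iff, redRel, vVp, vVs]

example (i : Option (Fin n)) (p q : Fin 5) (h : p ≠ q) :
    vVp Cl i p ∉ cN (redGraph Cl) (vVp Cl i q) := by
  simp [mem_cN_iff, redRel, vVp, h]

example (i0 : Fin n) : vLit Cl i0 true ∈ cN (redGraph Cl) (vVr Cl (some i0)) := by
  simp [mem_cN_iff, redRel, vLit, vVr]

example (i0 : Fin n) (i : Option (Fin n)) (p : Fin 5) :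
    vLit Cl i0 true ∉ cN (redGraph Cl) (vVp Cl i p) := by
  simp [mem_cN_iff, redRel, vLit, vVp]

variable {n m : ℕ} {Cl : Fin m → Fin 3 → Fin n × Bool}

lemma vp_diff {i : Option (Fin n)} {p q : Fin 5} (hpq : p ≠ q) {w : RedVert Cl}
    (h : Xor' (w ∈ cN (redGraph Cl) (vVp Cl i p)) (w ∈ cN (redGraph Cl) (vVp Cl i q))) :
    w = vVp Cl i p ∨ w = vVp Cl i q := by
  obtain ⟨x, hx⟩ := w
  rcases h with ⟨h1, h2⟩ | ⟨h1, h2⟩ <;>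
    cases x <;>
    simp_all [mem_cN_iff, redRel, vVp, Subtype.ext_iff]

lemma star_vp_diff {i : Option (Fin n)} {p : Fin 5} {w : RedVert Cl}
    (h : Xor' (w ∈ cN (redGraph Cl) (vVs Cl i)) (w ∈ cN (redGraph Cl) (vVp Cl i p))) :
    ∃ q, q ≠ p ∧ w.1 = RVtx.vp i q := by
  obtain ⟨x, hx⟩ := w
  cases x with
  | vp i' q =>
      rcases h with ⟨h1, h2⟩ | ⟨h1, h2⟩
      · simp only [mem_cN_iff, redRel, vVs, vVp] at h1 h2
        obtain rfl : i = i' := by simp_all [redRel]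
        exact ⟨q, by simp_all, rfl⟩
      · exfalso; simp_all [mem_cN_iff, redRel, vVs, vVp]
  | cl j => exfalso; rcases h with ⟨h1, h2⟩ | ⟨h1, h2⟩ <;> simp_all [mem_cN_iff, redRel, vVs, vVp]
  | vr i' => exfalso; rcases h with ⟨h1, h2⟩ | ⟨h1, h2⟩ <;> simp_all [mem_cN_iff, redRel, vVs, vVp]
  | lit i' b => exfalso; rcases h with ⟨h1, h2⟩ | ⟨h1, h2⟩ <;> simp_all [mem_cN_iff, redRel, vVs, vVp]
  | vstar i' => exfalso; rcases h with ⟨h1, h2⟩ | ⟨h1, h2⟩ <;> simp_all [mem_cN_iff, redRel, vVs, vVp]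
  | cji j i' => exfalso; rcases h with ⟨h1, h2⟩ | ⟨h1, h2⟩ <;> simp_all [mem_cN_iff, redRel, vVs, vVp]

section Rev
variable {T : Set (RedVert Cl) → Set (RedVert Cl)}
  (hN : IsNCTM (redGraph Cl) (redB Cl) T)
  (hsz : ∀ S ∈ redB Cl, (T S).ncard ≤ 1)

include hsz in
lemma subT (u : RedVert Cl) (hu : inB u.1) :
    ∀ a ∈ T (cN (redGraph Cl) u), ∀ b ∈ T (cN (redGraph Cl) u), a = b :=
  (Set.ncard_le_one (Set.toFinite _)).mp (hsz _ ⟨u, hu, rfl⟩)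

include hN in
lemma pairC (u v : RedVert Cl) (hu : inB u.1) (hv : inB v.1)
    (hne : cN (redGraph Cl) u ≠ cN (redGraph Cl) v) :
    ∃ w, (w ∈ T (cN (redGraph Cl) u) ∨ w ∈ T (cN (redGraph Cl) v)) ∧
      Xor' (w ∈ cN (redGraph Cl) u) (w ∈ cN (redGraph Cl) v) := by
  obtain ⟨w, hw1, hw2⟩ := hN u v ⟨u, hu, rfl⟩ ⟨v, hv, rfl⟩ hne
  exact ⟨w, hw1, hw2⟩

include hN hsz in
lemma arc (i : Option (Fin n))
    (h : ∀ p : Fin 5, p ≠ 0 → ∀ w ∈ T (cN (redGraph Cl) (vVp Cl i p)), w ≠ vVp Cl i p) :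
    False := by
  have hB : ∀ p : Fin 5, p ≠ 0 → inB (vVp Cl i p).1 := fun p hp => hp
  have hA : ∀ p q : Fin 5, p ≠ 0 → q ≠ 0 → p ≠ q →
      (vVp Cl i q ∈ T (cN (redGraph Cl) (vVp Cl i p)) ∨
       vVp Cl i p ∈ T (cN (redGraph Cl) (vVp Cl i q))) := by
    intro p q hp hq hpq
    have hne : cN (redGraph Cl) (vVp Cl i p) ≠ cN (redGraph Cl) (vVp Cl i q) := by
      apply cN_ne_of (w := vVp Cl i p)
      left
      constructor
      · simp [mem_cN_iff]
      · simp [mem_cN_iff, redRel, vVp, hpq]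
    obtain ⟨w, hw1, hw2⟩ := pairC hN (vVp Cl i p) (vVp Cl i q) (hB p hp) (hB q hq) hne
    rcases vp_diff hpq hw2 with rfl | rfl
    · rcases hw1 with hw1 | hw1
      · exact absurd rfl (h p hp _ hw1)
      · exact Or.inr hw1
    · rcases hw1 with hw1 | hw1
      · exact Or.inl hw1
      · exact absurd rfl (h q hq _ hw1)
  have uniq : ∀ p q q' : Fin 5, p ≠ 0 →
      vVp Cl i q ∈ T (cN (redGraph Cl) (vVp Cl i p)) →
      vVp Cl i q' ∈ T (cN (redGraph Cl) (vVp Cl i p)) → q = q' := by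
    intro p q q' hp h1 h2
    have := subT hsz (vVp Cl i p) (hB p hp) _ h1 _ h2
    simpa [vVp] using congrArg Subtype.val this
  have h12 := hA 1 2 (by decide) (by decide) (by decide)
  have h13 := hA 1 3 (by decide) (by decide) (by decide)
  have h14 := hA 1 4 (by decide) (by decide) (by decide)
  have h23 := hA 2 3 (by decide) (by decide) (by decide)
  have h24 := hA 2 4 (by decide) (by decide) (by decide)
  have h34 := hA 3 4 (by decide) (by decide) (by decide)
  rcases h12 with a|a <;> rcases h13 with b|b <;> rcases h14 with c|c
  · exact absurd (uniq 1 2 3 (by decide) a b) (by decide)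
  · exact absurd (uniq 1 2 3 (by decide) a b) (by decide)
  · exact absurd (uniq 1 2 4 (by decide) a c) (by decide)
  · rcases h34 with d|d
    · exact absurd (uniq 3 4 1 (by decide) d b) (by decide)
    · exact absurd (uniq 4 3 1 (by decide) d c) (by decide)
  · exact absurd (uniq 1 3 4 (by decide) b c) (by decide)
  · rcases h24 with d|d
    · exact absurd (uniq 2 4 1 (by decide) d a) (by decide)
    · exact absurd (uniq 4 2 1 (by decide) d c) (by decide)
  · rcases h23 with d|d
    · exact absurd (uniq 2 3 1 (by decide) d a) (by decide)
    · exact absurd (uniq 3 2 1 (by decide) d b) (by decide)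
  · rcases h23 with d|d
    · exact absurd (uniq 2 3 1 (by decide) d a) (by decide)
    · exact absurd (uniq 3 2 1 (by decide) d b) (by decide)
end Rev
section Rev2
variable {n m : ℕ} {Cl : Fin m → Fin 3 → Fin n × Bool}
variable {T : Set (RedVert Cl) → Set (RedVert Cl)}
  (hN : IsNCTM (redGraph Cl) (redB Cl) T)
  (hsz : ∀ S ∈ redB Cl, (T S).ncard ≤ 1)

include hN hsz in
lemma tagv (i0 : Fin n) :
    ∀ w ∈ T (cN (redGraph Cl) (vVr Cl (some i0))),
      (∃ j, w.1 = RVtx.cl j) ∨ (∃ i', w.1 = RVtx.vr i') ∨ (∃ b, w.1 = RVtx.lit i0 b) := by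
  intro w hw
  have key : ∃ p : Fin 5, p ≠ 0 ∧
      Xor' (w ∈ cN (redGraph Cl) (vVr Cl (some i0)))
           (w ∈ cN (redGraph Cl) (vVp Cl (some i0) p)) := by
    by_contra hcon
    push_neg at hcon
    apply arc hN hsz (some i0)
    intro p hp w' hw'
    have hne : cN (redGraph Cl) (vVr Cl (some i0)) ≠ cN (redGraph Cl) (vVp Cl (some i0) p) := by
      apply cN_ne_of (w := vLit Cl i0 true)
      left
      exact ⟨by simp [mem_cN_iff, redRel, vLit, vVr], by simp [mem_cN_iff, redRel, vLit, vVp]⟩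
    obtain ⟨z, hz1, hz2⟩ := pairC hN (vVr Cl (some i0)) (vVp Cl (some i0) p) True.intro hp hne
    rcases hz1 with hz1 | hz1
    · have hzw : z = w := subT hsz (vVr Cl (some i0)) True.intro z hz1 w hw
      rw [hzw] at hz2
      exact (hcon p hp hz2).elim
    · have hzw' : w' = z := subT hsz (vVp Cl (some i0) p) hp w' hw' z hz1
      intro hwp
      rw [hwp] at hzw'
      rw [← hzw'] at hz2
      rcases hz2 with ⟨h1, h2⟩ | ⟨h1, h2⟩
      · exact h2 (by simp [mem_cN_iff])
      · exact h2 (by simp [mem_cN_iff, redRel, vVp, vVr])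
  obtain ⟨p, hp, hxor⟩ := key
  obtain ⟨x, hx⟩ := w
  cases x with
  | cl j => exact Or.inl ⟨j, rfl⟩
  | vr i' => exact Or.inr (Or.inl ⟨i', rfl⟩)
  | lit i' b =>
      refine Or.inr (Or.inr ⟨b, ?_⟩)
      rcases hxor with ⟨h1, h2⟩ | ⟨h1, h2⟩ <;>
        simp_all [mem_cN_iff, redRel, vVr, vVp]
  | vstar i' =>
      exfalso
      rcases hxor with ⟨h1, h2⟩ | ⟨h1, h2⟩ <;>
        simp_all [mem_cN_iff, redRel, vVr, vVp]
  | cji j i' =>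
      exfalso
      rcases hxor with ⟨h1, h2⟩ | ⟨h1, h2⟩ <;>
        simp_all [mem_cN_iff, redRel, vVr, vVp]
  | vp i' q =>
      exfalso
      -- derive i' = some i0
      have hii : i' = some i0 := by
        rcases hxor with ⟨h1, h2⟩ | ⟨h1, h2⟩ <;>
          simp_all [mem_cN_iff, redRel, vVr, vVp]
      subst hii
      -- step 2
      have hne2 : cN (redGraph Cl) (vVr Cl (some i0)) ≠ cN (redGraph Cl) (vVs Cl (some i0)) := by
        apply cN_ne_of (w := vLit Cl i0 true)
        left
        exact ⟨by simp [mem_cN_iff, redRel, vLit, vVr], by simp [mem_cN_iff, redRel, vLit, vVs]⟩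
      obtain ⟨z2, hz21, hz22⟩ := pairC hN (vVr Cl (some i0)) (vVs Cl (some i0)) True.intro True.intro hne2
      rcases hz21 with hz21 | hz21
      · have hzw : z2 = ⟨RVtx.vp (some i0) q, hx⟩ :=
          subT hsz (vVr Cl (some i0)) True.intro z2 hz21 _ hw
        rw [hzw] at hz22
        rcases hz22 with ⟨h1, h2⟩ | ⟨h1, h2⟩
        · exact h2 (by simp [mem_cN_iff, redRel, vVs])
        · exact h2 (by simp [mem_cN_iff, redRel, vVr])
      · have hz2shape : ∀ (i'' : Option (Fin n)) (q'' : Fin 5), z2.1 ≠ RVtx.vp i'' q'' := by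
          intro i'' q'' heq
          rcases hz22 with ⟨h1, h2⟩ | ⟨h1, h2⟩ <;>
            (simp only [mem_cN_iff, heq, redRel, vVr, vVs] at h1 h2; simp_all [redRel])
        apply arc hN hsz (some i0)
        intro p' hp' w'' hw''
        have hne3 : cN (redGraph Cl) (vVs Cl (some i0)) ≠ cN (redGraph Cl) (vVp Cl (some i0) p') := by
          apply cN_ne_of (w := vVp Cl (some i0) 0)
          left
          refine ⟨by simp [mem_cN_iff, redRel, vVp, vVs], ?_⟩
          simp [mem_cN_iff, redRel, vVp]
          exact fun h => hp' h.symm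
        obtain ⟨z3, hz31, hz32⟩ := pairC hN (vVs Cl (some i0)) (vVp Cl (some i0) p') True.intro hp' hne3
        obtain ⟨q3, hq3, hq3e⟩ := star_vp_diff hz32
        rcases hz31 with hz31 | hz31
        · have : z3 = z2 := subT hsz (vVs Cl (some i0)) True.intro z3 hz31 z2 hz21
          exact (hz2shape _ _ (this ▸ hq3e)).elim
        · have hwz : w'' = z3 := subT hsz (vVp Cl (some i0) p') hp' w'' hw'' z3 hz31
          intro he
          rw [he] at hwz
          rw [← hwz] at hq3e
          simp only [vVp] at hq3e
          have := RVtx.vp.inj hq3e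
          exact hq3 this.2.symm

end Rev2
section Rev3
variable {n m : ℕ} {Cl : Fin m → Fin 3 → Fin n × Bool}

open Classical in
noncomputable def tauOf (T : Set (RedVert Cl) → Set (RedVert Cl)) : Fin n → Bool :=
  fun i0 => if vLit Cl i0 true ∈ T (cN (redGraph Cl) (vVr Cl (some i0))) then true else false

variable {T : Set (RedVert Cl) → Set (RedVert Cl)}
  (hN : IsNCTM (redGraph Cl) (redB Cl) T)
  (hsz : ∀ S ∈ redB Cl, (T S).ncard ≤ 1)

include hN hsz in
lemma clause_sat (hdistinct : ∀ j : Fin m, Function.Injective fun a : Fin 3 => (Cl j a).1)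
    (j : Fin m) : ∃ a : Fin 3, tauOf T (Cl j a).1 = (Cl j a).2 := by
  classical
  have hne : ∀ a : Fin 3,
      cN (redGraph Cl) (vCl Cl j) ≠ cN (redGraph Cl) (vVr Cl (some (Cl j a).1)) := by
    intro a
    apply cN_ne_of (w := vVs Cl (some (Cl j a).1))
    right
    exact ⟨by simp [mem_cN_iff, redRel, vVs, vVr], by simp [mem_cN_iff, redRel, vVs, vCl]⟩
  have main : ∀ a : Fin 3,
      (∃ w ∈ T (cN (redGraph Cl) (vCl Cl j)),
        Xor' (w ∈ cN (redGraph Cl) (vCl Cl j))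
             (w ∈ cN (redGraph Cl) (vVr Cl (some (Cl j a).1)))) ∨
      tauOf T (Cl j a).1 = (Cl j a).2 := by
    intro a
    obtain ⟨w, hw1, hw2⟩ :=
      pairC hN (vCl Cl j) (vVr Cl (some (Cl j a).1)) True.intro True.intro (hne a)
    rcases hw1 with h | h
    · exact Or.inl ⟨w, h, hw2⟩
    · right
      rcases tagv hN hsz (Cl j a).1 w h with ⟨j', hsh⟩ | ⟨i', hsh⟩ | ⟨b, hsh⟩
      · exfalso
        rcases hw2 with ⟨h1, h2⟩ | ⟨h1, h2⟩ <;>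
          simp_all [mem_cN_iff, redRel, vCl, vVr]
      · exfalso
        rcases hw2 with ⟨h1, h2⟩ | ⟨h1, h2⟩ <;>
          simp_all [mem_cN_iff, redRel, vCl, vVr]
      · have hnot : ¬ ∃ a' : Fin 3, Cl j a' = ((Cl j a).1, !b) := by
          rcases hw2 with ⟨h1, h2⟩ | ⟨h1, h2⟩
          · exfalso
            exact h2 (by simp [mem_cN_iff, hsh, redRel, vVr])
          · intro hex
            exact h2 (by simp only [mem_cN_iff, mem_cN_var_mk, hsh, redRel, vCl]; tauto)
        have hb : b = (Cl j a).2 := by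
          by_contra hbne
          refine hnot ⟨a, ?_⟩
          have : (Cl j a).2 = !b := by
            cases b <;> cases hc : (Cl j a).2 <;> simp_all
          rw [Prod.ext_iff]
          exact ⟨rfl, this⟩
        rw [← hb]
        unfold tauOf
        cases b with
        | true =>
            have hwe : vLit Cl (Cl j a).1 true = w := (Subtype.ext hsh).symm
            rw [if_pos (hwe ▸ h)]
        | false =>
            have hnc : vLit Cl (Cl j a).1 true ∉
                T (cN (redGraph Cl) (vVr Cl (some (Cl j a).1))) := by
              intro hmem
              have heq := subT hsz (vVr Cl (some (Cl j a).1)) True.intro _ hmem w h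
              have := congrArg Subtype.val heq
              rw [hsh] at this
              simp [vLit] at this
            rw [if_neg hnc]
  rcases main 0 with h0 | h0
  rotate_left
  · exact ⟨0, h0⟩
  rcases main 1 with h1 | h1
  rotate_left
  · exact ⟨1, h1⟩
  rcases main 2 with h2 | h2
  rotate_left
  · exact ⟨2, h2⟩
  exfalso
  obtain ⟨w0, hm0, hx0⟩ := h0
  obtain ⟨w1, hm1, hx1⟩ := h1
  obtain ⟨w2, hm2, hx2⟩ := h2
  have e1 : w1 = w0 := subT hsz (vCl Cl j) True.intro _ hm1 _ hm0
  have e2 : w2 = w0 := subT hsz (vCl Cl j) True.intro _ hm2 _ hm0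
  rw [e1] at hx1
  rw [e2] at hx2
  have hxall : ∀ a : Fin 3,
      Xor' (w0 ∈ cN (redGraph Cl) (vCl Cl j))
           (w0 ∈ cN (redGraph Cl) (vVr Cl (some (Cl j a).1))) := by
    intro a
    match a with
    | 0 => exact hx0
    | 1 => exact hx1
    | 2 => exact hx2
  clear hx0 hx1 hx2 hm0 hm1 hm2 main hne
  have hd01 : (Cl j 0).1 ≠ (Cl j 1).1 := fun h => by simpa using hdistinct j h
  obtain ⟨x, hx⟩ := w0
  cases x with
  | cl j' =>
      rcases hxall 0 with ⟨h1, h2⟩ | ⟨h1, h2⟩ <;>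
        simp_all [mem_cN_iff, redRel, vCl, vVr]
  | vr i' =>
      rcases hxall 0 with ⟨h1, h2⟩ | ⟨h1, h2⟩ <;>
        simp_all [mem_cN_iff, redRel, vCl, vVr]
  | vstar i' =>
      have key : ∀ a : Fin 3, i' = some (Cl j a).1 := by
        intro a
        rcases hxall a with ⟨h1, h2⟩ | ⟨h1, h2⟩ <;>
          simp_all [mem_cN_iff, redRel, vCl, vVr]
      have := (key 0).symm.trans (key 1)
      simp only [Option.some.injEq] at this
      exact hd01 this
  | vp i' q =>
      have key : ∀ a : Fin 3, i' = some (Cl j a).1 := by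
        intro a
        rcases hxall a with ⟨h1, h2⟩ | ⟨h1, h2⟩ <;>
          simp_all [mem_cN_iff, redRel, vCl, vVr]
      have := (key 0).symm.trans (key 1)
      simp only [Option.some.injEq] at this
      exact hd01 this
  | lit i' b =>
      by_cases hE : ∃ a' : Fin 3, Cl j a' = (i', !b)
      · obtain ⟨a', ha'⟩ := hE
        have hi' : (Cl j a').1 = i' := by rw [ha']
        rcases hxall a' with ⟨h1, h2⟩ | ⟨h1, h2⟩
        · exact h2 (by simp [mem_cN_iff, redRel, vVr, hi'])
        · exact h2 (by simp only [mem_cN_iff, mem_cN_mk, redRel, vCl]; exact Or.inr (Or.inr ⟨a', ha'⟩))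
      · have key : ∀ a : Fin 3, i' = (Cl j a).1 := by
          intro a
          rcases hxall a with ⟨h1, h2⟩ | ⟨h1, h2⟩
          · exfalso
            refine hE ?_
            simpa [mem_cN_iff, redRel, vCl] using h1
          · exact (by simpa [mem_cN_iff, redRel, vVr] using h1 : (Cl j a).1 = i').symm
        exact hd01 ((key 0).symm.trans (key 1))
  | cji j' i'' =>
      by_cases hj : j' = j
      · subst hj
        obtain ⟨a', ha'⟩ := hx
        rcases hxall a' with ⟨h1, h2⟩ | ⟨h1, h2⟩
        · exact h2 (by simp [mem_cN_iff, redRel, vVr, ha'])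
        · exact h2 (by simp [mem_cN_iff, redRel, vCl])
      · have key : ∀ a : Fin 3, i'' = (Cl j a).1 := by
          intro a
          rcases hxall a with ⟨h1, h2⟩ | ⟨h1, h2⟩
          · exfalso
            have : j = j' := by simpa [mem_cN_iff, redRel, vCl] using h1
            exact hj this.symm
          · exact (by simpa [mem_cN_iff, redRel, vVr] using h1 : (Cl j a).1 = i'').symm
        exact hd01 ((key 0).symm.trans (key 1))

end Rev3
section Fwd
variable {n m : ℕ} {Cl : Fin m → Fin 3 → Fin n × Bool}

variable (Cl) in
open Classical in
noncomputable def ftag (τ : Fin n → Bool)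
    (hsat : ∀ j : Fin m, ∃ a : Fin 3, τ (Cl j a).1 = (Cl j a).2) :
    RedVert Cl → Set (RedVert Cl) :=
  fun w =>
    match w with
    | ⟨RVtx.cl j, _⟩ =>
        {⟨RVtx.cji j (Cl j (hsat j).choose).1, ⟨(hsat j).choose, rfl⟩⟩}
    | ⟨RVtx.vr none, _⟩ =>
        if h : Nonempty (Fin n) then {vVr Cl (some h.some)} else {vVp Cl none 0}
    | ⟨RVtx.vr (some i0), _⟩ => {vLit Cl i0 (τ i0)}
    | ⟨RVtx.vstar i, _⟩ => {vVp Cl i 0}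
    | ⟨RVtx.vp i p, _⟩ => {vVp Cl i p}
    | ⟨RVtx.lit _ _, _⟩ => ∅
    | ⟨RVtx.cji _ _, _⟩ => ∅

lemma ftag_card (τ : Fin n → Bool)
    (hsat : ∀ j : Fin m, ∃ a : Fin 3, τ (Cl j a).1 = (Cl j a).2) (w : RedVert Cl) :
    (ftag Cl τ hsat w).ncard ≤ 1 := by
  obtain ⟨x, hx⟩ := w
  cases x with
  | vr i => cases i <;> simp only [ftag] <;> first | (split <;> simp) | simp
  | cl j => exact (Set.ncard_singleton _).le
  | lit i b => simp [ftag]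
  | vp i p => simp [ftag]
  | vstar i => simp [ftag]
  | cji j i => simp [ftag]
end Fwd
section Fwd2
variable {n m : ℕ} {Cl : Fin m → Fin 3 → Fin n × Bool}

lemma exswap {α} {A B : Set α} {P Q : α → Prop}
    (h : ∃ w, (w ∈ A ∨ w ∈ B) ∧ Xor' (P w) (Q w)) :
    ∃ w, (w ∈ B ∨ w ∈ A) ∧ Xor' (Q w) (P w) := by
  obtain ⟨w, h1, h2⟩ := h
  exact ⟨w, h1.symm, h2.symm⟩

variable {τ : Fin n → Bool}
  {hsat : ∀ j : Fin m, ∃ a : Fin 3, τ (Cl j a).1 = (Cl j a).2}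

variable (Cl τ hsat) in
noncomputable def cjiV (j : Fin m) : RedVert Cl :=
  ⟨RVtx.cji j (Cl j (hsat j).choose).1, ⟨(hsat j).choose, rfl⟩⟩

lemma cjiV_mem_cl (j : Fin m) : cjiV Cl τ hsat j ∈ cN (redGraph Cl) (vCl Cl j) := by
  simp [mem_cN_iff, redRel, cjiV, vCl]

lemma cjiV_tag (j : Fin m) : cjiV Cl τ hsat j ∈ ftag Cl τ hsat (vCl Cl j) := rfl

lemma cjiV_not_mem_cl {j j' : Fin m} (h : j' ≠ j) :
    cjiV Cl τ hsat j ∉ cN (redGraph Cl) (vCl Cl j') := by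
  simp only [mem_cN_iff, mem_cN_cji_mk, redRel, cjiV, vCl]
  simp
  exact h

lemma cjiV_not_mem_vr {j : Fin m} {i : Option (Fin n)}
    (h : i ≠ some (Cl j (hsat j).choose).1) :
    cjiV Cl τ hsat j ∉ cN (redGraph Cl) (vVr Cl i) := by
  simp [mem_cN_iff, redRel, cjiV, vVr, h]

lemma lit_not_mem_cl (hdistinct : ∀ j : Fin m, Function.Injective fun a : Fin 3 => (Cl j a).1)
    (j : Fin m) :
    vLit Cl (Cl j (hsat j).choose).1 (τ (Cl j (hsat j).choose).1) ∉
      cN (redGraph Cl) (vCl Cl j) := by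
  simp only [mem_cN_iff, mem_cN_mk, redRel, vLit, vCl]
  rintro (h | h | ⟨a, ha⟩)
  · exact absurd h (by simp)
  · exact h
  · have h1 : (Cl j a).1 = (Cl j (hsat j).choose).1 := by rw [ha]
    have h2 := hdistinct j h1
    rw [h2] at ha
    have h3 := (hsat j).choose_spec
    have h4 : (Cl j (hsat j).choose).2 = !(τ (Cl j (hsat j).choose).1) := by rw [ha]
    rw [h4] at h3
    simp at h3

lemma key_clcl {j j' : Fin m} (hjj : j ≠ j') :
    ∃ w, (w ∈ ftag Cl τ hsat (vCl Cl j) ∨ w ∈ ftag Cl τ hsat (vCl Cl j')) ∧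
      Xor' (w ∈ cN (redGraph Cl) (vCl Cl j)) (w ∈ cN (redGraph Cl) (vCl Cl j')) :=
  ⟨cjiV Cl τ hsat j, Or.inl (cjiV_tag j),
    Or.inl ⟨cjiV_mem_cl j, cjiV_not_mem_cl hjj.symm⟩⟩

lemma key_clvr (hdistinct : ∀ j : Fin m, Function.Injective fun a : Fin 3 => (Cl j a).1)
    (j : Fin m) (i : Option (Fin n)) :
    ∃ w, (w ∈ ftag Cl τ hsat (vCl Cl j) ∨ w ∈ ftag Cl τ hsat (vVr Cl i)) ∧
      Xor' (w ∈ cN (redGraph Cl) (vCl Cl j)) (w ∈ cN (redGraph Cl) (vVr Cl i)) := by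
  by_cases hii : i = some (Cl j (hsat j).choose).1
  · subst hii
    refine ⟨vLit Cl (Cl j (hsat j).choose).1 (τ (Cl j (hsat j).choose).1), Or.inr rfl,
      Or.inr ?_⟩
    exact ⟨by simp [mem_cN_iff, redRel, vLit, vVr], lit_not_mem_cl hdistinct j⟩
  · exact ⟨cjiV Cl τ hsat j, Or.inl (cjiV_tag j),
      Or.inl ⟨cjiV_mem_cl j, cjiV_not_mem_vr hii⟩⟩

lemma key_clvs (j : Fin m) (i : Option (Fin n)) :
    ∃ w, (w ∈ ftag Cl τ hsat (vCl Cl j) ∨ w ∈ ftag Cl τ hsat (vVs Cl i)) ∧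
      Xor' (w ∈ cN (redGraph Cl) (vCl Cl j)) (w ∈ cN (redGraph Cl) (vVs Cl i)) := by
  refine ⟨vVp Cl i 0, Or.inr rfl, Or.inr ?_⟩
  exact ⟨by simp [mem_cN_iff, redRel, vVp, vVs], by simp [mem_cN_iff, redRel, vVp, vCl]⟩

lemma key_clvp (j : Fin m) (i : Option (Fin n)) (p : Fin 5) :
    ∃ w, (w ∈ ftag Cl τ hsat (vCl Cl j) ∨ w ∈ ftag Cl τ hsat (vVp Cl i p)) ∧
      Xor' (w ∈ cN (redGraph Cl) (vCl Cl j)) (w ∈ cN (redGraph Cl) (vVp Cl i p)) := by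
  refine ⟨vVp Cl i p, Or.inr rfl, Or.inr ?_⟩
  exact ⟨by simp [mem_cN_iff], by simp [mem_cN_iff, redRel, vVp, vCl]⟩

lemma key_vrvr {i i' : Option (Fin n)} (hii : i ≠ i') :
    ∃ w, (w ∈ ftag Cl τ hsat (vVr Cl i) ∨ w ∈ ftag Cl τ hsat (vVr Cl i')) ∧
      Xor' (w ∈ cN (redGraph Cl) (vVr Cl i)) (w ∈ cN (redGraph Cl) (vVr Cl i')) := by
  cases i with
  | some i0 =>
      refine ⟨vLit Cl i0 (τ i0), Or.inl rfl, Or.inl ?_⟩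
      refine ⟨by simp [mem_cN_iff, redRel, vLit, vVr], ?_⟩
      simp only [mem_cN_iff, mem_cN_mk, redRel, vLit, vVr]
      simp
      exact fun h => hii h.symm
  | none =>
      cases i' with
      | some i0' =>
          refine ⟨vLit Cl i0' (τ i0'), Or.inr rfl, Or.inr ?_⟩
          exact ⟨by simp [mem_cN_iff, redRel, vLit, vVr],
            by simp [mem_cN_iff, redRel, vLit, vVr]⟩
      | none => exact absurd rfl hii

lemma cN_vr_vs_none (hn : ¬ Nonempty (Fin n)) :
    cN (redGraph Cl) (vVr Cl (none : Option (Fin n))) = cN (redGraph Cl) (vVs Cl none) := by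
  ext z
  obtain ⟨x, hx⟩ := z
  cases x with
  | cl j => exact absurd ⟨(Cl j 0).1⟩ hn
  | lit i b => exact absurd ⟨i⟩ hn
  | cji j i => exact absurd ⟨i⟩ hn
  | vr i =>
      cases i with
      | some i0 => exact absurd ⟨i0⟩ hn
      | none => simp [mem_cN_iff, redRel, vVr, vVs]
  | vstar i => simp [mem_cN_iff, redRel, vVr, vVs, eq_comm]
  | vp i p => simp [mem_cN_iff, redRel, vVr, vVs]

lemma key_vrvs (i i' : Option (Fin n))
    (hne : cN (redGraph Cl) (vVr Cl i) ≠ cN (redGraph Cl) (vVs Cl i')) :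
    ∃ w, (w ∈ ftag Cl τ hsat (vVr Cl i) ∨ w ∈ ftag Cl τ hsat (vVs Cl i')) ∧
      Xor' (w ∈ cN (redGraph Cl) (vVr Cl i)) (w ∈ cN (redGraph Cl) (vVs Cl i')) := by
  by_cases hii : i = i'
  · subst hii
    cases i with
    | some i0 =>
        refine ⟨vLit Cl i0 (τ i0), Or.inl rfl, Or.inl ?_⟩
        exact ⟨by simp [mem_cN_iff, redRel, vLit, vVr],
          by simp [mem_cN_iff, redRel, vLit, vVs]⟩
    | none =>
        by_cases hn : Nonempty (Fin n)
        · refine ⟨vVr Cl (some hn.some), ?_, Or.inl ?_⟩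
          · left
            show _ ∈ ftag Cl τ hsat ⟨RVtx.vr none, True.intro⟩
            simp only [ftag]
            rw [dif_pos hn]
            rfl
          · exact ⟨by simp [mem_cN_iff, redRel, vVr],
              by simp [mem_cN_iff, redRel, vVr, vVs]⟩
        · exact absurd (cN_vr_vs_none hn) hne
  · refine ⟨vVp Cl i' 0, Or.inr rfl, Or.inr ?_⟩
    exact ⟨by simp [mem_cN_iff, redRel, vVp, vVs],
      by simp [mem_cN_iff, redRel, vVp, vVr, hii]⟩

lemma key_vrvp (i i' : Option (Fin n)) (p : Fin 5) (hp : p ≠ 0) :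
    ∃ w, (w ∈ ftag Cl τ hsat (vVr Cl i) ∨ w ∈ ftag Cl τ hsat (vVp Cl i' p)) ∧
      Xor' (w ∈ cN (redGraph Cl) (vVr Cl i)) (w ∈ cN (redGraph Cl) (vVp Cl i' p)) := by
  by_cases hii : i = i'
  · subst hii
    cases i with
    | some i0 =>
        refine ⟨vLit Cl i0 (τ i0), Or.inl rfl, Or.inl ?_⟩
        exact ⟨by simp [mem_cN_iff, redRel, vLit, vVr],
          by simp [mem_cN_iff, redRel, vLit, vVp]⟩
    | none =>
        by_cases hn : Nonempty (Fin n)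
        · refine ⟨vVr Cl (some hn.some), ?_, Or.inl ?_⟩
          · left
            show _ ∈ ftag Cl τ hsat ⟨RVtx.vr none, True.intro⟩
            simp only [ftag]
            rw [dif_pos hn]
            rfl
          · exact ⟨by simp [mem_cN_iff, redRel, vVr],
              by simp [mem_cN_iff, redRel, vVr, vVp]⟩
        · refine ⟨vVp Cl none 0, ?_, Or.inl ?_⟩
          · left
            show _ ∈ ftag Cl τ hsat ⟨RVtx.vr none, True.intro⟩
            simp only [ftag]
            rw [dif_neg hn]
            rfl
          · refine ⟨by simp [mem_cN_iff, redRel, vVp, vVr], ?_⟩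
            simp only [mem_cN_iff, mem_cN_mk, redRel, vVp]
            simp
            exact fun h => hp h.symm
  · refine ⟨vVp Cl i' p, Or.inr rfl, Or.inr ?_⟩
    exact ⟨by simp [mem_cN_iff], by simp [mem_cN_iff, redRel, vVp, vVr, hii]⟩

lemma key_vsvs {i i' : Option (Fin n)} (hii : i ≠ i') :
    ∃ w, (w ∈ ftag Cl τ hsat (vVs Cl i) ∨ w ∈ ftag Cl τ hsat (vVs Cl i')) ∧
      Xor' (w ∈ cN (redGraph Cl) (vVs Cl i)) (w ∈ cN (redGraph Cl) (vVs Cl i')) := by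
  refine ⟨vVp Cl i 0, Or.inl rfl, Or.inl ?_⟩
  refine ⟨by simp [mem_cN_iff, redRel, vVp, vVs], ?_⟩
  simp only [mem_cN_iff, mem_cN_mk, redRel, vVp, vVs]
  simp
  exact fun h => hii h.symm

lemma key_vsvp (i i' : Option (Fin n)) (p : Fin 5) (hp : p ≠ 0) :
    ∃ w, (w ∈ ftag Cl τ hsat (vVs Cl i) ∨ w ∈ ftag Cl τ hsat (vVp Cl i' p)) ∧
      Xor' (w ∈ cN (redGraph Cl) (vVs Cl i)) (w ∈ cN (redGraph Cl) (vVp Cl i' p)) := by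
  by_cases hii : i = i'
  · subst hii
    refine ⟨vVp Cl i 0, Or.inl rfl, Or.inl ?_⟩
    refine ⟨by simp [mem_cN_iff, redRel, vVp, vVs], ?_⟩
    simp only [mem_cN_iff, mem_cN_mk, redRel, vVp]
    simp
    exact fun h => hp h.symm
  · refine ⟨vVp Cl i' p, Or.inr rfl, Or.inr ?_⟩
    exact ⟨by simp [mem_cN_iff], by simp [mem_cN_iff, redRel, vVp, vVs, hii]⟩

lemma key_vpvp {i i' : Option (Fin n)} {p q : Fin 5} (hne : ¬(i = i' ∧ p = q)) :
    ∃ w, (w ∈ ftag Cl τ hsat (vVp Cl i p) ∨ w ∈ ftag Cl τ hsat (vVp Cl i' q)) ∧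
      Xor' (w ∈ cN (redGraph Cl) (vVp Cl i p)) (w ∈ cN (redGraph Cl) (vVp Cl i' q)) := by
  refine ⟨vVp Cl i p, Or.inl rfl, Or.inl ?_⟩
  refine ⟨by simp [mem_cN_iff], ?_⟩
  intro hcon
  apply hne
  simpa [mem_cN_iff, redRel, vVp] using hcon

end Fwd2
section Fwd3
variable {n m : ℕ} {Cl : Fin m → Fin 3 → Fin n × Bool}
variable {τ : Fin n → Bool} {hsat : ∀ j : Fin m, ∃ a : Fin 3, τ (Cl j a).1 = (Cl j a).2}

lemma fwd_key (hdistinct : ∀ j : Fin m, Function.Injective fun a : Fin 3 => (Cl j a).1) :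
    ∀ u v : RedVert Cl, inB u.1 → inB v.1 →
      cN (redGraph Cl) u ≠ cN (redGraph Cl) v →
      ∃ w, (w ∈ ftag Cl τ hsat u ∨ w ∈ ftag Cl τ hsat v) ∧
        Xor' (w ∈ cN (redGraph Cl) u) (w ∈ cN (redGraph Cl) v) := by
  intro u v hu hv hne
  obtain ⟨x, hxv⟩ := u
  obtain ⟨y, hyv⟩ := v
  cases x with
  | lit i b => exact hu.elim
  | cji j i => exact hu.elim
  | cl j =>
      cases y with
      | lit i b => exact hv.elim
      | cji j' i => exact hv.elim
      | cl j' =>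
          rcases eq_or_ne j j' with rfl | hjj
          · exact absurd (congrArg (cN (redGraph Cl)) (Subtype.ext rfl)) hne
          · exact key_clcl hjj
      | vr i => exact key_clvr hdistinct j i
      | vstar i => exact key_clvs j i
      | vp i p => exact key_clvp j i p
  | vr i =>
      cases y with
      | lit i' b => exact hv.elim
      | cji j' i' => exact hv.elim
      | cl j => exact exswap (key_clvr hdistinct j i)
      | vr i' =>
          rcases eq_or_ne i i' with rfl | hii
          · exact absurd (congrArg (cN (redGraph Cl)) (Subtype.ext rfl)) hne
          · exact key_vrvr hii
      | vstar i' => exact key_vrvs i i' hne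
      | vp i' p => exact key_vrvp i i' p hv
  | vstar i =>
      cases y with
      | lit i' b => exact hv.elim
      | cji j' i' => exact hv.elim
      | cl j => exact exswap (key_clvs j i)
      | vr i' => exact exswap (key_vrvs i' i hne.symm)
      | vstar i' =>
          rcases eq_or_ne i i' with rfl | hii
          · exact absurd (congrArg (cN (redGraph Cl)) (Subtype.ext rfl)) hne
          · exact key_vsvs hii
      | vp i' p => exact key_vsvp i i' p hv
  | vp i p =>
      cases y with
      | lit i' b => exact hv.elim
      | cji j' i' => exact hv.elim
      | cl j => exact exswap (key_clvp j i p)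
      | vr i' => exact exswap (key_vrvp i' i p hu)
      | vstar i' => exact exswap (key_vsvp i' i p hu)
      | vp i' q =>
          refine key_vpvp ?_
          rintro ⟨rfl, rfl⟩
          exact hne (congrArg (cN (redGraph Cl)) (Subtype.ext rfl))

variable (Cl τ hsat) in
open Classical in
noncomputable def Tfun : Set (RedVert Cl) → Set (RedVert Cl) := fun S =>
  if h : ∃ w : RedVert Cl, inB w.1 ∧ S = cN (redGraph Cl) w then ftag Cl τ hsat h.choose
  else ∅

end Fwd3
end NRed

/-- A 3-CNF formula `Cl` (clause `j` consists of the literals `Cl j a = (i, b)`, meaning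
`x_i` if `b = true` and `¬x_i` if `b = false`, with the three variables of each clause
distinct) is satisfiable iff `NCTD(B) ≤ 1` for the family `B` of closed neighborhoods of
the reduction graph. -/
theorem stmt1 (n m : ℕ) (Cl : Fin m → Fin 3 → Fin n × Bool)
    (hdistinct : ∀ j : Fin m, Function.Injective fun a : Fin 3 => (Cl j a).1) :
    (∃ τ : Fin n → Bool, ∀ j : Fin m, ∃ a : Fin 3, τ (Cl j a).1 = (Cl j a).2) ↔
    (∃ T : Set (RedVert Cl) → Set (RedVert Cl),
       IsNCTM (redGraph Cl) (redB Cl) T ∧ ∀ S ∈ redB Cl, (T S).ncard ≤ 1) := by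
  open NRed in
  constructor
  · rintro ⟨τ, hsat⟩
    refine ⟨Tfun Cl τ hsat, ?_, ?_⟩
    · intro u v hu hv hne
      have hu' : ∃ w : RedVert Cl, inB w.1 ∧
          cN (redGraph Cl) u = cN (redGraph Cl) w := hu
      have hv' : ∃ w : RedVert Cl, inB w.1 ∧
          cN (redGraph Cl) v = cN (redGraph Cl) w := hv
      obtain ⟨hbu, hequ⟩ := hu'.choose_spec
      obtain ⟨hbv, heqv⟩ := hv'.choose_spec
      have hne' : cN (redGraph Cl) hu'.choose ≠ cN (redGraph Cl) hv'.choose := by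
        rw [← hequ, ← heqv]; exact hne
      obtain ⟨w, hw1, hw2⟩ := fwd_key hdistinct hu'.choose hv'.choose hbu hbv hne'
      have e1 : Tfun Cl τ hsat (cN (redGraph Cl) u) = ftag Cl τ hsat hu'.choose := by
        simp only [Tfun]
        rw [dif_pos hu']
      have e2 : Tfun Cl τ hsat (cN (redGraph Cl) v) = ftag Cl τ hsat hv'.choose := by
        simp only [Tfun]
        rw [dif_pos hv']
      refine ⟨w, ?_, ?_⟩
      · simp only [Set.mem_union, e1, e2]
        exact hw1
      · unfold Distinguishes
        rw [hequ, heqv]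
        exact hw2
    · intro S hS
      have hS' : ∃ w : RedVert Cl, inB w.1 ∧ S = cN (redGraph Cl) w := hS
      simp only [Tfun]
      rw [dif_pos hS']
      exact ftag_card τ hsat _
  · rintro ⟨T, hN, hsz⟩
    exact ⟨tauOf T, fun j => clause_sat hN hsz hdistinct j⟩
end

section
/- Let G be a finite simple graph, B a set of closed neighborhoods of G, k a positive integer, X ⊆ V(G), and A = {A₁,…,A_ℓ} a set of distinct connected components of G − X with max_{i∈[ℓ]} |V(Aᵢ)| = t. If ℓ > (|X|+t)·2^{(|X|+t)²}·2^{2t+|X|+1}, then there exists a component A_P ∈ A such that, letting G′ = G − V(A_P) and B′ = {N_{G′}[v] : v ∈ V(G′) and N_G[v] ∈ B}, there is a positive non-clashing teaching map of size at most k for B in G if and only if there is a positive non-clashing teaching map of size at most k for B′ in G′. -/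
set_option linter.unusedSectionVars false

def HasPosNCTM {V : Type*} (G : SimpleGraph V) (B : Set (Set V)) (k : ℕ) : Prop :=
  ∃ T : Set V → Set V,
    (∀ S ∈ B, T S ⊆ S) ∧ IsNCTM G B T ∧ ∀ S ∈ B, (T S).ncard ≤ k

def restrictB {V : Type*} (G : SimpleGraph V) (B : Set (Set V)) (S : Set V) :
    Set (Set ↥(Sᶜ)) :=
  {b | ∃ w : ↥(Sᶜ), cN G w.1 ∈ B ∧ b = cN (G.induce Sᶜ) w}

namespace Stmt5Aux

variable {V : Type*} [Fintype V] {G : SimpleGraph V}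

lemma mem_cN {v w : V} : w ∈ cN G v ↔ w = v ∨ G.Adj v w := by
  simp [cN]

lemma self_mem_cN (v : V) : v ∈ cN G v := mem_cN.2 (Or.inl rfl)

lemma cN_induce (S : Set V) (w : ↥S) :
    cN (G.induce S) w = Subtype.val ⁻¹' (cN G ↑w) := by
  ext u
  simp only [cN, Set.mem_insert_iff, Set.mem_setOf_eq, Set.mem_preimage,
    SimpleGraph.comap_adj, Subtype.ext_iff]
  rfl

lemma ncard_preimage_val_le (S A : Set V) :
    ((Subtype.val ⁻¹' A : Set ↥S)).ncard ≤ A.ncard := by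
  have h1 : (Subtype.val '' (Subtype.val ⁻¹' A : Set ↥S)) ⊆ A :=
    Set.image_preimage_subset _ _
  calc ((Subtype.val ⁻¹' A : Set ↥S)).ncard
      = (Subtype.val '' (Subtype.val ⁻¹' A : Set ↥S)).ncard :=
        (Set.ncard_image_of_injective _ Subtype.val_injective).symm
    _ ≤ A.ncard := Set.ncard_le_ncard h1 (Set.toFinite A)

lemma invol_preimage_eq_image {σ : V → V} (h : Function.Involutive σ) (A : Set V) :
    σ ⁻¹' A = σ '' A := by
  ext w
  constructor
  · intro hw; exact ⟨σ w, hw, h w⟩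
  · rintro ⟨a, ha, rfl⟩; simpa [h a] using ha

lemma invol_preimage_preimage {σ : V → V} (h : Function.Involutive σ) (A : Set V) :
    σ ⁻¹' (σ ⁻¹' A) = A := by
  rw [Set.preimage_preimage]
  simp only [h _]
  rfl

lemma ncard_invol_preimage {σ : V → V} (h : Function.Involutive σ) (A : Set V) :
    (σ ⁻¹' A).ncard = A.ncard := by
  rw [invol_preimage_eq_image h, Set.ncard_image_of_injective _ h.injective]

/-- The "left" direction: a positive NCTM for the reduced instance gives one
for the original instance, provided the deleted component `C` has at least
`|C|+1` twin components `D 0, …, D (m-1)` remaining. -/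
lemma left (B : Set (Set V)) (hB : B ⊆ {S | ∃ v : V, S = cN G v}) (k : ℕ)
    (X C : Set V) (m : ℕ) (D : Fin m → Set V) (σ : Fin m → V → V)
    (hCX : C ⊆ Xᶜ)
    (hCcl : ∀ v ∈ C, ∀ w, G.Adj v w → w ∈ X ∪ C)
    (hDcl : ∀ i, ∀ v ∈ D i, ∀ w, G.Adj v w → w ∈ X ∪ D i)
    (hDC : ∀ i, Disjoint (D i) C)
    (hDX : ∀ i, Disjoint (D i) X)
    (hDD : ∀ i j : Fin m, i ≠ j → Disjoint (D i) (D j))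
    (hσadj : ∀ i a b, G.Adj (σ i a) (σ i b) ↔ G.Adj a b)
    (hσinv : ∀ i, Function.Involutive (σ i))
    (hσC : ∀ i, ∀ v ∈ C, σ i v ∈ D i)
    (hσD : ∀ i, ∀ v ∈ D i, σ i v ∈ C)
    (hσfix : ∀ i v, v ∉ C → v ∉ D i → σ i v = v)
    (hσB : ∀ i v, cN G v ∈ B ↔ cN G (σ i v) ∈ B)
    (hm : C.ncard < m) (hm2 : 2 ≤ m) :
    HasPosNCTM (G.induce Cᶜ) (restrictB G B C) k → HasPosNCTM G B k := by
  classical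
  rintro ⟨T', hpos', hnc', hsize'⟩
  have hXC : ∀ x ∈ X, x ∉ C := fun x hx hc => (hCX hc) hx
  have hσX : ∀ i x, x ∈ X → σ i x = x := fun i x hx =>
    hσfix i x (fun hc => (hCX hc) hx) (fun hd => Set.disjoint_left.mp (hDX i) hd hx)
  have hσcN : ∀ (i : Fin m) v w, w ∈ cN G (σ i v) ↔ σ i w ∈ cN G v := by
    intro i v w
    have h2 : G.Adj (σ i v) w ↔ G.Adj v (σ i w) := by
      have h3 := hσadj i v (σ i w)
      rwa [hσinv i w] at h3
    simp only [mem_cN]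
    constructor
    · rintro (h | h)
      · left; rw [h, hσinv i v]
      · right; exact h2.mp h
    · rintro (h | h)
      · left; rw [← h, hσinv i w]
      · right; exact h2.mpr h
  have hσpreB : ∀ (i : Fin m) (v : V), (σ i) ⁻¹' (cN G v) = cN G (σ i v) := by
    intro i v
    ext w
    rw [Set.mem_preimage, hσcN i v w]
  have hσBset : ∀ (i : Fin m) (S : Set V), S ∈ B → (σ i) ⁻¹' S ∈ B := by
    intro i S hS
    obtain ⟨v, rfl⟩ := hB hS
    rw [hσpreB]
    exact (hσB i v).mp hS
  have hcNC : ∀ v ∈ C, cN G v ⊆ X ∪ C := by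
    intro v hv w hw
    rcases mem_cN.mp hw with h | h
    · exact Or.inr (h ▸ hv)
    · exact hCcl v hv w h
  have hcND : ∀ i, ∀ v ∈ D i, cN G v ⊆ X ∪ D i := by
    intro i v hv w hw
    rcases mem_cN.mp hw with h | h
    · exact Or.inr (h ▸ hv)
    · exact hDcl i v hv w h
  -- the crucial structural "no needy pair" lemma
  have noNeedy : ∀ S R : Set V,
      (∃ z, z ∉ C ∧ cN G z = S) → (∃ z, z ∉ C ∧ cN G z = R) →
      (∀ y, y ∉ C → (y ∈ S ↔ y ∈ R)) → S = R := by
    have onesided : ∀ S R : Set V,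
        (∃ z, z ∉ C ∧ cN G z = S) → (∃ z, z ∉ C ∧ cN G z = R) →
        (∀ y, y ∉ C → (y ∈ S ↔ y ∈ R)) → ∀ y ∈ C, y ∈ S → y ∈ R := by
      rintro S R ⟨z₁, hz₁, rfl⟩ ⟨z₂, hz₂, rfl⟩ hagree y hyC hyS
      have hadj1 : G.Adj z₁ y := by
        rcases mem_cN.mp hyS with h | h
        · exact absurd (h ▸ hyC) hz₁
        · exact h
      have hz₁X : z₁ ∈ X := by
        rcases hCcl y hyC z₁ hadj1.symm with h | h
        · exact h
        · exact absurd h hz₁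
      have q : Fin m := ⟨0, by omega⟩
      have q' : Fin m := ⟨1, by omega⟩
      have hqq' : (⟨0, by omega⟩ : Fin m) ≠ ⟨1, by omega⟩ := by
        intro h; exact absurd (congrArg Fin.val h) (by simp)
      have h1 : ∀ i : Fin m, σ i y ∈ cN G z₁ := by
        intro i
        have h3 := hσadj i z₁ y
        rw [hσX i z₁ hz₁X] at h3
        exact mem_cN.2 (Or.inr (h3.mpr hadj1))
      have h2 : ∀ i : Fin m, σ i y ∈ cN G z₂ := by
        intro i
        have hni : σ i y ∉ C := Set.disjoint_left.mp (hDC i) (hσC i y hyC)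
        exact (hagree (σ i y) hni).mp (h1 i)
      have h3 : ∀ i : Fin m, z₂ ∈ X ∪ D i := by
        intro i
        rcases mem_cN.mp (h2 i) with h | h
        · exact Or.inr (h ▸ hσC i y hyC)
        · exact hDcl i (σ i y) (hσC i y hyC) z₂ h.symm
      have hz₂X : z₂ ∈ X := by
        rcases h3 ⟨0, by omega⟩ with h | h
        · exact h
        rcases h3 ⟨1, by omega⟩ with h' | h'
        · exact h'
        · exact absurd h' (Set.disjoint_left.mp (hDD _ _ hqq') h)
      have hadj2 : G.Adj z₂ (σ ⟨0, by omega⟩ y) := by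
        rcases mem_cN.mp (h2 ⟨0, by omega⟩) with h | h
        · exfalso
          exact Set.disjoint_left.mp (hDX ⟨0, by omega⟩)
            (hσC ⟨0, by omega⟩ y hyC) (h ▸ hz₂X)
        · exact h
      have h4 := hσadj ⟨0, by omega⟩ z₂ (σ ⟨0, by omega⟩ y)
      rw [hσX ⟨0, by omega⟩ z₂ hz₂X, hσinv ⟨0, by omega⟩ y] at h4
      exact mem_cN.2 (Or.inr (h4.mpr hadj2))
    intro S R h1 h2 hagree
    ext y
    by_cases hyC : y ∈ C
    · exact ⟨onesided S R h1 h2 hagree y hyC,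
        onesided R S h2 h1 (fun y hy => (hagree y hy).symm) y hyC⟩
    · exact hagree y hyC
  -- facts about the reduced graph
  have hcN' : ∀ (w : ↥(Cᶜ)), cN (G.induce Cᶜ) w = Subtype.val ⁻¹' (cN G ↑w) :=
    fun w => cN_induce Cᶜ w
  have hB'mem : ∀ (v : V) (hv : v ∉ C), cN G v ∈ B →
      (Subtype.val ⁻¹' (cN G v) : Set ↥(Cᶜ)) ∈ restrictB G B C := by
    intro v hv hvB
    exact ⟨⟨v, hv⟩, hvB, (hcN' ⟨v, hv⟩).symm⟩
  have hσnC : ∀ (i : Fin m) v, v ∈ C → σ i v ∉ C :=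
    fun i v hv => Set.disjoint_left.mp (hDC i) (hσC i v hv)
  have Qmem : ∀ (i : Fin m) (v : V), v ∈ C → cN G v ∈ B →
      (Subtype.val ⁻¹' (cN G (σ i v)) : Set ↥(Cᶜ)) ∈ restrictB G B C :=
    fun i v hv hvB => hB'mem (σ i v) (hσnC i v hv) ((hσB i v).mp hvB)
  -- choose a good twin index j
  have exists_good : ∃ j : Fin m, ∀ v ∈ C, cN G v ∈ B →
      ∃ y ∈ T' (Subtype.val ⁻¹' (cN G (σ j v)) : Set ↥(Cᶜ)), ↑y ∈ D j := by
    by_contra hcon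
    push_neg at hcon
    choose f hfC hfB hbad using hcon
    have hinj : Function.Injective f := by
      intro j i hji
      by_contra hne
      set v := f j with hv
      have hvC : v ∈ C := hfC j
      have hvB : cN G v ∈ B := hfB j
      have hfi : f i = v := hji.symm
      have hu1 : σ j v ∉ C := hσnC j v hvC
      have hu2 : σ i v ∉ C := hσnC i v hvC
      have m1 : (Subtype.val ⁻¹' (cN G (σ j v)) : Set ↥(Cᶜ)) ∈ restrictB G B C :=
        Qmem j v hvC hvB
      have m2 : (Subtype.val ⁻¹' (cN G (σ i v)) : Set ↥(Cᶜ)) ∈ restrictB G B C :=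
        Qmem i v hvC hvB
      have e1 : cN (G.induce Cᶜ) (⟨σ j v, hu1⟩ : ↥(Cᶜ)) = Subtype.val ⁻¹' (cN G (σ j v)) :=
        hcN' _
      have e2 : cN (G.induce Cᶜ) (⟨σ i v, hu2⟩ : ↥(Cᶜ)) = Subtype.val ⁻¹' (cN G (σ i v)) :=
        hcN' _
      have ne12 : cN (G.induce Cᶜ) (⟨σ j v, hu1⟩ : ↥(Cᶜ)) ≠ cN (G.induce Cᶜ) (⟨σ i v, hu2⟩ : ↥(Cᶜ)) := by
        rw [e1, e2]
        intro heq
        have h1 : (⟨σ j v, hu1⟩ : ↥(Cᶜ)) ∈ (Subtype.val ⁻¹' (cN G (σ j v)) : Set ↥(Cᶜ)) :=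
          self_mem_cN (σ j v)
        rw [heq] at h1
        have h2 : σ j v ∈ X ∪ D i := hcND i (σ i v) (hσC i v hvC) h1
        rcases h2 with h2 | h2
        · exact Set.disjoint_left.mp (hDX j) (hσC j v hvC) h2
        · exact Set.disjoint_left.mp (hDD j i hne) (hσC j v hvC) h2
      obtain ⟨y, hyT, hyDist⟩ := hnc' _ _ (e1 ▸ m1) (e2 ▸ m2) ne12
      have hXsame : ∀ x ∈ X, (x ∈ cN G (σ j v) ↔ x ∈ cN G (σ i v)) := by
        intro x hx
        rw [hσcN j v x, hσcN i v x, hσX j x hx, hσX i x hx]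
      rcases hyT with hy | hy
      · rw [e1] at hy
        have hyQ : ↑y ∈ cN G (σ j v) := hpos' _ m1 hy
        rcases hcND j (σ j v) (hσC j v hvC) hyQ with hyX | hyD
        · -- y in X: xor fails
          have hiff : (y ∈ cN (G.induce Cᶜ) (⟨σ j v, hu1⟩ : ↥(Cᶜ))) ↔
              (y ∈ cN (G.induce Cᶜ) (⟨σ i v, hu2⟩ : ↥(Cᶜ))) := by
            rw [e1, e2, Set.mem_preimage, Set.mem_preimage]
            exact hXsame ↑y hyX
          rcases hyDist with ⟨ha, hb⟩ | ⟨ha, hb⟩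
          · exact hb (hiff.mp ha)
          · exact hb (hiff.mpr ha)
        · exact hbad j y hy hyD
      · rw [e2] at hy
        have hyQ : ↑y ∈ cN G (σ i v) := hpos' _ m2 hy
        rcases hcND i (σ i v) (hσC i v hvC) hyQ with hyX | hyD
        · have hiff : (y ∈ cN (G.induce Cᶜ) (⟨σ j v, hu1⟩ : ↥(Cᶜ))) ↔
              (y ∈ cN (G.induce Cᶜ) (⟨σ i v, hu2⟩ : ↥(Cᶜ))) := by
            rw [e1, e2, Set.mem_preimage, Set.mem_preimage]
            exact hXsame ↑y hyX
          rcases hyDist with ⟨ha, hb⟩ | ⟨ha, hb⟩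
          · exact hb (hiff.mp ha)
          · exact hb (hiff.mpr ha)
        · rw [← hfi] at hy
          exact hbad i y hy hyD
    have hcard : m ≤ C.ncard := by
      have h1 : (Set.univ : Set (Fin m)).ncard ≤ C.ncard :=
        Set.ncard_le_ncard_of_injOn f (fun a _ => hfC a) hinj.injOn (Set.toFinite C)
      rwa [Set.ncard_univ, Nat.card_eq_fintype_card, Fintype.card_fin] at h1
    omega
  obtain ⟨j, hgood⟩ := exists_good
  -- the teaching map for G
  obtain ⟨T, hTthen, hTelse⟩ :
      ∃ T : Set V → Set V,
        (∀ S, S ∈ B → (∃ z, z ∉ C ∧ cN G z = S) →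
          T S = Subtype.val '' (T' (Subtype.val ⁻¹' S))) ∧
        (∀ S, S ∈ B → ¬ (∃ z, z ∉ C ∧ cN G z = S) →
          T S = (σ j) ⁻¹' (Subtype.val '' (T' (Subtype.val ⁻¹' ((σ j) ⁻¹' S))))) := by
    refine ⟨fun S => if hS : S ∈ B then
        (if h2 : (∃ z, z ∉ C ∧ cN G z = S) then Subtype.val '' (T' (Subtype.val ⁻¹' S))
         else (σ j) ⁻¹' (Subtype.val '' (T' (Subtype.val ⁻¹' ((σ j) ⁻¹' S))))) else ∅,
      ?_, ?_⟩
    · intro S h1 h2; simp [h1, h2]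
    · intro S h1 h2; simp [h1, h2]
  have elseQ : ∀ S, S ∈ B → ¬ (∃ z, z ∉ C ∧ cN G z = S) →
      ∃ w, w ∈ C ∧ cN G w = S ∧ (σ j) ⁻¹' S = cN G (σ j w) := by
    intro S hS hth
    obtain ⟨w, hw⟩ := hB hS
    have hwC : w ∈ C := by
      by_contra hwc
      exact hth ⟨w, hwc, hw.symm⟩
    exact ⟨w, hwC, hw.symm, by rw [hw, hσpreB]⟩
  have thenBmem : ∀ S, S ∈ B → ∀ z, z ∉ C → cN G z = S →
      (Subtype.val ⁻¹' S : Set ↥(Cᶜ)) ∈ restrictB G B C := by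
    intro S hS z hz hzS
    rw [← hzS]
    exact hB'mem z hz (by rw [hzS]; exact hS)
  have elseBmem : ∀ S (hS : S ∈ B) (hth : ¬ (∃ z, z ∉ C ∧ cN G z = S)),
      (Subtype.val ⁻¹' ((σ j) ⁻¹' S) : Set ↥(Cᶜ)) ∈ restrictB G B C := by
    intro S hS hth
    obtain ⟨w, hwC, hwS, hQ⟩ := elseQ S hS hth
    rw [hQ]
    exact Qmem j w hwC (by rw [hwS]; exact hS)
  refine ⟨T, ?_, ?_, ?_⟩
  · -- positivity
    intro S hS
    by_cases hth : ∃ z, z ∉ C ∧ cN G z = S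
    · rw [hTthen S hS hth]
      obtain ⟨z, hz, hzS⟩ := hth
      exact (Set.image_mono (f := Subtype.val) (hpos' _ (thenBmem S hS z hz hzS))).trans
        (Set.image_preimage_subset _ _)
    · rw [hTelse S hS hth]
      calc (σ j) ⁻¹' (Subtype.val '' (T' (Subtype.val ⁻¹' ((σ j) ⁻¹' S))))
          ⊆ (σ j) ⁻¹' ((σ j) ⁻¹' S) := Set.preimage_mono
            ((Set.image_mono (f := Subtype.val) (hpos' _ (elseBmem S hS hth))).trans
              (Set.image_preimage_subset _ _))
        _ = S := invol_preimage_preimage (hσinv j) S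
  · -- non-clashing
    have caseNN : ∀ u v : V, cN G u ∈ B → cN G v ∈ B → cN G u ≠ cN G v →
        (∃ z, z ∉ C ∧ cN G z = cN G u) → (∃ z, z ∉ C ∧ cN G z = cN G v) →
        ∃ w ∈ T (cN G u) ∪ T (cN G v), Distinguishes G w u v := by
      rintro u v huB hvB hne ⟨z₁, hz₁C, hz₁⟩ ⟨z₂, hz₂C, hz₂⟩
      have hS'B := thenBmem _ huB z₁ hz₁C hz₁
      have hR'B := thenBmem _ hvB z₂ hz₂C hz₂
      have e1 : cN (G.induce Cᶜ) (⟨z₁, hz₁C⟩ : ↥(Cᶜ)) = Subtype.val ⁻¹' (cN G u) := by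
        rw [hcN' ⟨z₁, hz₁C⟩]
        exact congrArg (fun A => (Subtype.val ⁻¹' A : Set ↥(Cᶜ))) hz₁
      have e2 : cN (G.induce Cᶜ) (⟨z₂, hz₂C⟩ : ↥(Cᶜ)) = Subtype.val ⁻¹' (cN G v) := by
        rw [hcN' ⟨z₂, hz₂C⟩]
        exact congrArg (fun A => (Subtype.val ⁻¹' A : Set ↥(Cᶜ))) hz₂
      have hne' : cN (G.induce Cᶜ) (⟨z₁, hz₁C⟩ : ↥(Cᶜ)) ≠ cN (G.induce Cᶜ) (⟨z₂, hz₂C⟩ : ↥(Cᶜ)) := by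
        rw [e1, e2]
        intro heq
        apply hne
        apply noNeedy (cN G u) (cN G v) ⟨z₁, hz₁C, hz₁⟩ ⟨z₂, hz₂C, hz₂⟩
        intro y hyC
        have := Set.ext_iff.mp heq ⟨y, hyC⟩
        simpa using this
      obtain ⟨y, hyT, hyDist⟩ := hnc' _ _ (by rw [e1]; exact hS'B) (by rw [e2]; exact hR'B) hne'
      simp only [Distinguishes] at hyDist
      rw [e1, e2] at hyDist
      refine ⟨↑y, ?_, ?_⟩
      · rcases hyT with hy | hy
        · left
          rw [hTthen _ huB ⟨z₁, hz₁C, hz₁⟩]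
          rw [e1] at hy
          exact ⟨y, hy, rfl⟩
        · right
          rw [hTthen _ hvB ⟨z₂, hz₂C, hz₂⟩]
          rw [e2] at hy
          exact ⟨y, hy, rfl⟩
      · exact hyDist
    have caseEE : ∀ u v : V, cN G u ∈ B → cN G v ∈ B → cN G u ≠ cN G v →
        ¬ (∃ z, z ∉ C ∧ cN G z = cN G u) → ¬ (∃ z, z ∉ C ∧ cN G z = cN G v) →
        ∃ w ∈ T (cN G u) ∪ T (cN G v), Distinguishes G w u v := by
      rintro u v huB hvB hne hthu hthv
      obtain ⟨v₁, hv₁C, hv₁S, hQ1⟩ := elseQ _ huB hthu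
      obtain ⟨v₂, hv₂C, hv₂S, hQ2⟩ := elseQ _ hvB hthv
      have m1 := elseBmem _ huB hthu
      have m2 := elseBmem _ hvB hthv
      have e1 : cN (G.induce Cᶜ) (⟨σ j v₁, hσnC j v₁ hv₁C⟩ : ↥(Cᶜ)) =
          Subtype.val ⁻¹' ((σ j) ⁻¹' (cN G u)) := by
        rw [hcN' ⟨σ j v₁, hσnC j v₁ hv₁C⟩]
        exact congrArg (fun A => (Subtype.val ⁻¹' A : Set ↥(Cᶜ))) hQ1.symm
      have e2 : cN (G.induce Cᶜ) (⟨σ j v₂, hσnC j v₂ hv₂C⟩ : ↥(Cᶜ)) =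
          Subtype.val ⁻¹' ((σ j) ⁻¹' (cN G v)) := by
        rw [hcN' ⟨σ j v₂, hσnC j v₂ hv₂C⟩]
        exact congrArg (fun A => (Subtype.val ⁻¹' A : Set ↥(Cᶜ))) hQ2.symm
      have hne' : cN (G.induce Cᶜ) (⟨σ j v₁, hσnC j v₁ hv₁C⟩ : ↥(Cᶜ)) ≠
          cN (G.induce Cᶜ) (⟨σ j v₂, hσnC j v₂ hv₂C⟩ : ↥(Cᶜ)) := by
        rw [e1, e2]
        intro heq
        apply hne
        have hSR : (σ j) ⁻¹' (cN G u) = (σ j) ⁻¹' (cN G v) := by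
          ext w
          by_cases hwC : w ∈ C
          · constructor
            · intro hw
              exfalso
              rw [hQ1] at hw
              rcases hcND j _ (hσC j v₁ hv₁C) hw with h | h
              · exact hXC _ h hwC
              · exact Set.disjoint_left.mp (hDC j) h hwC
            · intro hw
              exfalso
              rw [hQ2] at hw
              rcases hcND j _ (hσC j v₂ hv₂C) hw with h | h
              · exact hXC _ h hwC
              · exact Set.disjoint_left.mp (hDC j) h hwC
          · have := Set.ext_iff.mp heq ⟨w, hwC⟩
            simpa using this
        calc cN G u = (σ j) ⁻¹' ((σ j) ⁻¹' (cN G u)) := (invol_preimage_preimage (hσinv j) _).symm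
          _ = (σ j) ⁻¹' ((σ j) ⁻¹' (cN G v)) := by rw [hSR]
          _ = cN G v := invol_preimage_preimage (hσinv j) _
      obtain ⟨y, hyT, hyDist⟩ := hnc' _ _ (by rw [e1]; exact m1) (by rw [e2]; exact m2) hne'
      simp only [Distinguishes] at hyDist
      rw [e1, e2] at hyDist
      refine ⟨σ j ↑y, ?_, ?_⟩
      · rcases hyT with hy | hy
        · left
          rw [hTelse _ huB hthu]
          show σ j (σ j ↑y) ∈ Subtype.val '' (T' (Subtype.val ⁻¹' ((σ j) ⁻¹' (cN G u))))
          rw [hσinv j]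
          rw [e1] at hy
          exact ⟨y, hy, rfl⟩
        · right
          rw [hTelse _ hvB hthv]
          show σ j (σ j ↑y) ∈ Subtype.val '' (T' (Subtype.val ⁻¹' ((σ j) ⁻¹' (cN G v))))
          rw [hσinv j]
          rw [e2] at hy
          exact ⟨y, hy, rfl⟩
      · exact hyDist
    have caseNE : ∀ u v : V, cN G u ∈ B → cN G v ∈ B → cN G u ≠ cN G v →
        (∃ z, z ∉ C ∧ cN G z = cN G u) → ¬ (∃ z, z ∉ C ∧ cN G z = cN G v) →
        ∃ w ∈ T (cN G u) ∪ T (cN G v), Distinguishes G w u v := by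
      rintro u v huB hvB hne ⟨z₁, hz₁C, hz₁⟩ hthv
      obtain ⟨v₂, hv₂C, hv₂S, hQ2⟩ := elseQ _ hvB hthv
      have hSB' := thenBmem _ huB z₁ hz₁C hz₁
      have m2 := elseBmem _ hvB hthv
      have mQ : (Subtype.val ⁻¹' (cN G (σ j v₂)) : Set ↥(Cᶜ)) ∈ restrictB G B C :=
        Qmem j v₂ hv₂C (by rw [hv₂S]; exact hvB)
      by_cases hSR : cN G u = (σ j) ⁻¹' (cN G v)
      · -- use the goodness of j
        obtain ⟨y, hyT', hyD⟩ := hgood v₂ hv₂C (by rw [hv₂S]; exact hvB)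
        have harg : (Subtype.val ⁻¹' (cN G (σ j v₂)) : Set ↥(Cᶜ)) = Subtype.val ⁻¹' (cN G u) := by
          rw [hSR]
          exact congrArg (fun A => (Subtype.val ⁻¹' A : Set ↥(Cᶜ))) hQ2.symm
        refine ⟨↑y, Or.inl ?_, ?_⟩
        · rw [hTthen _ huB ⟨z₁, hz₁C, hz₁⟩]
          rw [harg] at hyT'
          exact ⟨y, hyT', rfl⟩
        · have hyS : ↑y ∈ cN G u := by
            have h1 : ↑y ∈ cN G (σ j v₂) := hpos' _ mQ hyT'
            rw [hSR, hQ2]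
            exact h1
          have hyNR : ↑y ∉ cN G v := by
            intro hyR
            have h2 : ↑y ∈ X ∪ C := by
              rw [← hv₂S] at hyR
              exact hcNC v₂ hv₂C hyR
            rcases h2 with h2 | h2
            · exact Set.disjoint_left.mp (hDX j) hyD h2
            · exact Set.disjoint_left.mp (hDC j) hyD h2
          exact Or.inl ⟨hyS, hyNR⟩
      · have e1 : cN (G.induce Cᶜ) (⟨z₁, hz₁C⟩ : ↥(Cᶜ)) = Subtype.val ⁻¹' (cN G u) := by
          rw [hcN' ⟨z₁, hz₁C⟩]
          exact congrArg (fun A => (Subtype.val ⁻¹' A : Set ↥(Cᶜ))) hz₁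
        have e2 : cN (G.induce Cᶜ) (⟨σ j v₂, hσnC j v₂ hv₂C⟩ : ↥(Cᶜ)) =
            Subtype.val ⁻¹' ((σ j) ⁻¹' (cN G v)) := by
          rw [hcN' ⟨σ j v₂, hσnC j v₂ hv₂C⟩]
          exact congrArg (fun A => (Subtype.val ⁻¹' A : Set ↥(Cᶜ))) hQ2.symm
        have hne' : cN (G.induce Cᶜ) (⟨z₁, hz₁C⟩ : ↥(Cᶜ)) ≠
            cN (G.induce Cᶜ) (⟨σ j v₂, hσnC j v₂ hv₂C⟩ : ↥(Cᶜ)) := by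
          rw [e1, e2]
          intro heq
          apply hSR
          apply noNeedy (cN G u) ((σ j) ⁻¹' (cN G v)) ⟨z₁, hz₁C, hz₁⟩
            ⟨σ j v₂, hσnC j v₂ hv₂C, hQ2.symm⟩
          intro y hyC
          have := Set.ext_iff.mp heq ⟨y, hyC⟩
          simpa using this
        obtain ⟨y, hyT, hyDist⟩ := hnc' _ _ (by rw [e1]; exact hSB') (by rw [e2]; exact m2) hne'
        simp only [Distinguishes] at hyDist
        rw [e1, e2] at hyDist
        rcases hyT with hy | hy
        · rw [e1] at hy
          refine ⟨↑y, Or.inl ?_, ?_⟩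
          · rw [hTthen _ huB ⟨z₁, hz₁C, hz₁⟩]
            exact ⟨y, hy, rfl⟩
          · have hyS : ↑y ∈ cN G u := hpos' _ hSB' hy
            have hnb : σ j ↑y ∉ cN G v := by
              rcases hyDist with ⟨ha, hb⟩ | ⟨hb, hna⟩
              · exact hb
              · exact absurd hyS hna
            have hyNR : ↑y ∉ cN G v := by
              intro hyR
              have h2 : ↑y ∈ X ∪ C := by
                rw [← hv₂S] at hyR
                exact hcNC v₂ hv₂C hyR
              rcases h2 with h2 | h2
              · exact hnb (by rw [hσX j _ h2]; exact hyR)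
              · exact y.2 h2
            exact Or.inl ⟨hyS, hyNR⟩
        · rw [e2] at hy
          refine ⟨σ j ↑y, Or.inr ?_, ?_⟩
          · rw [hTelse _ hvB hthv]
            show σ j (σ j ↑y) ∈ Subtype.val '' (T' (Subtype.val ⁻¹' ((σ j) ⁻¹' (cN G v))))
            rw [hσinv j]
            exact ⟨y, hy, rfl⟩
          · have hyQv : ↑y ∈ (σ j) ⁻¹' (cN G v) := hpos' _ m2 hy
            have hyR : σ j ↑y ∈ cN G v := hyQv
            have hnS : ↑y ∉ cN G u := by
              rcases hyDist with ⟨ha, hb⟩ | ⟨hb, hna⟩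
              · exact absurd hyQv hb
              · exact hna
            have hσyNS : σ j ↑y ∉ cN G u := by
              intro hσyS
              have hyQ' : ↑y ∈ cN G (σ j v₂) := by rw [← hQ2]; exact hyQv
              rcases hcND j (σ j v₂) (hσC j v₂ hv₂C) hyQ' with hyX | hyDj
              · rw [hσX j _ hyX] at hσyS
                exact hnS hσyS
              · have hσyC : σ j ↑y ∈ C := hσD j ↑y hyDj
                rw [← hz₁] at hσyS
                rcases mem_cN.mp hσyS with h | h
                · exact hz₁C (h ▸ hσyC)
                · have hz₁X : z₁ ∈ X := by
                    rcases hCcl (σ j ↑y) hσyC z₁ h.symm with hh | hh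
                    · exact hh
                    · exact absurd hh hz₁C
                  have h4 := hσadj j z₁ (σ j ↑y)
                  rw [hσX j z₁ hz₁X, hσinv j] at h4
                  have h5 : ↑y ∈ cN G z₁ := mem_cN.2 (Or.inr (h4.mpr h))
                  rw [hz₁] at h5
                  exact hnS h5
            exact Or.inr ⟨hyR, hσyNS⟩
    intro u v huB hvB hne
    by_cases h1 : ∃ z, z ∉ C ∧ cN G z = cN G u
    · by_cases h2 : ∃ z, z ∉ C ∧ cN G z = cN G v
      · exact caseNN u v huB hvB hne h1 h2
      · exact caseNE u v huB hvB hne h1 h2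
    · by_cases h2 : ∃ z, z ∉ C ∧ cN G z = cN G v
      · obtain ⟨w, hw, hx⟩ := caseNE v u hvB huB (Ne.symm hne) h2 h1
        refine ⟨w, ?_, ?_⟩
        · rcases hw with h | h
          · exact Or.inr h
          · exact Or.inl h
        · rcases hx with ⟨a, b⟩ | ⟨a, b⟩
          · exact Or.inr ⟨a, b⟩
          · exact Or.inl ⟨a, b⟩
      · exact caseEE u v huB hvB hne h1 h2
  · -- size
    intro S hS
    by_cases hth : ∃ z, z ∉ C ∧ cN G z = S
    · rw [hTthen S hS hth, Set.ncard_image_of_injective _ Subtype.val_injective]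
      obtain ⟨z, hz, hzS⟩ := hth
      exact hsize' _ (thenBmem S hS z hz hzS)
    · rw [hTelse S hS hth, ncard_invol_preimage (hσinv j),
        Set.ncard_image_of_injective _ Subtype.val_injective]
      exact hsize' _ (elseBmem S hS hth)

/-- The "right" direction: from a positive NCTM for `G`, some component can be
deleted while preserving the existence of a positive NCTM. -/
lemma right (B : Set (Set V)) (k : ℕ)
    (X : Set V) (m : ℕ) (D : Fin m → Set V)
    (hDcl : ∀ i, ∀ v ∈ D i, ∀ w, G.Adj v w → w ∈ X ∪ D i)
    (hDX : ∀ i, Disjoint (D i) X)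
    (hDD : ∀ i j : Fin m, i ≠ j → Disjoint (D i) (D j))
    (hm : X.ncard * X.ncard + 2 * X.ncard < m) :
    HasPosNCTM G B k →
    ∃ i : Fin m, HasPosNCTM (G.induce (D i)ᶜ) (restrictB G B (D i)) k := by
  classical
  rintro ⟨T, hpos, hnc, hsize⟩
  have hcND : ∀ i, ∀ v ∈ D i, cN G v ⊆ X ∪ D i := by
    intro i v hv w hw
    rcases mem_cN.mp hw with h | h
    · exact Or.inr (h ▸ hv)
    · exact hDcl i v hv w h
  set badP : Fin m → Prop := fun i => ∃ u v : V, u ∉ D i ∧ v ∉ D i ∧ cN G u ∈ B ∧ cN G v ∈ B ∧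
      (∃ y, y ∉ D i ∧ ¬(y ∈ cN G u ↔ y ∈ cN G v)) ∧
      (∀ y, y ∈ T (cN G u) ∪ T (cN G v) → Distinguishes G y u v → y ∈ D i) with hbadP
  suffices hgood : ∃ i, ¬ badP i by
    obtain ⟨i, hi⟩ := hgood
    refine ⟨i, ?_⟩
    -- construct the restricted teaching map
    refine ⟨fun S' => if h : S' ∈ restrictB G B (D i) then
        Subtype.val ⁻¹' (T (cN G ↑(h.choose))) else ∅, ?_, ?_, ?_⟩
    · intro S' hS'
      simp only [dif_pos hS']
      have hspec := hS'.choose_spec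
      have h2 : S' = Subtype.val ⁻¹' (cN G ↑(hS'.choose)) := hspec.2.trans (cN_induce _ _)
      intro z hz
      rw [h2]
      exact Set.preimage_mono (hpos _ hspec.1) hz
    · intro u' v' hu' hv' hne'
      have hspecu := hu'.choose_spec
      have hspecv := hv'.choose_spec
      set w₁ := hu'.choose with hw₁
      set w₂ := hv'.choose with hw₂
      have hrw1 : cN (G.induce (D i)ᶜ) u' = Subtype.val ⁻¹' (cN G ↑w₁) :=
        hspecu.2.trans (cN_induce _ _)
      have hrw2 : cN (G.induce (D i)ᶜ) v' = Subtype.val ⁻¹' (cN G ↑w₂) :=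
        hspecv.2.trans (cN_induce _ _)
      have hvne : ∃ y, y ∉ D i ∧ ¬(y ∈ cN G ↑w₁ ↔ y ∈ cN G ↑w₂) := by
        by_contra hcon
        push_neg at hcon
        apply hne'
        rw [hrw1, hrw2]
        ext z
        exact hcon ↑z z.2
      have hneG : cN G ↑w₁ ≠ cN G ↑w₂ := by
        obtain ⟨y, _, hy⟩ := hvne
        intro h
        exact hy (h ▸ Iff.rfl)
      have hW : ¬ (∀ y, y ∈ T (cN G ↑w₁) ∪ T (cN G ↑w₂) →
          Distinguishes G y ↑w₁ ↑w₂ → y ∈ D i) := by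
        intro hWall
        exact hi ⟨↑w₁, ↑w₂, w₁.2, w₂.2, hspecu.1, hspecv.1, hvne, hWall⟩
      push_neg at hW
      obtain ⟨y, hyT, hyDist, hyD⟩ := hW
      refine ⟨⟨y, hyD⟩, ?_, ?_⟩
      · simp only [dif_pos hu', dif_pos hv']
        rcases hyT with hy | hy
        · exact Or.inl hy
        · exact Or.inr hy
      · simp only [Distinguishes] at hyDist ⊢
        rw [hrw1, hrw2]
        exact hyDist
    · intro S' hS'
      simp only [dif_pos hS']
      exact le_trans (ncard_preimage_val_le _ _) (hsize _ hS'.choose_spec.1)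
  -- counting argument: there are few bad indices
  by_contra hcon
  push_neg at hcon
  have norm : ∀ i : Fin m, ∃ u v y : V, u ∈ X ∧ u ∉ D i ∧ v ∉ D i ∧
      cN G u ∈ B ∧ cN G v ∈ B ∧
      y ∈ T (cN G u) ∧ y ∈ D i ∧ Distinguishes G y u v ∧
      (∀ z, z ∈ T (cN G u) ∪ T (cN G v) → Distinguishes G z u v → z ∈ D i) := by
    intro i
    obtain ⟨u, v, huD, hvD, huB, hvB, ⟨y₀, hy₀D, hy₀ne⟩, hWall⟩ := hcon i
    have hne : cN G u ≠ cN G v := fun h => hy₀ne (h ▸ Iff.rfl)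
    obtain ⟨y, hyT, hyDist⟩ := hnc u v huB hvB hne
    have hyD : y ∈ D i := hWall y hyT hyDist
    have hXof : ∀ a : V, a ∉ D i → y ∈ cN G a → a ∈ X := by
      intro a haD hyN
      rcases mem_cN.mp hyN with h | h
      · exact absurd (h ▸ hyD) haD
      · rcases hDcl i y hyD a h.symm with hh | hh
        · exact hh
        · exact absurd hh haD
    rcases hyT with hyu | hyv
    · have huX : u ∈ X := hXof u huD (hpos _ huB hyu)
      exact ⟨u, v, y, huX, huD, hvD, huB, hvB, hyu, hyD, hyDist, hWall⟩
    · have hvX : v ∈ X := hXof v hvD (hpos _ hvB hyv)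
      refine ⟨v, u, y, hvX, hvD, huD, hvB, huB, hyv, hyD, ?_, ?_⟩
      · rcases hyDist with ⟨a, b⟩ | ⟨a, b⟩
        · exact Or.inr ⟨a, b⟩
        · exact Or.inl ⟨a, b⟩
      · intro z hz hDz
        apply hWall z
        · rcases hz with h | h
          · exact Or.inr h
          · exact Or.inl h
        · rcases hDz with ⟨a, b⟩ | ⟨a, b⟩
          · exact Or.inr ⟨a, b⟩
          · exact Or.inl ⟨a, b⟩
  choose fu fv fy hfuX hfuD hfvD hfuB hfvB hfyT hfyD hfyDist hfW using norm
  have key2 : ∀ i i' : Fin m, i ≠ i' → fu i = fu i' → fv i = fv i' → False := by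
    intro i i' hne hu hv
    have hd := hfyDist i'
    have ht := hfyT i'
    rw [← hu, ← hv] at hd
    rw [← hu] at ht
    have h1 : fy i' ∈ D i := hfW i (fy i') (Or.inl ht) hd
    exact Set.disjoint_left.mp (hDD i i' hne) h1 (hfyD i')
  have key3 : ∀ i i' : Fin m, i ≠ i' → fu i = fu i' → fv i ∉ X → fv i ∈ D i' := by
    intro i i' hne hu hvnX
    have hy' : fy i' ∈ T (cN G (fu i)) := by rw [hu]; exact hfyT i'
    have hy'N : fy i' ∈ cN G (fu i) := hpos _ (hfuB i) hy'
    by_cases hyR : fy i' ∈ cN G (fv i)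
    · rcases mem_cN.mp hyR with h | h
      · exact h ▸ hfyD i'
      · rcases hDcl i' (fy i') (hfyD i') (fv i) h.symm with hh | hh
        · exact absurd hh hvnX
        · exact hh
    · have hdist : Distinguishes G (fy i') (fu i) (fv i) := Or.inl ⟨hy'N, hyR⟩
      have h1 : fy i' ∈ D i := hfW i (fy i') (Or.inl hy') hdist
      exact absurd (hfyD i') (Set.disjoint_left.mp (hDD i i' hne) h1 ∘ fun h => h)
  have hxcard : Fintype.card ↥X = X.ncard := by
    rw [← Nat.card_eq_fintype_card, Nat.card_coe_set_eq]
  obtain ⟨F1, hF1⟩ : ∃ F : Finset (Fin m), ∀ i, i ∈ F ↔ fv i ∈ X :=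
    ⟨Finset.univ.filter (fun i : Fin m => fv i ∈ X), by simp⟩
  obtain ⟨F2, hF2⟩ : ∃ F : Finset (Fin m), ∀ i, i ∈ F ↔ ¬ fv i ∈ X :=
    ⟨Finset.univ.filter (fun i : Fin m => ¬ fv i ∈ X), by simp⟩
  set g : Fin m → ↥X × ↥X := fun i =>
    ((⟨fu i, hfuX i⟩ : ↥X), if h : fv i ∈ X then (⟨fv i, h⟩ : ↥X) else ⟨fu i, hfuX i⟩)
    with hg
  have hc1 : F1.card ≤ X.ncard * X.ncard := by
    have := Finset.card_le_card_of_injOn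
      (s := F1) (t := (Finset.univ : Finset (↥X × ↥X)))
      g (fun i _ => Finset.mem_univ (g i)) ?_
    · calc F1.card ≤ (Finset.univ : Finset (↥X × ↥X)).card := this
        _ = X.ncard * X.ncard := by
            rw [Finset.card_univ, Fintype.card_prod, hxcard]
    · intro i hi i' hi' heq
      simp only [Finset.coe_sort_coe, Finset.mem_coe] at hi hi'
      have hvi := (hF1 i).mp hi
      have hvi' := (hF1 i').mp hi'
      simp only [hg, Prod.mk.injEq, Subtype.mk.injEq, dif_pos hvi, dif_pos hvi'] at heq
      by_contra hne
      exact key2 i i' hne heq.1 heq.2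
  have hc2 : F2.card ≤ 2 * X.ncard := by
    have := Finset.card_le_mul_card_image_of_maps_to
      (f := fun i : Fin m => (⟨fu i, hfuX i⟩ : ↥X))
      (s := F2) (t := Finset.univ) (fun a _ => Finset.mem_univ _) 2 ?_
    · calc F2.card ≤ 2 * (Finset.univ : Finset ↥X).card := this
        _ = 2 * X.ncard := by rw [Finset.card_univ, hxcard]
    · intro b _
      by_contra hgt
      push_neg at hgt
      obtain ⟨a, a', a'', ha, ha', ha'', hab, hac, hbc⟩ := Finset.two_lt_card_iff.mp hgt
      simp only [Finset.mem_filter] at ha ha' ha''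
      have e1 : fu a = ↑b := congrArg Subtype.val ha.2
      have e2 : fu a' = ↑b := congrArg Subtype.val ha'.2
      have e3 : fu a'' = ↑b := congrArg Subtype.val ha''.2
      have h1 : fv a ∈ D a' := key3 a a' hab (e1.trans e2.symm) ((hF2 a).mp ha.1)
      have h2 : fv a ∈ D a'' := key3 a a'' hac (e1.trans e3.symm) ((hF2 a).mp ha.1)
      exact Set.disjoint_left.mp (hDD a' a'' hbc) h1 h2
  have hmle : m ≤ F1.card + F2.card := by
    have hcover : (Finset.univ : Finset (Fin m)) ⊆ F1 ∪ F2 := by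
      intro i _
      by_cases h : fv i ∈ X
      · exact Finset.mem_union_left _ ((hF1 i).mpr h)
      · exact Finset.mem_union_right _ ((hF2 i).mpr h)
    calc m = (Finset.univ : Finset (Fin m)).card := by
          rw [Finset.card_univ, Fintype.card_fin]
      _ ≤ (F1 ∪ F2).card := Finset.card_le_card hcover
      _ ≤ _ := Finset.card_union_le _ _
  omega

lemma arith5 (t x : ℕ) (ht : 1 ≤ t) :
    ((t + 1) * ((2^t)^t * ((2^x)^t * 2^t))) * (t + x*x + 2*x + 1) ≤
      (x + t) * 2 ^ ((x + t) ^ 2) * 2 ^ (2*t + x + 1) := by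
  have h2t : t + 1 ≤ 2 ^ t := Nat.lt_two_pow_self (n := t)
  have h2x : x + 1 ≤ 2 ^ x := Nat.lt_two_pow_self (n := x)
  have hP : (2^t)^t * ((2^x)^t * 2^t) = 2^(t*t + (x*t + t)) := by
    rw [pow_add, pow_add, ← pow_mul, ← pow_mul]
  have hstep2 : (t + 1) * (t + x*x + 2*x + 1) ≤ t * 2^(t + 2*x + 1) := by
    have hM : t + x*x + 2*x + 1 ≤ (t + 1) * ((x+1)*(x+1)) := by nlinarith
    have ha : (t+1) * (t + x*x + 2*x + 1) ≤ ((2*t) * 2^t) * (2^x * 2^x) := by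
      calc (t+1) * (t + x*x + 2*x + 1)
          ≤ (t+1) * ((t + 1) * ((x+1)*(x+1))) := Nat.mul_le_mul_left _ hM
        _ = ((t+1)*(t+1)) * ((x+1)*(x+1)) := by ring
        _ ≤ ((2*t) * 2^t) * (2^x * 2^x) :=
            Nat.mul_le_mul (Nat.mul_le_mul (by omega) h2t) (Nat.mul_le_mul h2x h2x)
    have e2 : 2^(t + 2*x + 1) = 2^t * (2^x * 2^x) * 2 := by
      rw [pow_add, pow_add, pow_one, two_mul, pow_add]
    calc (t+1) * (t + x*x + 2*x + 1) ≤ ((2*t) * 2^t) * (2^x * 2^x) := ha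
      _ = t * (2^t * (2^x * 2^x) * 2) := by ring
      _ = t * 2^(t + 2*x + 1) := by rw [e2]
  have hE : (t + 2*x + 1) + (t*t + (x*t + t)) ≤ (x+t)^2 + (2*t + x + 1) := by
    have hxt : x ≤ x * t := Nat.le_mul_of_pos_right x ht
    nlinarith
  calc ((t + 1) * ((2^t)^t * ((2^x)^t * 2^t))) * (t + x*x + 2*x + 1)
      = ((t + 1) * (t + x*x + 2*x + 1)) * 2^(t*t + (x*t + t)) := by rw [hP]; ring
    _ ≤ (t * 2^(t + 2*x + 1)) * 2^(t*t + (x*t + t)) :=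
        Nat.mul_le_mul_right _ hstep2
    _ = t * 2^((t + 2*x + 1) + (t*t + (x*t + t))) := by rw [pow_add]; ring
    _ ≤ (x + t) * 2^((x+t)^2 + (2*t + x + 1)) :=
        Nat.mul_le_mul (Nat.le_add_left t x) (Nat.pow_le_pow_right (by norm_num) hE)
    _ = (x + t) * 2 ^ ((x + t) ^ 2) * 2 ^ (2*t + x + 1) := by rw [pow_add, ← mul_assoc]

end Stmt5Aux

/-- Reduction rule 1 is safe: if `A 0, …, A (ℓ-1)` are distinct connected components of
`G − X`, each with at most `t` vertices and maximum size equal to `t`, and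
`ℓ > (|X|+t)·2^{(|X|+t)²}·2^{2t+|X|+1}`, then some component `A P` can be deleted:
there is a positive NCTM of size at most `k` for `B` in `G` iff there is one for the
restriction `B'` of `B` in `G − V(A P)`. -/
theorem stmt5 {V : Type*} [Fintype V] (G : SimpleGraph V)
    (B : Set (Set V)) (hB : B ⊆ {S | ∃ v : V, S = cN G v})
    (k : ℕ) (hk : 0 < k)
    (X : Set V) (ℓ t : ℕ)
    (A : Fin ℓ → (G.induce Xᶜ).ConnectedComponent)
    (hAinj : Function.Injective A)
    (ht : ∀ i : Fin ℓ, ((A i).supp).ncard ≤ t)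
    (hmax : ∃ i : Fin ℓ, ((A i).supp).ncard = t)
    (hl : (X.ncard + t) * 2 ^ ((X.ncard + t) ^ 2) * 2 ^ (2 * t + X.ncard + 1) < ℓ) :
    ∃ P : Fin ℓ,
      (HasPosNCTM G B k ↔
        HasPosNCTM (G.induce (Subtype.val '' ((A P).supp))ᶜ)
          (restrictB G B (Subtype.val '' ((A P).supp))) k) := by
  classical
  open Stmt5Aux in
  have hl0 : 0 < ℓ := by omega
  have hsupp_ne0 : ∀ i : Fin ℓ, ∃ u : ↥Xᶜ, u ∈ (A i).supp := by
    intro i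
    obtain ⟨v, hv⟩ := (A i).exists_rep
    exact ⟨v, SimpleGraph.ConnectedComponent.mem_supp_iff _ _ |>.mpr hv⟩
  have ht1 : 1 ≤ t := by
    obtain ⟨i₀, hi₀⟩ := hmax
    obtain ⟨u, hu⟩ := hsupp_ne0 i₀
    have hpos : 0 < ((A i₀).supp).ncard :=
      (Set.ncard_pos (Set.toFinite _)).mpr ⟨u, hu⟩
    omega

  classical
  set CC : Fin ℓ → Set V := fun i => Subtype.val '' (A i).supp with hCC
  -- basic component facts
  have hCCX : ∀ i, CC i ⊆ Xᶜ := by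
    rintro i v ⟨u, hu, rfl⟩; exact u.2
  have hCCcl : ∀ i, ∀ v ∈ CC i, ∀ w, G.Adj v w → w ∈ X ∪ CC i := by
    rintro i v ⟨u, hu, rfl⟩ w hadj
    by_cases hw : w ∈ X
    · exact Or.inl hw
    · refine Or.inr ?_
      have hwX : w ∈ Xᶜ := hw
      have hadj' : (G.induce Xᶜ).Adj u ⟨w, hwX⟩ := hadj
      have hmk : (G.induce Xᶜ).connectedComponentMk ⟨w, hwX⟩ = A i := by
        rw [SimpleGraph.ConnectedComponent.mem_supp_iff] at hu
        rw [← hu]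
        exact SimpleGraph.ConnectedComponent.sound hadj'.symm.reachable
      exact ⟨⟨w, hwX⟩, SimpleGraph.ConnectedComponent.mem_supp_iff _ _ |>.mpr hmk, rfl⟩
  have hCCdisj : ∀ i j : Fin ℓ, i ≠ j → Disjoint (CC i) (CC j) := by
    intro i j hij
    rw [Set.disjoint_left]
    rintro v ⟨u, hu, rfl⟩ ⟨u', hu', huv⟩
    have huu : u' = u := Subtype.val_injective huv
    rw [SimpleGraph.ConnectedComponent.mem_supp_iff] at hu hu'
    rw [huu, hu] at hu'
    exact hij (hAinj hu')
  have hsupp_ne : ∀ i : Fin ℓ, ∃ u : ↥Xᶜ, u ∈ (A i).supp := by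
    intro i
    obtain ⟨v, hv⟩ := (A i).exists_rep
    exact ⟨v, SimpleGraph.ConnectedComponent.mem_supp_iff _ _ |>.mpr hv⟩
  obtain ⟨u₀, hu₀⟩ := hsupp_ne ⟨0, hl0⟩
  set v₀ : V := (u₀ : ↥Xᶜ).1 with hv₀
  -- signature machinery
  set s : Fin ℓ → ℕ := fun i => ((A i).supp).ncard with hs
  have he : ∀ i : Fin ℓ, Nonempty (↥((A i).supp) ≃ Fin (s i)) := by
    intro i
    letI := (Set.toFinite ((A i).supp)).fintype
    exact ⟨Fintype.equivFinOfCardEq (by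
      rw [← Nat.card_eq_fintype_card, Nat.card_coe_set_eq])⟩
  have hex : Nonempty (↥X ≃ Fin (X.ncard)) := by
    letI := (Set.toFinite X).fintype
    exact ⟨Fintype.equivFinOfCardEq (by
      rw [← Nat.card_eq_fintype_card, Nat.card_coe_set_eq])⟩
  set ee : ∀ i : Fin ℓ, ↥((A i).supp) ≃ Fin (s i) := fun i => (he i).some with hee
  set xe : ↥X ≃ Fin (X.ncard) := hex.some with hxe
  set vert : Fin ℓ → Fin t → V := fun i a =>
    if h : (a : ℕ) < s i then (((ee i).symm ⟨a, h⟩ : ↥((A i).supp)) : ↥Xᶜ).1 else v₀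
    with hvert
  set xv : Fin (X.ncard) → V := fun b => ((xe.symm b : ↥X) : V) with hxv
  have hxvX : ∀ b, xv b ∈ X := fun b => (xe.symm b).2
  have hxv_eq : ∀ (z : V) (hz : z ∈ X), xv (xe ⟨z, hz⟩) = z := by
    intro z hz
    simp only [hxv, Equiv.symm_apply_apply]
  have hvmem : ∀ (i : Fin ℓ) (a : Fin t) (h : (a : ℕ) < s i), vert i a ∈ CC i := by
    intro i a h
    simp only [hvert, dif_pos h]
    exact ⟨((ee i).symm ⟨a, h⟩ : ↥((A i).supp)), ((ee i).symm ⟨a, h⟩).2, rfl⟩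
  set idx : Fin ℓ → V → Fin t := fun i v =>
    if h : ∃ u : ↥((A i).supp), ((u : ↥Xᶜ) : V) = v then
      ⟨((ee i) h.choose : Fin (s i)).1, lt_of_lt_of_le ((ee i) h.choose).2 (ht i)⟩
    else ⟨0, ht1⟩ with hidx
  have hmemex : ∀ (i : Fin ℓ) (v : V), v ∈ CC i → ∃ u : ↥((A i).supp), ((u : ↥Xᶜ) : V) = v := by
    rintro i v ⟨u, hu, rfl⟩
    exact ⟨⟨u, hu⟩, rfl⟩
  have hidxlt : ∀ (i : Fin ℓ) (v : V) (h : v ∈ CC i), ((idx i v) : ℕ) < s i := by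
    intro i v h
    simp only [hidx, dif_pos (hmemex i v h)]
    exact ((ee i) (hmemex i v h).choose).2
  have hidx1 : ∀ (i : Fin ℓ) (v : V) (h : v ∈ CC i), vert i (idx i v) = v := by
    intro i v h
    have hex' := hmemex i v h
    have hlt : ((idx i v) : ℕ) < s i := hidxlt i v h
    simp only [hvert, dif_pos hlt]
    have : (⟨(idx i v : ℕ), hlt⟩ : Fin (s i)) = (ee i) hex'.choose := by
      apply Fin.ext
      simp only [hidx, dif_pos hex']
    rw [this, Equiv.symm_apply_apply]
    exact hex'.choose_spec
  have hidx2 : ∀ (i : Fin ℓ) (a : Fin t) (h : (a : ℕ) < s i), idx i (vert i a) = a := by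
    intro i a h
    have hmem : vert i a ∈ CC i := hvmem i a h
    have hex' := hmemex i (vert i a) hmem
    have hch : hex'.choose = (ee i).symm ⟨a, h⟩ := by
      apply Subtype.val_injective
      apply Subtype.val_injective
      rw [hex'.choose_spec]
      simp only [hvert, dif_pos h]
    apply Fin.ext
    simp only [hidx, dif_pos hex', hch, Equiv.apply_symm_apply]
  -- the signature map
  set sig : Fin ℓ → (Fin (t+1) × (Fin t → Fin t → Bool) × (Fin t → Fin (X.ncard) → Bool) ×
      (Fin t → Bool)) := fun i =>
    (⟨s i, Nat.lt_succ_of_le (ht i)⟩,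
     fun a b => decide ((a:ℕ) < s i ∧ (b:ℕ) < s i ∧ G.Adj (vert i a) (vert i b)),
     fun a b => decide ((a:ℕ) < s i ∧ G.Adj (xv b) (vert i a)),
     fun a => decide ((a:ℕ) < s i ∧ cN G (vert i a) ∈ B)) with hsig
  -- twin automorphisms from equal signatures
  have twin : ∀ i j : Fin ℓ, i ≠ j → sig i = sig j → ∃ σ : V → V,
      Function.Involutive σ ∧ (∀ a b, G.Adj (σ a) (σ b) ↔ G.Adj a b) ∧
      (∀ v ∈ CC i, σ v ∈ CC j) ∧ (∀ v ∈ CC j, σ v ∈ CC i) ∧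
      (∀ v, v ∉ CC i → v ∉ CC j → σ v = v) ∧
      (∀ v, cN G v ∈ B ↔ cN G (σ v) ∈ B) := by
    intro i j hij hsigeq
    have hseq : s i = s j := by
      have := congrArg (fun z : (Fin (t+1) × (Fin t → Fin t → Bool) ×
        (Fin t → Fin (X.ncard) → Bool) × (Fin t → Bool)) => (z.1 : ℕ)) hsigeq
      simpa [hsig] using this
    have hM : ∀ a b : Fin t,
        ((a:ℕ) < s i ∧ (b:ℕ) < s i ∧ G.Adj (vert i a) (vert i b)) ↔
        ((a:ℕ) < s j ∧ (b:ℕ) < s j ∧ G.Adj (vert j a) (vert j b)) := by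
      intro a b
      have := congrArg (fun z : (Fin (t+1) × (Fin t → Fin t → Bool) ×
        (Fin t → Fin (X.ncard) → Bool) × (Fin t → Bool)) => z.2.1 a b) hsigeq
      simp only [hsig] at this
      exact decide_eq_decide.mp this
    have hXa : ∀ (a : Fin t) (b : Fin (X.ncard)),
        ((a:ℕ) < s i ∧ G.Adj (xv b) (vert i a)) ↔
        ((a:ℕ) < s j ∧ G.Adj (xv b) (vert j a)) := by
      intro a b
      have := congrArg (fun z : (Fin (t+1) × (Fin t → Fin t → Bool) ×
        (Fin t → Fin (X.ncard) → Bool) × (Fin t → Bool)) => z.2.2.1 a b) hsigeq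
      simp only [hsig] at this
      exact decide_eq_decide.mp this
    have hBb : ∀ a : Fin t,
        ((a:ℕ) < s i ∧ cN G (vert i a) ∈ B) ↔ ((a:ℕ) < s j ∧ cN G (vert j a) ∈ B) := by
      intro a
      have := congrArg (fun z : (Fin (t+1) × (Fin t → Fin t → Bool) ×
        (Fin t → Fin (X.ncard) → Bool) × (Fin t → Bool)) => z.2.2.2 a) hsigeq
      simp only [hsig] at this
      exact decide_eq_decide.mp this
    have hdisj := hCCdisj i j hij
    set σ : V → V := fun v =>
      if v ∈ CC i then vert j (idx i v) else if v ∈ CC j then vert i (idx j v) else v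
      with hσdef
    have hfor : ∀ v ∈ CC i, σ v = vert j (idx i v) := by
      intro v hv; simp only [hσdef, if_pos hv]
    have hback : ∀ v ∈ CC j, σ v = vert i (idx j v) := by
      intro v hv
      have hvni : v ∉ CC i := fun h => Set.disjoint_left.mp hdisj h hv
      simp only [hσdef, if_neg hvni, if_pos hv]
    have hfix : ∀ v, v ∉ CC i → v ∉ CC j → σ v = v := by
      intro v h1 h2; simp only [hσdef, if_neg h1, if_neg h2]
    have hforCC : ∀ v ∈ CC i, σ v ∈ CC j := by
      intro v hv
      rw [hfor v hv]
      exact hvmem j _ (by rw [← hseq]; exact hidxlt i v hv)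
    have hbackCC : ∀ v ∈ CC j, σ v ∈ CC i := by
      intro v hv
      rw [hback v hv]
      exact hvmem i _ (by rw [hseq]; exact hidxlt j v hv)
    have hinv : Function.Involutive σ := by
      intro v
      by_cases hvi : v ∈ CC i
      · have h1 := hforCC v hvi
        rw [hback (σ v) h1]
        have h2 : idx j (σ v) = idx i v := by
          rw [hfor v hvi]
          exact hidx2 j _ (by rw [← hseq]; exact hidxlt i v hvi)
        rw [h2]
        exact hidx1 i v hvi
      · by_cases hvj : v ∈ CC j
        · have h1 := hbackCC v hvj
          rw [hfor (σ v) h1]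
          have h2 : idx i (σ v) = idx j v := by
            rw [hback v hvj]
            exact hidx2 i _ (by rw [hseq]; exact hidxlt j v hvj)
          rw [h2]
          exact hidx1 j v hvj
        · rw [hfix v hvi hvj, hfix v hvi hvj]
    -- one-directional adjacency preservation
    have hone : ∀ a b, G.Adj a b → G.Adj (σ a) (σ b) := by
      intro a b hadj
      by_cases hai : a ∈ CC i
      · rcases hCCcl i a hai b hadj with hbX | hbi
        · -- b ∈ X
          have hbni : b ∉ CC i := fun h => (hCCX i h) hbX
          have hbnj : b ∉ CC j := fun h => (hCCX j h) hbX
          rw [hfix b hbni hbnj, hfor a hai]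
          have h1 := (hXa (idx i a) (xe ⟨b, hbX⟩)).mp
            ⟨hidxlt i a hai, by rw [hxv_eq b hbX, hidx1 i a hai]; exact hadj.symm⟩
          have := h1.2
          rw [hxv_eq b hbX] at this
          exact this.symm
        · -- b ∈ CC i
          rw [hfor a hai, hfor b hbi]
          have h1 := (hM (idx i a) (idx i b)).mp
            ⟨hidxlt i a hai, hidxlt i b hbi, by rw [hidx1 i a hai, hidx1 i b hbi]; exact hadj⟩
          exact h1.2.2
      · by_cases haj : a ∈ CC j
        · rcases hCCcl j a haj b hadj with hbX | hbj
          · have hbni : b ∉ CC i := fun h => (hCCX i h) hbX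
            have hbnj : b ∉ CC j := fun h => (hCCX j h) hbX
            rw [hfix b hbni hbnj, hback a haj]
            have h1 := (hXa (idx j a) (xe ⟨b, hbX⟩)).mpr
              ⟨hidxlt j a haj, by rw [hxv_eq b hbX, hidx1 j a haj]; exact hadj.symm⟩
            have := h1.2
            rw [hxv_eq b hbX] at this
            exact this.symm
          · rw [hback a haj, hback b hbj]
            have h1 := (hM (idx j a) (idx j b)).mpr
              ⟨hidxlt j a haj, hidxlt j b hbj, by rw [hidx1 j a haj, hidx1 j b hbj]; exact hadj⟩
            exact h1.2.2
        · -- a outside both components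
          rw [hfix a hai haj]
          by_cases hbi : b ∈ CC i
          · have haX : a ∈ X := by
              rcases hCCcl i b hbi a hadj.symm with h | h
              · exact h
              · exact absurd h hai
            rw [hfor b hbi]
            have h1 := (hXa (idx i b) (xe ⟨a, haX⟩)).mp
              ⟨hidxlt i b hbi, by rw [hxv_eq a haX, hidx1 i b hbi]; exact hadj⟩
            have := h1.2
            rw [hxv_eq a haX] at this
            exact this
          · by_cases hbj : b ∈ CC j
            · have haX : a ∈ X := by
                rcases hCCcl j b hbj a hadj.symm with h | h
                · exact h
                · exact absurd h haj
              rw [hback b hbj]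
              have h1 := (hXa (idx j b) (xe ⟨a, haX⟩)).mpr
                ⟨hidxlt j b hbj, by rw [hxv_eq a haX, hidx1 j b hbj]; exact hadj⟩
              have := h1.2
              rw [hxv_eq a haX] at this
              exact this
            · rw [hfix b hbi hbj]
              exact hadj
    have hadjiff : ∀ a b, G.Adj (σ a) (σ b) ↔ G.Adj a b := by
      intro a b
      constructor
      · intro h
        have := hone (σ a) (σ b) h
        rwa [hinv a, hinv b] at this
      · exact hone a b
    have hBiff : ∀ v, cN G v ∈ B ↔ cN G (σ v) ∈ B := by
      intro v
      by_cases hvi : v ∈ CC i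
      · rw [hfor v hvi]
        constructor
        · intro hvB
          exact ((hBb (idx i v)).mp ⟨hidxlt i v hvi, by rwa [hidx1 i v hvi]⟩).2
        · intro hvB
          have := ((hBb (idx i v)).mpr ⟨by rw [← hseq]; exact hidxlt i v hvi, hvB⟩).2
          rwa [hidx1 i v hvi] at this
      · by_cases hvj : v ∈ CC j
        · rw [hback v hvj]
          constructor
          · intro hvB
            exact ((hBb (idx j v)).mpr ⟨hidxlt j v hvj, by rwa [hidx1 j v hvj]⟩).2
          · intro hvB
            have := ((hBb (idx j v)).mp ⟨by rw [hseq]; exact hidxlt j v hvj, hvB⟩).2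
            rwa [hidx1 j v hvj] at this
        · rw [hfix v hvi hvj]
    exact ⟨σ, hinv, hadjiff, hforCC, hbackCC, hfix, hBiff⟩
  -- pigeonhole
  have hcardSig : Fintype.card (Fin (t+1) × (Fin t → Fin t → Bool) ×
      (Fin t → Fin (X.ncard) → Bool) × (Fin t → Bool)) =
      (t + 1) * ((2^t)^t * ((2^(X.ncard))^t * 2^t)) := by
    simp [Fintype.card_fun]
  have hpig : Fintype.card (Fin (t+1) × (Fin t → Fin t → Bool) ×
      (Fin t → Fin (X.ncard) → Bool) × (Fin t → Bool)) *
      (t + X.ncard*X.ncard + 2*X.ncard + 1) < Fintype.card (Fin ℓ) := by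
    rw [hcardSig, Fintype.card_fin]
    calc (t + 1) * ((2^t)^t * ((2^(X.ncard))^t * 2^t)) * (t + X.ncard*X.ncard + 2*X.ncard + 1)
        ≤ (X.ncard + t) * 2 ^ ((X.ncard + t) ^ 2) * 2 ^ (2*t + X.ncard + 1) :=
          Stmt5Aux.arith5 t X.ncard ht1
      _ < ℓ := hl
  obtain ⟨ysig, hy⟩ := Fintype.exists_lt_card_fiber_of_mul_lt_card sig hpig
  have hJcard : t + X.ncard*X.ncard + 2*X.ncard + 1 <
      (Finset.univ.filter (fun i => sig i = ysig)).card := hy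
  set J : Finset (Fin ℓ) := Finset.univ.filter (fun i => sig i = ysig) with hJdef
  have hJsig : ∀ i ∈ J, ∀ j ∈ J, sig i = sig j := by
    intro i hi j hj
    rw [(Finset.mem_filter.mp hi).2, (Finset.mem_filter.mp hj).2]
  have hCCdX : ∀ i, Disjoint (CC i) X := by
    intro i
    rw [Set.disjoint_left]
    intro a ha hax
    exact (hCCX i ha) hax
  have hCCcard : ∀ i, (CC i).ncard ≤ t := by
    intro i
    rw [hCC]
    rw [Set.ncard_image_of_injective _ Subtype.val_injective]
    exact ht i
  -- applying `left` for any p ∈ J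
  have hLeft : ∀ p ∈ J, HasPosNCTM (G.induce (CC p)ᶜ) (restrictB G B (CC p)) k →
      HasPosNCTM G B k := by
    intro p hp
    have hEcard : t + X.ncard*X.ncard + 2*X.ncard + 1 ≤ (J.erase p).card := by
      rw [Finset.card_erase_of_mem hp]
      omega
    set en := (J.erase p).equivFin with hen
    have htw : ∀ q : Fin (J.erase p).card, ∃ σ : V → V,
        Function.Involutive σ ∧ (∀ a b, G.Adj (σ a) (σ b) ↔ G.Adj a b) ∧
        (∀ v ∈ CC p, σ v ∈ CC ↑(en.symm q)) ∧ (∀ v ∈ CC ↑(en.symm q), σ v ∈ CC p) ∧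
        (∀ v, v ∉ CC p → v ∉ CC ↑(en.symm q) → σ v = v) ∧
        (∀ v, cN G v ∈ B ↔ cN G (σ v) ∈ B) := by
      intro q
      have hq : ((en.symm q : ↥(J.erase p)) : Fin ℓ) ∈ J.erase p := (en.symm q).2
      exact twin p _ (Ne.symm (Finset.ne_of_mem_erase hq))
        (hJsig p hp _ (Finset.mem_of_mem_erase hq))
    choose σs hσ1 hσ2 hσ3 hσ4 hσ5 hσ6 using htw
    refine Stmt5Aux.left B hB k X (CC p) (J.erase p).card
      (fun q => CC ↑(en.symm q)) σs (hCCX p) (hCCcl p) (fun q => hCCcl _)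
      ?_ ?_ ?_ hσ2 hσ1 hσ3 hσ4 hσ5 hσ6 ?_ ?_
    · intro q
      exact hCCdisj _ p (Finset.ne_of_mem_erase (en.symm q).2)
    · intro q
      exact hCCdX _
    · intro q q' hqq'
      refine hCCdisj _ _ (fun h => hqq' ?_)
      exact en.symm.injective (Subtype.val_injective h)
    · have := hCCcard p
      omega
    · omega
  by_cases hL : HasPosNCTM G B k
  · set enJ := J.equivFin with henJ
    have hR := Stmt5Aux.right B k X J.card (fun q => CC ↑(enJ.symm q))
      (fun q => hCCcl _) (fun q => hCCdX _) ?_ ?_ hL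
    · obtain ⟨q, hq⟩ := hR
      exact ⟨↑(enJ.symm q), ⟨fun _ => hq, fun _ => hL⟩⟩
    · intro q q' hqq'
      refine hCCdisj _ _ (fun h => hqq' ?_)
      exact enJ.symm.injective (Subtype.val_injective h)
    · omega
  · have hJne : J.Nonempty := Finset.card_pos.mp (by omega)
    obtain ⟨p, hp⟩ := hJne
    exact ⟨p, ⟨fun h => absurd h hL, fun hR => absurd (hLeft p hp hR) hL⟩⟩
end

section
/- Let G be a finite simple graph and X ⊆ V(G) a vertex cover of G. Then for every set B of closed neighborhoods of G, NCTD(B) ≤ 2^{|X|+1} + |X|. -/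
open Set

namespace NCTMAux

attribute [local instance] Classical.propDecidable

variable {V : Type*} (G : SimpleGraph V) (X : Set V)

lemma mem_cN {a b : V} : a ∈ cN G b ↔ a = b ∨ G.Adj b a := by
  simp [cN]

/-- the trace of the closed neighborhood on `X` -/
def fX (w : V) : Set V := cN G w ∩ X

/-- the class of vertices outside `X` with given trace -/
def CC (Y : Set V) : Set V := {w | w ∉ X ∧ fX G X w = Y}

noncomputable def rr1 (w : V) : V :=
  if h : (CC G X (fX G X w)).Nonempty then h.some else w

noncomputable def rr2 (w : V) : V :=
  if h : (CC G X (fX G X w) \ {rr1 G X w}).Nonempty then h.some else rr1 G X w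

def FF : Set V := {r | r ∉ X ∧ (rr1 G X r = r ∨ rr2 G X r = r)}

noncomputable def TT (S : Set V) : Set V :=
  (S ∩ X) ∪ ((FF G X ∪ {w | S \ X = {w}}) ∩ (S \ X))

variable {G X}

lemma some_eq {s t : Set V} (h : s = t) (h1 : s.Nonempty) (h2 : t.Nonempty) :
    h1.some = h2.some := by subst h; rfl

lemma mem_CC_self {w : V} (hw : w ∉ X) : w ∈ CC G X (fX G X w) := ⟨hw, rfl⟩

lemma rr1_mem {w : V} (hw : w ∉ X) : rr1 G X w ∈ CC G X (fX G X w) := by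
  rw [rr1, dif_pos ⟨w, mem_CC_self hw⟩]
  exact Set.Nonempty.some_mem _

lemma rr1_congr {w w' : V} (hw : w ∉ X) (hw' : w' ∉ X) (hf : fX G X w = fX G X w') :
    rr1 G X w = rr1 G X w' := by
  rw [rr1, rr1, dif_pos ⟨w, mem_CC_self hw⟩, dif_pos ⟨w', mem_CC_self hw'⟩]
  exact some_eq (by rw [hf]) _ _

lemma dite_some_congr {s t : Set V} {a b : V} (hst : s = t) (hab : a = b) :
    (if h : s.Nonempty then h.some else a) = (if h : t.Nonempty then h.some else b) := by
  subst hst; subst hab; rfl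

lemma rr2_congr {w w' : V} (hw : w ∉ X) (hw' : w' ∉ X) (hf : fX G X w = fX G X w') :
    rr2 G X w = rr2 G X w' := by
  have h1 : rr1 G X w = rr1 G X w' := rr1_congr hw hw' hf
  rw [rr2, rr2]
  exact dite_some_congr (by rw [hf, h1]) h1

lemma rr2_mem {w : V} (hw : w ∉ X) : rr2 G X w ∈ CC G X (fX G X w) := by
  rw [rr2]
  split
  · next h => exact (h.some_mem).1
  · exact rr1_mem hw

lemma rr2_ne {w : V} (h : (CC G X (fX G X w) \ {rr1 G X w}).Nonempty) :
    rr2 G X w ≠ rr1 G X w := by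
  rw [rr2, dif_pos h]
  exact h.some_mem.2

lemma rr1_mem_FF {w : V} (hw : w ∉ X) : rr1 G X w ∈ FF G X := by
  obtain ⟨h1, h2⟩ := rr1_mem (G := G) (X := X) hw
  exact ⟨h1, Or.inl (rr1_congr h1 hw h2)⟩

lemma rr2_mem_FF {w : V} (hw : w ∉ X) : rr2 G X w ∈ FF G X := by
  obtain ⟨h1, h2⟩ := rr2_mem (G := G) (X := X) hw
  exact ⟨h1, Or.inr (rr2_congr h1 hw h2)⟩

lemma cN_diff {u : V} (hX : ∀ u v : V, G.Adj u v → u ∈ X ∨ v ∈ X) (hu : u ∉ X) :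
    cN G u \ X = {u} := by
  ext a
  simp only [Set.mem_diff, mem_cN, Set.mem_singleton_iff]
  constructor
  · rintro ⟨ha | ha, haX⟩
    · exact ha
    · exact absurd ((hX u a ha).resolve_left hu) haX
  · rintro rfl; exact ⟨Or.inl rfl, hu⟩

/-- Key lemma: a one-sided witness can be found in the teaching set of `cN u`. -/
lemma key {u v w : V} (hX : ∀ u v : V, G.Adj u v → u ∈ X ∨ v ∈ X)
    (hXeq : cN G u ∩ X = cN G v ∩ X) (hw1 : w ∈ cN G u) (hw2 : w ∉ cN G v) :
    ∃ r ∈ TT G X (cN G u), r ∈ cN G u ∧ r ∉ cN G v := by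
  have hwX : w ∉ X := by
    intro h
    exact hw2 ((hXeq ▸ (⟨hw1, h⟩ : w ∈ cN G u ∩ X)) : w ∈ cN G v ∩ X).1
  by_cases hu : u ∈ X
  · -- u ∈ X : use a canonical representative of the class of w
    have hwu : w ≠ u := fun h => hwX (h ▸ hu)
    have hadj : G.Adj u w := ((mem_cN G).1 hw1).resolve_left hwu
    have hufw : u ∈ fX G X w := ⟨(mem_cN G).2 (Or.inr hadj.symm), hu⟩
    have claim1 : ∀ r ∈ CC G X (fX G X w), r ∈ cN G u := by
      rintro r ⟨hrX, hfr⟩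
      have : u ∈ fX G X r := hfr ▸ hufw
      obtain ⟨hucr, -⟩ := this
      rcases (mem_cN G).1 hucr with h | h
      · exact absurd (h ▸ hu) hrX
      · exact (mem_cN G).2 (Or.inr h.symm)
    have claim2 : ∀ r ∈ CC G X (fX G X w), v ∈ X → r ∉ cN G v := by
      rintro r ⟨hrX, hfr⟩ hv hrv
      rcases (mem_cN G).1 hrv with h | h
      · exact hrX (h ▸ hv)
      · -- v ∈ fX r = fX w, hence w ∈ cN v : contradiction
        have : v ∈ fX G X r := ⟨(mem_cN G).2 (Or.inr h.symm), hv⟩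
        rw [hfr] at this
        obtain ⟨hvcw, -⟩ := this
        rcases (mem_cN G).1 hvcw with h' | h'
        · exact hwX (h' ▸ hv)
        · exact hw2 ((mem_cN G).2 (Or.inr h'.symm))
    by_cases hv : v ∈ X
    · refine ⟨rr1 G X w, ?_, claim1 _ (rr1_mem hwX), claim2 _ (rr1_mem hwX) hv⟩
      have h1 := rr1_mem (G := G) (X := X) hwX
      exact Or.inr ⟨Or.inl (rr1_mem_FF hwX), claim1 _ h1, h1.1⟩
    · -- v ∉ X : for r ∉ X, r ∈ cN v ↔ r = v
      have hcv : cN G v \ X = {v} := cN_diff hX hv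
      have claim3 : ∀ r ∈ CC G X (fX G X w), r ≠ v → r ∉ cN G v := by
        rintro r ⟨hrX, -⟩ hne hrv
        have : r ∈ cN G v \ X := ⟨hrv, hrX⟩
        rw [hcv] at this
        exact hne this
      by_cases hrv : rr1 G X w = v
      · -- take the second representative
        have hwv : w ≠ v := by
          rintro rfl
          exact hw2 ((mem_cN G).2 (Or.inl rfl))
        have hne : (CC G X (fX G X w) \ {rr1 G X w}).Nonempty :=
          ⟨w, mem_CC_self hwX, by simp [hrv, hwv]⟩
        have h2 := rr2_mem (G := G) (X := X) hwX
        refine ⟨rr2 G X w, ?_, claim1 _ h2, claim3 _ h2 (by rw [← hrv] at *; exact rr2_ne hne)⟩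
        exact Or.inr ⟨Or.inl (rr2_mem_FF hwX), claim1 _ h2, h2.1⟩
      · have h1 := rr1_mem (G := G) (X := X) hwX
        refine ⟨rr1 G X w, ?_, claim1 _ h1, claim3 _ h1 hrv⟩
        exact Or.inr ⟨Or.inl (rr1_mem_FF hwX), claim1 _ h1, h1.1⟩
  · -- u ∉ X : then w = u, and u is in the teaching set by the singleton clause
    have hcu : cN G u \ X = {u} := cN_diff hX hu
    have hwu : w = u := by
      have : w ∈ cN G u \ X := ⟨hw1, hwX⟩
      rw [hcu] at this
      exact this
    subst hwu
    refine ⟨w, Or.inr ⟨Or.inr hcu, hcu ▸ rfl⟩, hw1, hw2⟩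

end NCTMAux

/-- If `X` is a vertex cover of `G`, then for every set `B` of closed neighborhoods of
`G` we have `NCTD(B) ≤ 2^{|X|+1} + |X|`, i.e. there is a non-clashing teaching map of
size at most `2^{|X|+1} + |X|` for `B`. -/
theorem stmt6 {V : Type*} [Fintype V] (G : SimpleGraph V)
    (X : Set V) (hX : ∀ u v : V, G.Adj u v → u ∈ X ∨ v ∈ X)
    (B : Set (Set V)) (hB : B ⊆ {S | ∃ v : V, S = cN G v}) :
    ∃ T : Set V → Set V,
      IsNCTM G B T ∧ ∀ S ∈ B, (T S).ncard ≤ 2 ^ (X.ncard + 1) + X.ncard := by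
  classical
  open NCTMAux in
  refine ⟨TT G X, ?_, ?_⟩
  · intro u v hu hv hne
    by_cases hXeq : cN G u ∩ X = cN G v ∩ X
    · -- difference is outside X
      have : ¬ (cN G u ⊆ cN G v) ∨ ¬ (cN G v ⊆ cN G u) := by
        by_contra h
        push_neg at h
        exact hne (Set.Subset.antisymm h.1 h.2)
      rcases this with h | h
      · obtain ⟨w, hw1, hw2⟩ := Set.not_subset.1 h
        obtain ⟨r, hrT, hr1, hr2⟩ := NCTMAux.key hX hXeq hw1 hw2
        exact ⟨r, Or.inl hrT, Or.inl ⟨hr1, hr2⟩⟩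
      · obtain ⟨w, hw1, hw2⟩ := Set.not_subset.1 h
        obtain ⟨r, hrT, hr1, hr2⟩ := NCTMAux.key hX hXeq.symm hw1 hw2
        exact ⟨r, Or.inr hrT, Or.inr ⟨hr1, hr2⟩⟩
    · -- difference inside X : use the first component of T
      have : ¬ (cN G u ∩ X ⊆ cN G v ∩ X) ∨ ¬ (cN G v ∩ X ⊆ cN G u ∩ X) := by
        by_contra h
        push_neg at h
        exact hXeq (Set.Subset.antisymm h.1 h.2)
      rcases this with h | h
      · obtain ⟨w, hw1, hw2⟩ := Set.not_subset.1 h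
        refine ⟨w, Or.inl (Or.inl hw1), Or.inl ⟨hw1.1, fun hc => hw2 ⟨hc, hw1.2⟩⟩⟩
      · obtain ⟨w, hw1, hw2⟩ := Set.not_subset.1 h
        refine ⟨w, Or.inr (Or.inl hw1), Or.inr ⟨hw1.1, fun hc => hw2 ⟨hc, hw1.2⟩⟩⟩
  · -- size bound
    intro S hS
    have hXfin : X.Finite := Set.toFinite X
    have hF : (NCTMAux.FF G X).ncard ≤ 2 ^ (X.ncard + 1) := by
      set F1 : Set V := {r | r ∉ X ∧ NCTMAux.rr1 G X r = r} with hF1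
      set F2 : Set V := {r | r ∉ X ∧ NCTMAux.rr2 G X r = r} with hF2
      have hsub : NCTMAux.FF G X ⊆ F1 ∪ F2 := by
        rintro r ⟨hrX, h | h⟩
        · exact Or.inl ⟨hrX, h⟩
        · exact Or.inr ⟨hrX, h⟩
      have hpow : ∀ F : Set V, (∀ r ∈ F, r ∉ X) →
          (Set.InjOn (NCTMAux.fX G X) F) → F.ncard ≤ 2 ^ X.ncard := by
        intro F hFX hinj
        have h1 : F.ncard ≤ (↑(hXfin.toFinset.powerset) : Set (Finset V)).ncard := by
          apply Set.ncard_le_ncard_of_injOn (fun r => (NCTMAux.fX G X r).toFinset)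
          · intro r hr
            simp only [Finset.coe_powerset, Set.mem_preimage, Set.mem_powerset_iff,
              Finset.mem_coe, Finset.mem_powerset]
            intro a ha
            simp only [Finset.mem_coe, Set.mem_toFinset] at ha
            simp only [Finset.mem_coe, Set.Finite.mem_toFinset]
            exact ha.2
          · intro a ha b hb hab
            apply hinj ha hb
            have := congrArg (fun s : Finset V => (↑s : Set V)) hab
            simpa using this
        calc F.ncard ≤ _ := h1
          _ = 2 ^ X.ncard := by
            rw [Set.ncard_coe_finset, Finset.card_powerset]
            congr 1
            exact (Set.ncard_eq_toFinset_card X hXfin).symm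
      have e1 : F1.ncard ≤ 2 ^ X.ncard := by
        apply hpow
        · exact fun r hr => hr.1
        · intro a ha b hb hab
          rw [← ha.2, ← hb.2]
          exact NCTMAux.rr1_congr ha.1 hb.1 hab
      have e2 : F2.ncard ≤ 2 ^ X.ncard := by
        apply hpow
        · exact fun r hr => hr.1
        · intro a ha b hb hab
          rw [← ha.2, ← hb.2]
          exact NCTMAux.rr2_congr ha.1 hb.1 hab
      calc (NCTMAux.FF G X).ncard ≤ (F1 ∪ F2).ncard := Set.ncard_le_ncard hsub (Set.toFinite _)
        _ ≤ F1.ncard + F2.ncard := Set.ncard_union_le _ _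
        _ ≤ 2 ^ X.ncard + 2 ^ X.ncard := Nat.add_le_add e1 e2
        _ = 2 ^ (X.ncard + 1) := by ring
    have h2nd : ((NCTMAux.FF G X ∪ {w | S \ X = {w}}) ∩ (S \ X)).ncard ≤ 2 ^ (X.ncard + 1) := by
      by_cases hsing : ∃ z, S \ X = {z}
      · obtain ⟨z, hz⟩ := hsing
        have : ((NCTMAux.FF G X ∪ {w | S \ X = {w}}) ∩ (S \ X)) ⊆ {z} := by
          rw [hz]; exact Set.inter_subset_right
        calc _ ≤ ({z} : Set V).ncard := Set.ncard_le_ncard this (Set.toFinite _)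
          _ = 1 := Set.ncard_singleton z
          _ ≤ 2 ^ (X.ncard + 1) := Nat.one_le_two_pow
      · have : ((NCTMAux.FF G X ∪ {w | S \ X = {w}}) ∩ (S \ X)) ⊆ NCTMAux.FF G X := by
          rintro r ⟨hr1 | hr1, hr2⟩
          · exact hr1
          · exact absurd ⟨r, hr1⟩ hsing
        exact le_trans (Set.ncard_le_ncard this (Set.toFinite _)) hF
    calc (NCTMAux.TT G X S).ncard
        ≤ (S ∩ X).ncard + ((NCTMAux.FF G X ∪ {w | S \ X = {w}}) ∩ (S \ X)).ncard :=
          Set.ncard_union_le _ _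
      _ ≤ X.ncard + 2 ^ (X.ncard + 1) :=
          Nat.add_le_add (Set.ncard_le_ncard Set.inter_subset_right hXfin) h2nd
      _ = 2 ^ (X.ncard + 1) + X.ncard := Nat.add_comm _ _
end

section
/- Let G be a finite simple graph with a vertex cover X, let I = V(G) ∖ X, let Q be an equivalence class of I with respect to X, let u₁,…,u_ℓ ∈ Q be pairwise false twins with N[u₁],…,N[u_ℓ] ∈ B, let T be a non-clashing teaching map of size at most k for B, and let q = 2^{2^{|X|}+|X|} + 1. If there are at least q distinct indices p ∈ [ℓ] with u_p ∈ T(N[u_p]), then there exist distinct i, j ∈ [ℓ] such that: u_i ∈ T(N[u_i]), u_j ∈ T(N[u_j]), T(N[u_i]) ∩ X = T(N[u_j]) ∩ X, T(N[u_i]) ∩ (Q ∖ {u_i}) = ∅ if and only if T(N[u_j]) ∩ (Q ∖ {u_j}) = ∅, and for every equivalence class S ≠ Q of I with respect to X, T(N[u_i]) ∩ S = ∅ if and only if T(N[u_j]) ∩ S = ∅. -/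
/-- The equivalence class of `u ∈ I = V(G) ∖ X` with respect to `X`: all vertices of `I`
that are false twins of `u` (have the same open neighborhood), together with `u` itself. -/
def eqCl {V : Type*} (G : SimpleGraph V) (X : Set V) (u : V) : Set V :=
  {w | w ∉ X ∧ G.neighborSet w = G.neighborSet u}

/-- Let `X` be a vertex cover of `G`, `Q = eqCl G X u₀` an equivalence class of
`I = V(G) ∖ X`, `u 0, …, u (ℓ-1) ∈ Q` pairwise false twins with `N[u p] ∈ B`, `T` an NCTM
of size at most `k` for `B`, and `q = 2^{2^{|X|}+|X|} + 1`.  If at least `q` indices `p`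
satisfy `u p ∈ T(N[u p])`, then there are distinct `i, j` with `u i ∈ T(N[u i])`,
`u j ∈ T(N[u j])`, `T(N[u i]) ∩ X = T(N[u j]) ∩ X`,
`T(N[u i]) ∩ (Q ∖ {u i}) = ∅ ↔ T(N[u j]) ∩ (Q ∖ {u j}) = ∅`, and for every equivalence
class `S ≠ Q` of `I`, `T(N[u i]) ∩ S = ∅ ↔ T(N[u j]) ∩ S = ∅`. -/
theorem stmt7 {V : Type*} [Fintype V] (G : SimpleGraph V)
    (X : Set V) (hX : ∀ u v : V, G.Adj u v → u ∈ X ∨ v ∈ X)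
    (B : Set (Set V)) (hB : B ⊆ {S | ∃ v : V, S = cN G v})
    (u₀ : V) (hu₀ : u₀ ∉ X)
    (ℓ k : ℕ) (u : Fin ℓ → V) (hinj : Function.Injective u)
    (huQ : ∀ p : Fin ℓ, u p ∈ eqCl G X u₀)
    (hmem : ∀ p : Fin ℓ, cN G (u p) ∈ B)
    (T : Set V → Set V) (hnc : IsNCTM G B T)
    (hsize : ∀ S ∈ B, (T S).ncard ≤ k)
    (hq : ∃ s : Finset (Fin ℓ), 2 ^ (2 ^ X.ncard + X.ncard) + 1 ≤ s.card ∧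
      ∀ p ∈ s, u p ∈ T (cN G (u p))) :
    ∃ i j : Fin ℓ, i ≠ j ∧
      u i ∈ T (cN G (u i)) ∧ u j ∈ T (cN G (u j)) ∧
      T (cN G (u i)) ∩ X = T (cN G (u j)) ∩ X ∧
      (T (cN G (u i)) ∩ (eqCl G X u₀ \ {u i}) = ∅ ↔
        T (cN G (u j)) ∩ (eqCl G X u₀ \ {u j}) = ∅) ∧
      ∀ w : V, w ∉ X → eqCl G X w ≠ eqCl G X u₀ →
        (T (cN G (u i)) ∩ eqCl G X w = ∅ ↔ T (cN G (u j)) ∩ eqCl G X w = ∅) := by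

  classical
  obtain ⟨s, hscard, hsmem⟩ := hq
  haveI : Fintype ↥X := X.toFinite.fintype
  have hNX : ∀ v : V, v ∉ X → G.neighborSet v ⊆ X := by
    intro v hv w hw
    rcases hX v w hw with h | h
    · exact absurd h hv
    · exact h
  set Cls : (↥X → Bool) → Set V :=
    fun f => {v | v ∉ X ∧ G.neighborSet v = Subtype.val '' {x : ↥X | f x = true}} with hCls
  have hClsEq : ∀ w : V, w ∉ X →
      Cls (fun x => decide ((x : V) ∈ G.neighborSet w)) = eqCl G X w := by
    intro w hw
    have himg : Subtype.val ''
        {x : ↥X | (decide ((x : V) ∈ G.neighborSet w)) = true} = G.neighborSet w := by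
      ext v
      simp only [Set.mem_image, Set.mem_setOf_eq, decide_eq_true_eq]
      constructor
      · rintro ⟨x, hx, rfl⟩; exact hx
      · intro hv; exact ⟨⟨v, hNX w hw hv⟩, hv, rfl⟩
    simp only [hCls, eqCl, himg]
  set σ : Fin ℓ → ((↥X → Bool) × ((↥X → Bool) → Bool)) :=
    fun p => (fun x => decide ((x : V) ∈ T (cN G (u p))),
      fun f => decide (T (cN G (u p)) ∩ (Cls f \ {u p}) = ∅)) with hσ
  have hcard : (Finset.univ : Finset ((↥X → Bool) × ((↥X → Bool) → Bool))).card < s.card := by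
    have h1 : Fintype.card ↥X = X.ncard := by
      rw [← Nat.card_coe_set_eq, Nat.card_eq_fintype_card]
    have h2 : (Finset.univ : Finset ((↥X → Bool) × ((↥X → Bool) → Bool))).card
        = 2 ^ (2 ^ X.ncard + X.ncard) := by
      simp [Finset.card_univ, Fintype.card_fun, h1, pow_add, Nat.mul_comm]
    rw [h2]
    exact lt_of_lt_of_le (Nat.lt_succ_self _) hscard
  obtain ⟨i, hi, j, hj, hij, hσij⟩ :=
    Finset.exists_ne_map_eq_of_card_lt_of_maps_to hcard
      (fun p _ => Finset.mem_univ (σ p))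
  have h1 := congrArg Prod.fst hσij
  have h2 := congrArg Prod.snd hσij
  simp only [hσ] at h1 h2
  refine ⟨i, j, hij, hsmem i hi, hsmem j hj, ?_, ?_, ?_⟩
  · ext v
    simp only [Set.mem_inter_iff]
    constructor
    · rintro ⟨hT, hvX⟩
      have := congrFun h1 ⟨v, hvX⟩
      rw [decide_eq_decide] at this
      exact ⟨this.mp hT, hvX⟩
    · rintro ⟨hT, hvX⟩
      have := congrFun h1 ⟨v, hvX⟩
      rw [decide_eq_decide] at this
      exact ⟨this.mpr hT, hvX⟩
  · have h2f := congrFun h2 (fun x => decide ((x : V) ∈ G.neighborSet u₀))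
    rw [decide_eq_decide, hClsEq u₀ hu₀] at h2f
    exact h2f
  · intro w hw hne
    have h2w := congrFun h2 (fun x => decide ((x : V) ∈ G.neighborSet w))
    rw [decide_eq_decide, hClsEq w hw] at h2w
    have hnotin : ∀ p : Fin ℓ, u p ∉ eqCl G X w := by
      intro p hp
      apply hne
      have hNw : G.neighborSet w = G.neighborSet u₀ := by
        rw [← hp.2]; exact (huQ p).2
      simp only [eqCl, hNw]
    rw [Set.diff_singleton_eq_self (hnotin i), Set.diff_singleton_eq_self (hnotin j)] at h2w
    exact h2w
end

section
/- Let G be a finite simple graph with a vertex cover X, let I = V(G) ∖ X, let u₁,…,u_ℓ ∈ I be pairwise false twins with N[u₁],…,N[u_ℓ] ∈ B, let T be a non-clashing teaching map of size at most k for B, and let q be a positive integer. If ℓ > q + 2k, then there are at least q distinct indices p ∈ [ℓ] such that u_p ∈ T(N[u_p]). -/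
/-- Let `X` be a vertex cover of `G`, `u 0, …, u (ℓ-1) ∈ I = V(G) ∖ X` pairwise false
twins with `N[u p] ∈ B`, `T` an NCTM of size at most `k` for `B`, and `q` a positive
integer.  If `ℓ > q + 2k`, then there are at least `q` distinct indices `p` with
`u p ∈ T(N[u p])`. -/
theorem stmt8 {V : Type*} [Fintype V] (G : SimpleGraph V)
    (X : Set V) (hX : ∀ u v : V, G.Adj u v → u ∈ X ∨ v ∈ X)
    (B : Set (Set V)) (hB : B ⊆ {S | ∃ v : V, S = cN G v})
    (ℓ k q : ℕ) (hq : 0 < q)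
    (u : Fin ℓ → V) (hinj : Function.Injective u)
    (huI : ∀ p : Fin ℓ, u p ∉ X)
    (htwin : ∀ p r : Fin ℓ, G.neighborSet (u p) = G.neighborSet (u r))
    (hmem : ∀ p : Fin ℓ, cN G (u p) ∈ B)
    (T : Set V → Set V) (hnc : IsNCTM G B T)
    (hsize : ∀ S ∈ B, (T S).ncard ≤ k)
    (hl : q + 2 * k < ℓ) :
    ∃ s : Finset (Fin ℓ), q ≤ s.card ∧ ∀ p ∈ s, u p ∈ T (cN G (u p)) := by
  classical
  set good : Finset (Fin ℓ) := Finset.univ.filter (fun p => u p ∈ T (cN G (u p))) with hgood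
  refine ⟨good, ?_, ?_⟩
  swap
  · intro p hp
    simp only [hgood, Finset.mem_filter] at hp
    exact hp.2
  set bad : Finset (Fin ℓ) := Finset.univ.filter (fun p => ¬ u p ∈ T (cN G (u p))) with hbad
  have hsum : good.card + bad.card = ℓ := by
    rw [hgood, hbad, Finset.card_filter_add_card_filter_not, Finset.card_univ,
      Fintype.card_fin]
  have hnotadj : ∀ p r : Fin ℓ, ¬ G.Adj (u p) (u r) := by
    intro p r h
    rcases hX _ _ h with h1 | h1
    exacts [huI p h1, huI r h1]
  have hne : ∀ p r : Fin ℓ, p ≠ r → cN G (u p) ≠ cN G (u r) := by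
    intro p r hpr h
    have hm : u p ∈ cN G (u r) := h ▸ (Set.mem_insert _ _)
    rcases Set.mem_insert_iff.mp hm with h1 | h1
    · exact hpr (hinj h1)
    · exact hnotadj r p h1
  have hkey : ∀ p r : Fin ℓ, p ≠ r → p ∈ bad → r ∈ bad →
      u p ∈ T (cN G (u r)) ∨ u r ∈ T (cN G (u p)) := by
    intro p r hpr hp hr
    simp only [hbad, Finset.mem_filter] at hp hr
    obtain ⟨w, hw, hdist⟩ := hnc (u p) (u r) (hmem p) (hmem r) (hne p r hpr)
    have hNs : {x | G.Adj (u p) x} = {x | G.Adj (u r) x} := htwin p r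
    have hw' : w = u p ∨ w = u r := by
      rcases hdist with ⟨h1, h2⟩ | ⟨h1, h2⟩
      · rcases Set.mem_insert_iff.mp h1 with h3 | h3
        · exact Or.inl h3
        · exact absurd (Set.mem_insert_iff.mpr (Or.inr (hNs ▸ h3))) h2
      · rcases Set.mem_insert_iff.mp h1 with h3 | h3
        · exact Or.inr h3
        · exact absurd (Set.mem_insert_iff.mpr (Or.inr (hNs ▸ h3))) h2
    rcases hw' with rfl | rfl
    · rcases hw with h | h
      · exact absurd h hp.2
      · exact Or.inl h
    · rcases hw with h | h
      · exact Or.inr h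
      · exact absurd h hr.2
  set P : Finset (Fin ℓ × Fin ℓ) :=
    (bad ×ˢ bad).filter (fun z => z.1 ≠ z.2 ∧ u z.1 ∈ T (cN G (u z.2))) with hP
  have hcover : bad.offDiag ⊆ P ∪ P.image Prod.swap := by
    rintro ⟨a, b⟩ hz
    simp only [Finset.mem_offDiag] at hz
    obtain ⟨h1, h2, h3⟩ := hz
    rcases hkey a b h3 h1 h2 with h | h
    · exact Finset.mem_union_left _ (by
        simp only [hP, Finset.mem_filter, Finset.mem_product]
        exact ⟨⟨h1, h2⟩, h3, h⟩)
    · refine Finset.mem_union_right _ (Finset.mem_image.mpr ⟨(b, a), ?_, rfl⟩)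
      simp only [hP, Finset.mem_filter, Finset.mem_product]
      exact ⟨⟨h2, h1⟩, Ne.symm h3, h⟩
  have hcard1 : bad.offDiag.card ≤ 2 * P.card := by
    calc bad.offDiag.card ≤ (P ∪ P.image Prod.swap).card := Finset.card_le_card hcover
    _ ≤ P.card + (P.image Prod.swap).card := Finset.card_union_le _ _
    _ ≤ P.card + P.card := by
        exact Nat.add_le_add_left (Finset.card_image_le) _
    _ = 2 * P.card := (two_mul _).symm
  have hcard2 : P.card ≤ bad.card * k := by
    have hmap : ∀ z ∈ P, Prod.snd z ∈ bad := by
      intro z hz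
      simp only [hP, Finset.mem_filter, Finset.mem_product] at hz
      exact hz.1.2
    rw [Finset.card_eq_sum_card_fiberwise hmap]
    have hfiber : ∀ r ∈ bad, (P.filter (fun z => z.2 = r)).card ≤ k := by
      intro r _
      have hfin : (T (cN G (u r))).Finite := Set.toFinite _
      have : (P.filter (fun z => z.2 = r)).card ≤ hfin.toFinset.card := by
        apply Finset.card_le_card_of_injOn (fun z => u z.1)
        · intro z hz
          simp only [hP, Finset.mem_coe, Finset.mem_filter, Finset.mem_product] at hz
          rw [Finset.mem_coe, Set.Finite.mem_toFinset]
          rw [hz.2] at hz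
          exact hz.1.2.2
        · intro z1 hz1 z2 hz2 he
          simp only [hP, Finset.coe_filter, Set.mem_setOf_eq] at hz1 hz2
          exact Prod.ext (hinj he) (hz1.2.trans hz2.2.symm)
      rw [Set.Finite.card_toFinset] at this
      refine this.trans ?_
      rw [← Set.toFinset_card, ← Set.ncard_eq_toFinset_card']
      exact hsize _ (hmem r)
    calc ∑ r ∈ bad, (P.filter (fun z => z.2 = r)).card ≤ ∑ r ∈ bad, k :=
      Finset.sum_le_sum hfiber
    _ = bad.card * k := by rw [Finset.sum_const, smul_eq_mul]
  have hoff : bad.offDiag.card = bad.card * bad.card - bad.card := Finset.offDiag_card _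
  have hbadle : bad.card ≤ 2 * k + 1 := by
    by_contra hcon
    push_neg at hcon
    have hm1 : 2 * k + 2 ≤ bad.card := hcon
    have h1 : bad.card * (bad.card - 1) ≤ bad.card * (2 * k) := by
      have : bad.card * bad.card - bad.card = bad.card * (bad.card - 1) := by
        rw [Nat.mul_sub_one, Nat.mul_comm]
      rw [← this, ← hoff]
      calc bad.offDiag.card ≤ 2 * P.card := hcard1
      _ ≤ 2 * (bad.card * k) := by exact Nat.mul_le_mul_left 2 hcard2
      _ = bad.card * (2 * k) := by ring
    have h2 : bad.card - 1 ≤ 2 * k := Nat.le_of_mul_le_mul_left h1 (by omega)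
    omega
  omega
end

section
/- Let G be a finite simple graph with a vertex cover X, let I = V(G) ∖ X, let Q be an equivalence class of I with respect to X, let u₁,…,u_ℓ ∈ Q be pairwise false twins with N[u₁],…,N[u_ℓ] ∈ B, let k ≤ 2^{2|X|+1} + |X|, and let q = 2^{2^{|X|}+|X|} + 1. For every non-clashing teaching map T of size at most k for B, if ℓ > q + 2k, then there exist distinct i, j ∈ [ℓ] such that: u_i ∈ T(N[u_i]), u_j ∈ T(N[u_j]), T(N[u_i]) ∩ X = T(N[u_j]) ∩ X, T(N[u_i]) ∩ (Q ∖ {u_i}) = ∅ if and only if T(N[u_j]) ∩ (Q ∖ {u_j}) = ∅, and for every equivalence class S ≠ Q of I with respect to X, T(N[u_i]) ∩ S = ∅ if and only if T(N[u_j]) ∩ S = ∅. -/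
/-- Let `X` be a vertex cover of `G`, `Q = eqCl G X u₀` an equivalence class of
`I = V(G) ∖ X`, `u 0, …, u (ℓ-1) ∈ Q` pairwise false twins with `N[u p] ∈ B`,
`k ≤ 2^{2|X|+1} + |X|`, and `q = 2^{2^{|X|}+|X|} + 1`.  For every NCTM `T` of size at
most `k` for `B`, if `ℓ > q + 2k`, then there are distinct `i, j` with
`u i ∈ T(N[u i])`, `u j ∈ T(N[u j])`, `T(N[u i]) ∩ X = T(N[u j]) ∩ X`,
`T(N[u i]) ∩ (Q ∖ {u i}) = ∅ ↔ T(N[u j]) ∩ (Q ∖ {u j}) = ∅`, and for every equivalence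
class `S ≠ Q` of `I`, `T(N[u i]) ∩ S = ∅ ↔ T(N[u j]) ∩ S = ∅`. -/
theorem stmt9 {V : Type*} [Fintype V] (G : SimpleGraph V)
    (X : Set V) (hX : ∀ u v : V, G.Adj u v → u ∈ X ∨ v ∈ X)
    (B : Set (Set V)) (hB : B ⊆ {S | ∃ v : V, S = cN G v})
    (u₀ : V) (hu₀ : u₀ ∉ X)
    (ℓ k : ℕ) (hk : k ≤ 2 ^ (2 * X.ncard + 1) + X.ncard)
    (u : Fin ℓ → V) (hinj : Function.Injective u)
    (huQ : ∀ p : Fin ℓ, u p ∈ eqCl G X u₀)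
    (hmem : ∀ p : Fin ℓ, cN G (u p) ∈ B)
    (T : Set V → Set V) (hnc : IsNCTM G B T)
    (hsize : ∀ S ∈ B, (T S).ncard ≤ k)
    (hl : (2 ^ (2 ^ X.ncard + X.ncard) + 1) + 2 * k < ℓ) :
    ∃ i j : Fin ℓ, i ≠ j ∧
      u i ∈ T (cN G (u i)) ∧ u j ∈ T (cN G (u j)) ∧
      T (cN G (u i)) ∩ X = T (cN G (u j)) ∩ X ∧
      (T (cN G (u i)) ∩ (eqCl G X u₀ \ {u i}) = ∅ ↔
        T (cN G (u j)) ∩ (eqCl G X u₀ \ {u j}) = ∅) ∧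
      ∀ w : V, w ∉ X → eqCl G X w ≠ eqCl G X u₀ →
        (T (cN G (u i)) ∩ eqCl G X w = ∅ ↔ T (cN G (u j)) ∩ eqCl G X w = ∅) := by
  classical
  set M := 2 ^ (2 ^ X.ncard + X.ncard) with hM
  set Tn : Fin ℓ → Set V := fun p => T (cN G (u p)) with hTn
  have hnotX : ∀ p, u p ∉ X := fun p => (huQ p).1
  have hNeq : ∀ p, G.neighborSet (u p) = G.neighborSet u₀ := fun p => (huQ p).2
  have hnadj : ∀ a b : V, a ∉ X → b ∉ X → ¬ G.Adj a b := by
    intro a b ha hb h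
    rcases hX a b h with h' | h' <;> tauto
  have hcN : ∀ p, cN G (u p) = insert (u p) (G.neighborSet u₀) := by
    intro p
    rw [show cN G (u p) = insert (u p) (G.neighborSet (u p)) from rfl, hNeq p]
  have hupN : ∀ p, u p ∉ G.neighborSet u₀ := fun p h =>
    hnadj u₀ (u p) hu₀ (hnotX p) h
  have hcNne : ∀ p q : Fin ℓ, p ≠ q → cN G (u p) ≠ cN G (u q) := by
    intro p q hpq h
    have h1 : u p ∈ cN G (u q) := h ▸ (by rw [hcN p]; exact Set.mem_insert _ _)
    rw [hcN q] at h1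
    rcases h1 with h1 | h1
    · exact hpq (hinj h1)
    · exact hupN p h1
  have hpair : ∀ p q : Fin ℓ, p ≠ q →
      u p ∈ Tn p ∪ Tn q ∨ u q ∈ Tn p ∪ Tn q := by
    intro p q hpq
    obtain ⟨w, hw, hd⟩ := hnc (u p) (u q) (hmem p) (hmem q) (hcNne p q hpq)
    have hw' : w = u p ∨ w = u q := by
      rcases hd with ⟨h1, h2⟩ | ⟨h1, h2⟩
      · rw [hcN p] at h1
        rw [hcN q] at h2
        rcases h1 with h1 | h1
        · exact Or.inl h1
        · exact absurd (Set.mem_insert_of_mem _ h1) h2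
      · rw [hcN q] at h1
        rw [hcN p] at h2
        rcases h1 with h1 | h1
        · exact Or.inr h1
        · exact absurd (Set.mem_insert_of_mem _ h1) h2
    rcases hw' with rfl | rfl
    · exact Or.inl hw
    · exact Or.inr hw
  -- the set of "bad" indices
  set D : Finset (Fin ℓ) := Finset.univ.filter (fun p => u p ∉ Tn p) with hD
  have houtdeg : ∀ p : Fin ℓ, (D.filter (fun q => u q ∈ Tn p)).card ≤ k := by
    intro p
    have hfin : (Tn p).Finite := (Tn p).toFinite
    calc (D.filter (fun q => u q ∈ Tn p)).card
        ≤ hfin.toFinset.card := by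
          refine Finset.card_le_card_of_injOn u ?_ (fun a _ b _ h => hinj h)
          intro q hq
          rw [Finset.mem_coe, Set.Finite.mem_toFinset]
          exact (Finset.mem_filter.1 (Finset.mem_coe.1 hq)).2
      _ = (Tn p).ncard := (Set.ncard_eq_toFinset_card _ hfin).symm
      _ ≤ k := hsize _ (hmem p)
  have hDpair : ∀ p ∈ D, ∀ q ∈ D, p ≠ q → u q ∈ Tn p ∨ u p ∈ Tn q := by
    intro p hp q hq hpq
    have hp' : u p ∉ Tn p := (Finset.mem_filter.1 hp).2
    have hq' : u q ∉ Tn q := (Finset.mem_filter.1 hq).2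
    rcases hpair p q hpq with h | h <;> rcases h with h | h
    · exact absurd h hp'
    · exact Or.inr h
    · exact Or.inl h
    · exact absurd h hq'
  have hDcard : D.card ≤ 2 * k + 1 := by
    set A := D.offDiag.filter (fun z => u z.2 ∈ Tn z.1) with hA
    have h1 : D.offDiag ⊆ A ∪ A.image Prod.swap := by
      intro z hz
      obtain ⟨hz1, hz2, hz3⟩ := Finset.mem_offDiag.1 hz
      rcases hDpair z.1 hz1 z.2 hz2 hz3 with h | h
      · exact Finset.mem_union_left _ (Finset.mem_filter.2 ⟨hz, h⟩)
      · refine Finset.mem_union_right _ (Finset.mem_image.2 ⟨(z.2, z.1), ?_, rfl⟩)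
        exact Finset.mem_filter.2 ⟨Finset.mem_offDiag.2 ⟨hz2, hz1, hz3.symm⟩, h⟩
    have h2 : A ⊆ D.biUnion (fun p => {p} ×ˢ (D.filter (fun q => u q ∈ Tn p))) := by
      intro z hz
      obtain ⟨hzo, hzr⟩ := Finset.mem_filter.1 hz
      obtain ⟨hz1, hz2, _⟩ := Finset.mem_offDiag.1 hzo
      exact Finset.mem_biUnion.2 ⟨z.1, hz1, Finset.mem_product.2
        ⟨Finset.mem_singleton_self _, Finset.mem_filter.2 ⟨hz2, hzr⟩⟩⟩
    have h3 : A.card ≤ D.card * k := by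
      calc A.card ≤ _ := Finset.card_le_card h2
        _ ≤ ∑ p ∈ D, ({p} ×ˢ (D.filter (fun q => u q ∈ Tn p))).card :=
            Finset.card_biUnion_le
        _ ≤ ∑ _p ∈ D, k := by
            refine Finset.sum_le_sum (fun p _ => ?_)
            rw [Finset.card_product, Finset.card_singleton, one_mul]
            exact houtdeg p
        _ = D.card * k := by rw [Finset.sum_const, smul_eq_mul]
    have h4 : D.card * D.card - D.card ≤ 2 * (D.card * k) := by
      rw [← Finset.offDiag_card]
      calc D.offDiag.card ≤ (A ∪ A.image Prod.swap).card := Finset.card_le_card h1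
        _ ≤ A.card + (A.image Prod.swap).card := Finset.card_union_le _ _
        _ ≤ A.card + A.card := by
            have := Finset.card_image_le (s := A) (f := Prod.swap)
            omega
        _ ≤ 2 * (D.card * k) := by omega
    by_contra hcon
    push_neg at hcon
    have hd1 : D.card * D.card ≤ 2 * (D.card * k) + D.card :=
      Nat.sub_le_iff_le_add.1 h4
    have h5 : D.card * (2 * k + 2) ≤ D.card * D.card :=
      Nat.mul_le_mul_left _ (by omega)
    have h6 : D.card * (2 * k + 2) = 2 * (D.card * k) + 2 * D.card := by ring
    have h7 : (1 : ℕ) ≤ D.card := by omega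
    linarith
  -- the set of "good" indices
  set Gd : Finset (Fin ℓ) := Finset.univ.filter (fun p => u p ∈ Tn p) with hGd
  have hGD : Gd.card + D.card = ℓ := by
    have := Finset.card_filter_add_card_filter_not
      (s := (Finset.univ : Finset (Fin ℓ))) (p := fun p => u p ∈ Tn p)
    simpa [hGd, hD, Finset.card_univ] using this
  have hGdcard : M + 1 ≤ Gd.card := by omega
  -- the signature
  set Xf := X.toFinite.toFinset with hXf
  have hXfcard : Xf.card = X.ncard := (Set.ncard_eq_toFinset_card _ _).symm
  set C := Xf.powerset ×ˢ Xf.powerset.powerset with hC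
  have hCcard : C.card = M := by
    rw [hC, Finset.card_product, Finset.card_powerset, Finset.card_powerset,
      Finset.card_powerset, hXfcard, hM, ← pow_add, Nat.add_comm]
  set cF : Fin ℓ → Finset (Finset V) := fun p =>
    (((Tn p \ X) \ {u p}).toFinite.toFinset).image
      (fun w => (G.neighborSet w).toFinite.toFinset) with hcF
  set sig : Fin ℓ → Finset V × Finset (Finset V) := fun p =>
    ((Tn p ∩ X).toFinite.toFinset, cF p) with hsig
  have hNsubX : ∀ w : V, w ∉ X → G.neighborSet w ⊆ X := by
    intro w hw x hx
    rcases hX w x hx with h | h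
    · exact absurd h hw
    · exact h
  have hmaps : ∀ p ∈ Gd, sig p ∈ C := by
    intro p _
    rw [hC, Finset.mem_product]
    constructor
    · rw [Finset.mem_powerset]
      intro x hx
      rw [Set.Finite.mem_toFinset] at hx ⊢
      exact hx.2
    · rw [Finset.mem_powerset]
      intro A hA
      obtain ⟨w, hw, rfl⟩ := Finset.mem_image.1 hA
      rw [Set.Finite.mem_toFinset] at hw
      rw [Finset.mem_powerset]
      intro x hx
      rw [Set.Finite.mem_toFinset] at hx ⊢
      exact hNsubX w hw.1.2 hx
  obtain ⟨i, hi, j, hj, hij, hsigeq⟩ :=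
    Finset.exists_ne_map_eq_of_card_lt_of_maps_to (by omega : C.card < Gd.card) hmaps
  have hs1 : (Tn i ∩ X).toFinite.toFinset = (Tn j ∩ X).toFinite.toFinset :=
    congrArg Prod.fst hsigeq
  have hs2 : cF i = cF j := congrArg Prod.snd hsigeq
  -- the key class lemma
  have hcls : ∀ p : Fin ℓ, ∀ w : V,
      ((Tn p ∩ (eqCl G X w \ {u p})).Nonempty ↔
        (G.neighborSet w).toFinite.toFinset ∈ cF p) := by
    intro p w
    constructor
    · rintro ⟨v, hvT, hvQ, hvne⟩
      refine Finset.mem_image.2 ⟨v, ?_, ?_⟩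
      · rw [Set.Finite.mem_toFinset]
        exact ⟨⟨hvT, hvQ.1⟩, hvne⟩
      · exact Set.Finite.toFinset_inj.2 hvQ.2
    · intro hA
      obtain ⟨v, hv, hvA⟩ := Finset.mem_image.1 hA
      rw [Set.Finite.mem_toFinset] at hv
      have hNv : G.neighborSet v = G.neighborSet w := Set.Finite.toFinset_inj.1 hvA
      exact ⟨v, hv.1.1, ⟨⟨hv.1.2, hNv⟩, hv.2⟩⟩
  refine ⟨i, j, hij, (Finset.mem_filter.1 hi).2, (Finset.mem_filter.1 hj).2, ?_, ?_, ?_⟩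
  · exact Set.Finite.toFinset_inj.1 hs1
  · rw [← Set.not_nonempty_iff_eq_empty, ← Set.not_nonempty_iff_eq_empty,
      hcls i u₀, hcls j u₀, hs2]
  · intro w hw hwQ
    have hupw : ∀ p : Fin ℓ, u p ∉ eqCl G X w := by
      intro p hp
      apply hwQ
      ext x
      constructor
      · rintro ⟨hx1, hx2⟩
        exact ⟨hx1, by rw [hx2, ← hp.2, hNeq p]⟩
      · rintro ⟨hx1, hx2⟩
        exact ⟨hx1, by rw [hx2, ← hNeq p, hp.2]⟩
    have hdi : eqCl G X w \ {u i} = eqCl G X w := Set.diff_singleton_eq_self (hupw i)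
    have hdj : eqCl G X w \ {u j} = eqCl G X w := Set.diff_singleton_eq_self (hupw j)
    rw [← Set.not_nonempty_iff_eq_empty, ← Set.not_nonempty_iff_eq_empty,
      show Tn i ∩ eqCl G X w = Tn i ∩ (eqCl G X w \ {u i}) by rw [hdi],
      show Tn j ∩ eqCl G X w = Tn j ∩ (eqCl G X w \ {u j}) by rw [hdj],
      hcls i w, hcls j w, hs2]
end

section
/- Let G be a finite simple graph with a vertex cover X, let B be a set of closed neighborhoods of G, let q = 2^{2^{|X|}+|X|} + 1, and let k < 2^{2|X|+1} + |X| be a positive integer. Suppose Q ⊆ V(G) ∖ X is a set of q + 2k + 1 pairwise false twins such that N[u] ∈ B for every u ∈ Q. Then there exists v ∈ Q such that, letting G′ = G − v and B′ = {N_{G′}[w] : w ∈ V(G′) and N_G[w] ∈ B}, there is a non-clashing teaching map of size at most k for B in G if and only if there is a non-clashing teaching map of size at most k for B′ in G′. -/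
/-- There is a non-clashing teaching map of size at most `k` for `B` in `G`. -/
def HasNCTM {V : Type*} (G : SimpleGraph V) (B : Set (Set V)) (k : ℕ) : Prop :=
  ∃ T : Set V → Set V, IsNCTM G B T ∧ ∀ S ∈ B, (T S).ncard ≤ k

lemma mem_cN {V : Type*} (G : SimpleGraph V) {z c : V} : z ∈ cN G c ↔ z = c ∨ G.Adj c z := by
  simp [cN]

lemma cN_induce {V : Type*} (G : SimpleGraph V) (s : Set V) (w : ↥s) :
    cN (G.induce s) w = {z : ↥s | z.1 ∈ cN G w.1} := by
  ext z
  simp [cN, Subtype.ext_iff]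

section helpers
variable {V : Type*} {G : SimpleGraph V} {Q : Set V}
  (htwin : ∀ u ∈ Q, ∀ w ∈ Q, G.neighborSet u = G.neighborSet w)

include htwin

lemma adj_twin {u w : V} (hu : u ∈ Q) (hw : w ∈ Q) (z : V) : G.Adj u z ↔ G.Adj w z := by
  have h := Set.ext_iff.mp (htwin u hu w hw) z
  simpa [SimpleGraph.mem_neighborSet] using h

lemma not_adj_twin {u w : V} (hu : u ∈ Q) (hw : w ∈ Q) : ¬ G.Adj u w :=
  fun h => G.irrefl ((adj_twin htwin hu hw w).1 h)

variable (hQ3 : ∀ a b : V, ∃ u ∈ Q, u ≠ a ∧ u ≠ b)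
include hQ3

lemma twin_sep {v : V} (hvQ : v ∈ Q) {a b : V} (ha : a ≠ v) (hb : b ≠ v)
    (hne : cN G a ≠ cN G b) :
    ∃ z, z ≠ v ∧ ((z ∈ cN G a ∧ z ∉ cN G b) ∨ (z ∈ cN G b ∧ z ∉ cN G a)) := by
  have hz : ∃ z, (z ∈ cN G a ∧ z ∉ cN G b) ∨ (z ∈ cN G b ∧ z ∉ cN G a) := by
    by_contra h
    push_neg at h
    exact hne (Set.ext fun z => ⟨(h z).1, (h z).2⟩)
  obtain ⟨z, hz⟩ := hz
  by_cases hzv : z = v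
  · rw [hzv] at hz
    rcases hz with ⟨hva, hvb⟩ | ⟨hvb, hva⟩
    · -- v ∈ cN a, v ∉ cN b
      obtain ⟨u, huQ, huv, hub⟩ := hQ3 v b
      have hadj : G.Adj a v := by
        rcases (mem_cN G).1 hva with h | h
        · exact absurd h.symm ha
        · exact h
      have hau : G.Adj u a := (adj_twin htwin hvQ huQ a).1 hadj.symm
      refine ⟨u, huv, Or.inl ⟨(mem_cN G).2 (Or.inr hau.symm), fun hu => ?_⟩⟩
      rcases (mem_cN G).1 hu with h | h
      · exact hub h
      · exact hvb ((mem_cN G).2 (Or.inr ((adj_twin htwin huQ hvQ b).1 h.symm).symm))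
    · -- v ∈ cN b, v ∉ cN a
      obtain ⟨u, huQ, huv, hua⟩ := hQ3 v a
      have hadj : G.Adj b v := by
        rcases (mem_cN G).1 hvb with h | h
        · exact absurd h.symm hb
        · exact h
      have hbu : G.Adj u b := (adj_twin htwin hvQ huQ b).1 hadj.symm
      refine ⟨u, huv, Or.inr ⟨(mem_cN G).2 (Or.inr hbu.symm), fun hu => ?_⟩⟩
      rcases (mem_cN G).1 hu with h | h
      · exact hua h
      · exact hva ((mem_cN G).2 (Or.inr ((adj_twin htwin huQ hvQ a).1 h.symm).symm))
  · exact ⟨z, hzv, hz⟩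

lemma cN_eq_twin {v : V} (hvQ : v ∈ Q) {a : V} (h : cN G a = cN G v) : a = v := by
  by_contra hav
  have hva : v ∈ cN G a := h ▸ ((mem_cN G).2 (Or.inl rfl))
  have haa : a ∈ cN G v := h ▸ ((mem_cN G).2 (Or.inl rfl))
  rcases (mem_cN G).1 haa with h1 | h1
  · exact hav h1
  obtain ⟨u, huQ, huv, hua⟩ := hQ3 v a
  have hau : G.Adj u a := (adj_twin htwin hvQ huQ a).1 h1
  have : u ∈ cN G a := (mem_cN G).2 (Or.inr hau.symm)
  rw [h] at this
  rcases (mem_cN G).1 this with h2 | h2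
  · exact huv h2
  · exact not_adj_twin htwin hvQ huQ h2

end helpers

lemma ncard_preimage_val_le {V : Type*} [Fintype V] (s : Set V) (A : Set V) :
    (Subtype.val ⁻¹' A : Set ↥s).ncard ≤ A.ncard := by
  calc (Subtype.val ⁻¹' A : Set ↥s).ncard
      = (Subtype.val '' (Subtype.val ⁻¹' A : Set ↥s)).ncard :=
        (Set.ncard_image_of_injective _ Subtype.val_injective).symm
    _ ≤ A.ncard := Set.ncard_le_ncard (Set.image_preimage_subset _ _) (Set.toFinite A)

lemma forward {V : Type*} [Fintype V] {G : SimpleGraph V} {B : Set (Set V)} {Q : Set V} {k : ℕ}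
    (htwin : ∀ u ∈ Q, ∀ w ∈ Q, G.neighborSet u = G.neighborSet w)
    (hQ3 : ∀ a b : V, ∃ u ∈ Q, u ≠ a ∧ u ≠ b)
    (v : V) (hvQ : v ∈ Q)
    (T : Set V → Set V) (hT : IsNCTM G B T) (hTk : ∀ S ∈ B, (T S).ncard ≤ k)
    (hvBad : ∀ a : V, G.Adj v a → cN G a ∈ B → v ∉ T (cN G a)) :
    HasNCTM (G.induce ({v} : Set V)ᶜ) (restrictB G B {v}) k := by
  classical
  set s : Set V := ({v} : Set V)ᶜ with hs
  set G'' : SimpleGraph ↥s := G.induce s with hG2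
  have hrB : ∀ b' : Set ↥s, b' ∈ restrictB G B {v} ↔
      ∃ w : ↥s, cN G w.1 ∈ B ∧ b' = cN G'' w := fun _ => Iff.rfl
  have hmemi : ∀ (c z : ↥s), z ∈ cN G'' c ↔ z.1 ∈ cN G c.1 := by
    intro c z
    rw [show cN G'' c = {z : ↥s | z.1 ∈ cN G c.1} from cN_induce G s c]
    rfl
  have hlift : ∀ p q : ↥s, cN G'' p = cN G'' q → cN G p.1 = cN G q.1 := by
    intro p q hpq
    by_contra hne
    obtain ⟨z, hzv, hz⟩ := twin_sep htwin hQ3 hvQ p.2 q.2 hne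
    have hzmem : (⟨z, hzv⟩ : ↥s) ∈ cN G'' p ↔ (⟨z, hzv⟩ : ↥s) ∈ cN G'' q := by rw [hpq]
    rw [hmemi, hmemi] at hzmem
    rcases hz with ⟨h1, h2⟩ | ⟨h1, h2⟩
    · exact h2 (hzmem.1 h1)
    · exact h2 (hzmem.2 h1)
  set pick : ↥s → V := fun w => (hQ3 v w.1).choose with hpick
  have pickQ : ∀ w, pick w ∈ Q := fun w => (hQ3 v w.1).choose_spec.1
  have pickv : ∀ w, pick w ≠ v := fun w => (hQ3 v w.1).choose_spec.2.1
  have pickw : ∀ w, pick w ≠ w.1 := fun w => (hQ3 v w.1).choose_spec.2.2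
  set A : ↥s → Set V := fun w =>
    (T (cN G w.1) \ {v}) ∪ (if v ∈ T (cN G w.1) then {pick w} else ∅) with hA
  refine ⟨fun b' => if h : ∃ w : ↥s, cN G w.1 ∈ B ∧ b' = cN G'' w
      then {z : ↥s | z.1 ∈ A h.choose} else ∅, ?_, ?_⟩
  · -- NCTM property
    intro a b ha' hb' hne'
    obtain ⟨a₀, ha₀B, ha₀eq⟩ := (hrB _).1 ha'
    obtain ⟨b₀, hb₀B, hb₀eq⟩ := (hrB _).1 hb'
    simp only [Distinguishes]
    rw [ha₀eq, hb₀eq] at hne' ⊢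
    have hcneq : cN G a₀.1 ≠ cN G b₀.1 := fun h => hne' (by
      ext z; rw [hmemi, hmemi, h])
    obtain ⟨z, hzT, hzD⟩ := hT a₀.1 b₀.1 ha₀B hb₀B hcneq
    have hea : ∃ w : ↥s, cN G w.1 ∈ B ∧ cN G'' a₀ = cN G'' w := ⟨a₀, ha₀B, rfl⟩
    have heb : ∃ w : ↥s, cN G w.1 ∈ B ∧ cN G'' b₀ = cN G'' w := ⟨b₀, hb₀B, rfl⟩
    rw [dif_pos hea, dif_pos heb]
    have hca : cN G a₀.1 = cN G hea.choose.1 := hlift _ _ hea.choose_spec.2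
    have hcb : cN G b₀.1 = cN G heb.choose.1 := hlift _ _ heb.choose_spec.2
    simp only [Distinguishes, Xor'] at hzD
    by_cases hzv : z = v
    · rw [hzv] at hzT hzD
      rcases hzD with ⟨hva, hvb⟩ | ⟨hvb, hva⟩
      · -- v ∈ cN a₀, v ∉ cN b₀
        have hadj : G.Adj v a₀.1 := by
          rcases (mem_cN G).1 hva with h | h
          · exact absurd h.symm a₀.2
          · exact h.symm
        have hnv : v ∉ T (cN G a₀.1) := hvBad a₀.1 hadj ha₀B
        have hvTb : v ∈ T (cN G b₀.1) := by
          rcases hzT with h | h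
          · exact absurd h hnv
          · exact h
        have hus : pick heb.choose ∈ s := by
          simp only [hs, Set.mem_compl_iff, Set.mem_singleton_iff]
          exact pickv heb.choose
        refine ⟨⟨pick heb.choose, hus⟩, Or.inr ?_, ?_⟩
        · show pick heb.choose ∈ A heb.choose
          refine Set.mem_union_right _ ?_
          rw [if_pos (hcb ▸ hvTb)]
          exact rfl
        · simp only [Xor']
          rw [hmemi, hmemi]
          refine Or.inl ⟨?_, ?_⟩
          · exact (mem_cN G).2 (Or.inr ((adj_twin htwin hvQ (pickQ _) a₀.1).1 hadj).symm)
          · intro hu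
            rw [hcb] at hu
            rcases (mem_cN G).1 hu with h | h
            · exact pickw heb.choose h
            · have : G.Adj v heb.choose.1 :=
                (adj_twin htwin (pickQ _) hvQ heb.choose.1).1 h.symm
              exact hvb (hcb ▸ ((mem_cN G).2 (Or.inr this.symm)))
      · -- v ∈ cN b₀, v ∉ cN a₀
        have hadj : G.Adj v b₀.1 := by
          rcases (mem_cN G).1 hvb with h | h
          · exact absurd h.symm b₀.2
          · exact h.symm
        have hnv : v ∉ T (cN G b₀.1) := hvBad b₀.1 hadj hb₀B
        have hvTa : v ∈ T (cN G a₀.1) := by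
          rcases hzT with h | h
          · exact h
          · exact absurd h hnv
        have hus : pick hea.choose ∈ s := by
          simp only [hs, Set.mem_compl_iff, Set.mem_singleton_iff]
          exact pickv hea.choose
        refine ⟨⟨pick hea.choose, hus⟩, Or.inl ?_, ?_⟩
        · show pick hea.choose ∈ A hea.choose
          refine Set.mem_union_right _ ?_
          rw [if_pos (hca ▸ hvTa)]
          exact rfl
        · simp only [Xor']
          rw [hmemi, hmemi]
          refine Or.inr ⟨?_, ?_⟩
          · exact (mem_cN G).2 (Or.inr ((adj_twin htwin hvQ (pickQ _) b₀.1).1 hadj).symm)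
          · intro hu
            rw [hca] at hu
            rcases (mem_cN G).1 hu with h | h
            · exact pickw hea.choose h
            · have : G.Adj v hea.choose.1 :=
                (adj_twin htwin (pickQ _) hvQ hea.choose.1).1 h.symm
              exact hva (hca ▸ ((mem_cN G).2 (Or.inr this.symm)))
    · -- z ≠ v
      have hzs : z ∈ s := by
        simp only [hs, Set.mem_compl_iff, Set.mem_singleton_iff]
        exact hzv
      rcases hzT with h | h
      · refine ⟨⟨z, hzs⟩, Or.inl ?_, ?_⟩
        · show z ∈ A hea.choose
          exact Set.mem_union_left _ ⟨hca ▸ h, hzv⟩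
        · simp only [Xor']
          rw [hmemi, hmemi]
          exact hzD
      · refine ⟨⟨z, hzs⟩, Or.inr ?_, ?_⟩
        · show z ∈ A heb.choose
          exact Set.mem_union_left _ ⟨hcb ▸ h, hzv⟩
        · simp only [Xor']
          rw [hmemi, hmemi]
          exact hzD
  · -- size bound
    intro S' hS'
    obtain ⟨w, hwB, rfl⟩ := (hrB _).1 hS'
    have he : ∃ w' : ↥s, cN G w'.1 ∈ B ∧ cN G'' w = cN G'' w' := ⟨w, hwB, rfl⟩
    beta_reduce
    rw [dif_pos he]
    have hwB' : cN G he.choose.1 ∈ B := he.choose_spec.1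
    have hbound : (A he.choose).ncard ≤ k := by
      rw [hA]
      beta_reduce
      by_cases hv : v ∈ T (cN G he.choose.1)
      · rw [if_pos hv]
        have h1 : (T (cN G he.choose.1) \ {v}).ncard = (T (cN G he.choose.1)).ncard - 1 :=
          Set.ncard_diff_singleton_of_mem hv
        have h2 : 1 ≤ (T (cN G he.choose.1)).ncard :=
          Set.ncard_pos (Set.toFinite _) |>.2 ⟨v, hv⟩
        calc ((T (cN G he.choose.1) \ {v}) ∪ {pick he.choose}).ncard
            ≤ (T (cN G he.choose.1) \ {v}).ncard + ({pick he.choose} : Set V).ncard :=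
              Set.ncard_union_le _ _
          _ ≤ ((T (cN G he.choose.1)).ncard - 1) + 1 := by
              rw [h1, Set.ncard_singleton]
          _ ≤ (T (cN G he.choose.1)).ncard := by omega
          _ ≤ k := hTk _ hwB'
      · rw [if_neg hv, Set.union_empty]
        calc (T (cN G he.choose.1) \ {v}).ncard
            ≤ (T (cN G he.choose.1)).ncard :=
              Set.ncard_le_ncard Set.diff_subset (Set.toFinite _)
          _ ≤ k := hTk _ hwB'
    calc ({z : ↥s | z.1 ∈ A he.choose}).ncard
        = (Subtype.val ⁻¹' (A he.choose) : Set ↥s).ncard := rfl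
      _ ≤ (A he.choose).ncard := ncard_preimage_val_le s _
      _ ≤ k := hbound

lemma backward {V : Type*} [Fintype V] {G : SimpleGraph V} {B : Set (Set V)} {Q : Set V} {k : ℕ}
    (htwin : ∀ u ∈ Q, ∀ w ∈ Q, G.neighborSet u = G.neighborSet w)
    (hQ3 : ∀ a b : V, ∃ u ∈ Q, u ≠ a ∧ u ≠ b)
    (hB : B ⊆ {S | ∃ c : V, S = cN G c})
    (hmem : ∀ u ∈ Q, cN G u ∈ B)
    {v : V} (hvQ : v ∈ Q)
    (hQbig : 2 * k + 2 ≤ (Q \ {v}).ncard)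
    (h' : HasNCTM (G.induce ({v} : Set V)ᶜ) (restrictB G B {v}) k) :
    HasNCTM G B k := by
  classical
  set s : Set V := ({v} : Set V)ᶜ with hs
  set G'' : SimpleGraph ↥s := G.induce s with hG2
  obtain ⟨T', hT', hT'k⟩ := h'
  have hrB : ∀ b' : Set ↥s, b' ∈ restrictB G B {v} ↔
      ∃ w : ↥s, cN G w.1 ∈ B ∧ b' = cN G'' w := fun _ => Iff.rfl
  have hmemi : ∀ (c z : ↥s), z ∈ cN G'' c ↔ z.1 ∈ cN G c.1 := by
    intro c z
    rw [show cN G'' c = {z : ↥s | z.1 ∈ cN G c.1} from cN_induce G s c]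
    rfl
  have hne_v : ∀ z : ↥s, z.1 ≠ v := by
    intro z h
    have hz : z.1 ∈ ({v} : Set V) := by rw [h]; exact Set.mem_singleton v
    exact z.2 hz
  have hlift : ∀ p q : ↥s, cN G'' p = cN G'' q → cN G p.1 = cN G q.1 := by
    intro p q hpq
    by_contra hne
    obtain ⟨z, hzv, hz⟩ := twin_sep htwin hQ3 hvQ (p.2) (q.2) hne
    have hzmem : (⟨z, hzv⟩ : ↥s) ∈ cN G'' p ↔ (⟨z, hzv⟩ : ↥s) ∈ cN G'' q := by rw [hpq]
    rw [hmemi, hmemi] at hzmem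
    rcases hz with ⟨h1, h2⟩ | ⟨h1, h2⟩
    · exact h2 (hzmem.1 h1)
    · exact h2 (hzmem.2 h1)
  have hBmem : ∀ c : ↥s, cN G c.1 ∈ B → cN G'' c ∈ restrictB G B {v} :=
    fun c hc => (hrB _).2 ⟨c, hc, rfl⟩
  -- there is a "good" twin u₀ ∈ Q \ {v} with u₀ ∈ T'(N[u₀])
  have hgood : ∃ u₀ : ↥s, u₀.1 ∈ Q ∧ u₀ ∈ T' (cN G'' u₀) := by
    by_contra hno
    push_neg at hno
    set Qs : Set ↥s := Subtype.val ⁻¹' Q with hQs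
    have hQscard : 2 * k + 2 ≤ Qs.ncard := by
      have h1 : Subtype.val '' Qs = Q ∩ s := by
        rw [hQs, Set.image_preimage_eq_inter_range, Subtype.range_coe]
      have h2 : Q ∩ s = Q \ {v} := by rw [hs, Set.diff_eq]
      have h3 : Qs.ncard = (Q \ {v}).ncard := by
        rw [← Set.ncard_image_of_injective Qs Subtype.val_injective, h1, h2]
      omega
    have hQsf : Qs.Finite := Set.toFinite _
    obtain ⟨F, hFsub, hFcard⟩ := Finset.exists_subset_card_eq
      (show 2 * k + 2 ≤ hQsf.toFinset.card by
        rw [← Set.ncard_eq_toFinset_card Qs hQsf]; exact hQscard)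
    have hFQ : ∀ u : ↥s, u ∈ F → u.1 ∈ Q := by
      intro u hu
      have := hFsub hu
      rw [Set.Finite.mem_toFinset] at this
      exact this
    have hpair : ∀ u ∈ F, ∀ w ∈ F, u ≠ w →
        u ∈ T' (cN G'' w) ∨ w ∈ T' (cN G'' u) := by
      intro u hu w hw huw
      have huQ := hFQ u hu
      have hwQ := hFQ w hw
      have hne : cN G'' u ≠ cN G'' w := by
        intro h
        have h1 : u ∈ cN G'' w := h ▸ ((hmemi u u).2 ((mem_cN G).2 (Or.inl rfl)))
        rw [hmemi] at h1
        rcases (mem_cN G).1 h1 with h2 | h2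
        · exact huw (Subtype.ext h2)
        · exact not_adj_twin htwin hwQ huQ h2
      obtain ⟨z, hzT, hzD⟩ := hT' u w (hBmem u (hmem _ huQ)) (hBmem w (hmem _ hwQ)) hne
      simp only [Distinguishes, Xor'] at hzD
      simp only [hmemi] at hzD
      rcases hzD with ⟨h1, h2⟩ | ⟨h1, h2⟩
      · have hz : z = u := by
          rcases (mem_cN G).1 h1 with h3 | h3
          · exact Subtype.ext h3
          · exact absurd ((mem_cN G).2 (Or.inr ((adj_twin htwin huQ hwQ z.1).1 h3))) h2
        rw [hz] at hzT
        rcases hzT with h | h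
        · exact absurd h (hno u huQ)
        · exact Or.inl h
      · have hz : z = w := by
          rcases (mem_cN G).1 h1 with h3 | h3
          · exact Subtype.ext h3
          · exact absurd ((mem_cN G).2 (Or.inr ((adj_twin htwin hwQ huQ z.1).1 h3))) h2
        rw [hz] at hzT
        rcases hzT with h | h
        · exact Or.inr h
        · exact absurd h (hno w hwQ)
    set tf : ↥s → Finset ↥s := fun w => (T' (cN G'' w)).toFinite.toFinset with htf
    have htfk : ∀ w ∈ F, (tf w).card ≤ k := by
      intro w hw
      have h1 : (T' (cN G'' w)).ncard ≤ k := hT'k _ (hBmem w (hmem _ (hFQ w hw)))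
      rw [htf]
      rw [← Set.ncard_eq_toFinset_card (T' (cN G'' w)) (Set.toFinite _)]
      exact h1
    set SS : Finset (↥s × ↥s) :=
      (F ×ˢ F).filter (fun p => p.1 ≠ p.2 ∧ p.1 ∈ T' (cN G'' p.2)) with hSS
    have hsub2 : SS ⊆ F.biUnion (fun w => (tf w).image (fun z => (z, w))) := by
      intro p hp
      rw [hSS, Finset.mem_filter, Finset.mem_product] at hp
      obtain ⟨⟨hp1, hp2⟩, hne, hmem'⟩ := hp
      refine Finset.mem_biUnion.2 ⟨p.2, hp2, Finset.mem_image.2 ⟨p.1, ?_, ?_⟩⟩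
      · rw [htf, Set.Finite.mem_toFinset]; exact hmem'
      · exact Prod.ext rfl rfl
    have hScard : SS.card ≤ (2 * k + 2) * k := by
      calc SS.card ≤ (F.biUnion (fun w => (tf w).image (fun z => (z, w)))).card :=
            Finset.card_le_card hsub2
        _ ≤ ∑ w ∈ F, ((tf w).image (fun z => (z, w))).card := Finset.card_biUnion_le
        _ ≤ ∑ _w ∈ F, k := Finset.sum_le_sum
            (fun w hw => le_trans Finset.card_image_le (htfk w hw))
        _ = (2 * k + 2) * k := by rw [Finset.sum_const, hFcard, smul_eq_mul]
    have hoff : F.offDiag ⊆ SS ∪ SS.image Prod.swap := by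
      intro p hp
      rw [Finset.mem_offDiag] at hp
      obtain ⟨h1, h2, h3⟩ := hp
      rcases hpair p.1 h1 p.2 h2 h3 with h | h
      · exact Finset.mem_union_left _
          (Finset.mem_filter.2 ⟨Finset.mem_product.2 ⟨h1, h2⟩, h3, h⟩)
      · refine Finset.mem_union_right _ (Finset.mem_image.2 ⟨(p.2, p.1), ?_, ?_⟩)
        · exact Finset.mem_filter.2 ⟨Finset.mem_product.2 ⟨h2, h1⟩, Ne.symm h3, h⟩
        · exact Prod.ext rfl rfl
    have hfinal : F.offDiag.card ≤ SS.card + SS.card :=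
      le_trans (Finset.card_le_card hoff)
        (le_trans (Finset.card_union_le _ _) (Nat.add_le_add le_rfl Finset.card_image_le))
    rw [Finset.offDiag_card, hFcard] at hfinal
    have hP : (2 * k + 2) * (2 * k + 2) = 2 * ((2 * k + 2) * k) + (2 * (2 * k + 2)) := by ring
    generalize hR : (2 * k + 2) * k = R at hScard hP
    generalize hPP : (2 * k + 2) * (2 * k + 2) = P at hfinal hP
    omega
  obtain ⟨u₀, hu₀Q, hu₀good⟩ := hgood
  have hu₀v : u₀.1 ≠ v := hne_v u₀
  -- the swap of the two false twins u₀ and v is an automorphism-like map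
  set e : Equiv.Perm V := Equiv.swap u₀.1 v with he
  have heu : e u₀.1 = v := by rw [he]; exact Equiv.swap_apply_left _ _
  have hev : e v = u₀.1 := by rw [he]; exact Equiv.swap_apply_right _ _
  have heo : ∀ z : V, z ≠ u₀.1 → z ≠ v → e z = z := by
    intro z h1 h2; rw [he]; exact Equiv.swap_apply_of_ne_of_ne h1 h2
  have hadj1 : ∀ c z : V, G.Adj c z → G.Adj (e c) (e z) := by
    intro c z h
    rcases eq_or_ne c u₀.1 with hc | hc
    · rcases eq_or_ne z u₀.1 with hz | hz
      · rw [hc, hz] at h; exact absurd h (G.irrefl)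
      · rcases eq_or_ne z v with hz2 | hz2
        · rw [hc, hz2] at h; exact absurd h (not_adj_twin htwin hu₀Q hvQ)
        · rw [hc, heu, heo z hz hz2]
          rw [hc] at h
          exact (adj_twin htwin hu₀Q hvQ z).1 h
    · rcases eq_or_ne c v with hc2 | hc2
      · rcases eq_or_ne z u₀.1 with hz | hz
        · rw [hc2, hz] at h; exact absurd h (not_adj_twin htwin hvQ hu₀Q)
        · rcases eq_or_ne z v with hz2 | hz2
          · rw [hc2, hz2] at h; exact absurd h (G.irrefl)
          · rw [hc2, hev, heo z hz hz2]
            rw [hc2] at h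
            exact (adj_twin htwin hvQ hu₀Q z).1 h
      · rw [heo c hc hc2]
        rcases eq_or_ne z u₀.1 with hz | hz
        · rw [hz, heu]
          rw [hz] at h
          exact ((adj_twin htwin hu₀Q hvQ c).1 h.symm).symm
        · rcases eq_or_ne z v with hz2 | hz2
          · rw [hz2, hev]
            rw [hz2] at h
            exact ((adj_twin htwin hvQ hu₀Q c).1 h.symm).symm
          · rw [heo z hz hz2]; exact h
  have hadj : ∀ c z : V, G.Adj (e c) (e z) ↔ G.Adj c z := by
    intro c z
    refine ⟨fun h => ?_, hadj1 c z⟩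
    have h2 := hadj1 _ _ h
    rw [he] at h2
    rwa [Equiv.swap_apply_self, Equiv.swap_apply_self] at h2
  have hcNe : ∀ c z : V, z ∈ cN G c ↔ e z ∈ cN G (e c) := by
    intro c z
    rw [mem_cN, mem_cN]
    constructor
    · rintro (h | h)
      · exact Or.inl (congrArg e h)
      · exact Or.inr (hadj1 _ _ h)
    · rintro (h | h)
      · exact Or.inl (e.injective h)
      · exact Or.inr ((hadj _ _).1 h)
  set lift : Set ↥s → Set V := fun t => Subtype.val '' t with hliftdef
  set φ : Set V → Set ↥s := fun S => {z : ↥s | z.1 ∈ S} with hφ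
  have hφcN : ∀ c : ↥s, φ (cN G c.1) = cN G'' c := by
    intro c
    rw [hφ, show cN G'' c = {z : ↥s | z.1 ∈ cN G c.1} from cN_induce G s c]
  have hKB : ∀ c : V, cN G c = cN G v → c = v := fun c h => cN_eq_twin htwin hQ3 hvQ h
  have hKBu : ∀ c : V, cN G c = cN G u₀.1 → c = u₀.1 :=
    fun c h => cN_eq_twin htwin hQ3 hu₀Q h
  have hu₀B' : cN G'' u₀ ∈ restrictB G B {v} := hBmem u₀ (hmem _ hu₀Q)
  set TT : Set V → Set V :=
    fun S => if S = cN G v then e '' (lift (T' (cN G'' u₀))) else lift (T' (φ S)) with hTT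
  have hTTv : TT (cN G v) = e '' (lift (T' (cN G'' u₀))) := by
    simp only [hTT, if_true]
  have hTTo : ∀ S : Set V, S ≠ cN G v → TT S = lift (T' (φ S)) := by
    intro S hS; simp only [hTT]; rw [if_neg hS]
  refine ⟨TT, ?_, ?_⟩
  · -- NCTM property
    -- main helper for pairs involving v
    have main : ∀ c : V, cN G c ∈ B → cN G c ≠ cN G v →
        ∃ z, z ∈ TT (cN G v) ∪ TT (cN G c) ∧
          ((z ∈ cN G v ∧ z ∉ cN G c) ∨ (z ∈ cN G c ∧ z ∉ cN G v)) := by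
      intro c hcB hcv
      have hcvne : c ≠ v := fun h => hcv (by rw [h])
      have hcs : c ∈ s := by
        rw [hs]; simp only [Set.mem_compl_iff, Set.mem_singleton_iff]; exact hcvne
      by_cases hvc : v ∈ cN G c
      · -- v ∈ N[c], so c is adjacent to v and to every twin
        have hadjcv : G.Adj c v := by
          rcases (mem_cN G).1 hvc with h | h
          · exact absurd h.symm hcvne
          · exact h
        have hcu : c ≠ u₀.1 := fun h => not_adj_twin htwin hu₀Q hvQ (h ▸ hadjcv)
        have hcNne : cN G c ≠ cN G u₀.1 := fun h => hcu (hKBu c h)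
        have hne'' : cN G'' u₀ ≠ cN G'' ⟨c, hcs⟩ := fun h => hcNne (hlift _ _ h).symm
        obtain ⟨z, hzT, hzD⟩ := hT' u₀ ⟨c, hcs⟩ hu₀B' (hBmem _ hcB) hne''
        simp only [Distinguishes, Xor'] at hzD
        simp only [hmemi] at hzD
        have hzvne : z.1 ≠ v := hne_v z
        rcases hzT with hzT | hzT
        · -- use e z
          have hec : e c = c := heo c hcu hcvne
          refine ⟨e z.1, Or.inl ?_, ?_⟩
          · rw [hTTv]; exact ⟨z.1, ⟨z, hzT, rfl⟩, rfl⟩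
          · rcases hzD with ⟨h1, h2⟩ | ⟨h1, h2⟩
            · left
              constructor
              · have h3 := (hcNe u₀.1 z.1).1 h1
                rwa [heu] at h3
              · intro hmem2
                rw [← hec] at hmem2
                exact h2 ((hcNe c z.1).2 hmem2)
            · right
              constructor
              · have h3 := (hcNe c z.1).1 h1
                rwa [hec] at h3
              · intro hmem2
                exact h2 ((hcNe u₀.1 z.1).2 (by rw [heu]; exact hmem2))
        · -- use z itself
          have hzu : z.1 ≠ u₀.1 := by
            intro h
            have hu₀c : u₀.1 ∈ cN G c :=
              (mem_cN G).2 (Or.inr ((adj_twin htwin hvQ hu₀Q c).1 hadjcv.symm).symm)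
            rcases hzD with ⟨h1, h2⟩ | ⟨h1, h2⟩
            · exact h2 (h ▸ hu₀c)
            · exact h2 ((mem_cN G).2 (Or.inl h))
          have hiff : (z.1 ∈ cN G v) ↔ (z.1 ∈ cN G u₀.1) := by
            rw [mem_cN, mem_cN]
            constructor
            · rintro (h | h)
              · exact absurd h hzvne
              · exact Or.inr ((adj_twin htwin hvQ hu₀Q z.1).1 h)
            · rintro (h | h)
              · exact absurd h hzu
              · exact Or.inr ((adj_twin htwin hu₀Q hvQ z.1).1 h)
          refine ⟨z.1, Or.inr ?_, ?_⟩
          · rw [hTTo _ hcv, show φ (cN G c) = cN G'' ⟨c, hcs⟩ from hφcN ⟨c, hcs⟩]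
            exact ⟨z, hzT, rfl⟩
          · rcases hzD with ⟨h1, h2⟩ | ⟨h1, h2⟩
            · exact Or.inl ⟨hiff.2 h1, h2⟩
            · exact Or.inr ⟨h1, fun hh => h2 (hiff.1 hh)⟩
      · -- v ∉ N[c] : v itself distinguishes, and v ∈ TT (N[v]) since u₀ is good
        refine ⟨v, Or.inl ?_, Or.inl ⟨(mem_cN G).2 (Or.inl rfl), hvc⟩⟩
        rw [hTTv]
        exact ⟨u₀.1, ⟨u₀, hu₀good, rfl⟩, heu⟩
    intro a b haB hbB hab
    by_cases hav : cN G a = cN G v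
    · have ha : a = v := hKB a hav
      have hbne : cN G b ≠ cN G v := fun h => hab (hav.trans h.symm)
      obtain ⟨z, hzT, hzD⟩ := main b hbB hbne
      refine ⟨z, ?_, ?_⟩
      · rw [hav]; exact hzT
      · simp only [Distinguishes, Xor']
        rw [ha]
        exact hzD
    · by_cases hbv : cN G b = cN G v
      · have hb : b = v := hKB b hbv
        obtain ⟨z, hzT, hzD⟩ := main a haB hav
        refine ⟨z, ?_, ?_⟩
        · rw [hbv]
          rcases hzT with h | h
          · exact Or.inr h
          · exact Or.inl h
        · simp only [Distinguishes, Xor']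
          rw [hb]
          rcases hzD with ⟨h1, h2⟩ | ⟨h1, h2⟩
          · exact Or.inr ⟨h1, h2⟩
          · exact Or.inl ⟨h1, h2⟩
      · -- generic pair: transfer through the induced graph
        have hane : a ≠ v := fun h => hav (by rw [h])
        have hbne : b ≠ v := fun h => hbv (by rw [h])
        have has : a ∈ s := by
          rw [hs]; simp only [Set.mem_compl_iff, Set.mem_singleton_iff]; exact hane
        have hbs : b ∈ s := by
          rw [hs]; simp only [Set.mem_compl_iff, Set.mem_singleton_iff]; exact hbne
        have hne'' : cN G'' ⟨a, has⟩ ≠ cN G'' ⟨b, hbs⟩ := fun h => hab (hlift _ _ h)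
        obtain ⟨z, hzT, hzD⟩ := hT' ⟨a, has⟩ ⟨b, hbs⟩ (hBmem _ haB) (hBmem _ hbB) hne''
        simp only [Distinguishes, Xor'] at hzD
        simp only [hmemi] at hzD
        refine ⟨z.1, ?_, ?_⟩
        · rcases hzT with h | h
          · refine Or.inl ?_
            rw [hTTo _ hav, show φ (cN G a) = cN G'' ⟨a, has⟩ from hφcN ⟨a, has⟩]
            exact ⟨z, h, rfl⟩
          · refine Or.inr ?_
            rw [hTTo _ hbv, show φ (cN G b) = cN G'' ⟨b, hbs⟩ from hφcN ⟨b, hbs⟩]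
            exact ⟨z, h, rfl⟩
        · simp only [Distinguishes, Xor']
          exact hzD
  · -- size bound
    intro S hS
    by_cases hSv : S = cN G v
    · rw [hSv, hTTv]
      calc (e '' (lift (T' (cN G'' u₀)))).ncard
          = (lift (T' (cN G'' u₀))).ncard := Set.ncard_image_of_injective _ e.injective
        _ = (T' (cN G'' u₀)).ncard := Set.ncard_image_of_injective _ Subtype.val_injective
        _ ≤ k := hT'k _ hu₀B'
    · rw [hTTo _ hSv]
      obtain ⟨c, rfl⟩ := hB hS
      have hcv : c ≠ v := fun h => hSv (by rw [h])
      have hcs : c ∈ s := by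
        rw [hs]; simp only [Set.mem_compl_iff, Set.mem_singleton_iff]; exact hcv
      rw [show φ (cN G c) = cN G'' ⟨c, hcs⟩ from hφcN ⟨c, hcs⟩]
      calc (lift (T' (cN G'' ⟨c, hcs⟩))).ncard
          = (T' (cN G'' ⟨c, hcs⟩)).ncard := Set.ncard_image_of_injective _ Subtype.val_injective
        _ ≤ k := hT'k _ (hBmem _ hS)

lemma two_mul_add_two_le (x : ℕ) (h : 3 ≤ x) : 2*x+2 ≤ 2^x := by
  induction x, h using Nat.le_induction with
  | base => norm_num
  | succ n hn ih =>
    have : 2^(n+1) = 2*2^n := by ring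
    omega

lemma arith1 (x k : ℕ) (hk : 0 < k) (hku : k < 2 ^ (2*x+1) + x) :
    x * k < 2 ^ (2 ^ x + x) + 2 * k + 2 := by
  rcases le_or_gt x 2 with h | h
  · have hxx : x * k ≤ 2 * k := Nat.mul_le_mul_right k h
    have hpos : 0 < 2^(2^x+x) := pow_pos (by norm_num) _
    omega
  · have h3 : 3 ≤ x := h
    have hxk : x * k ≤ x * (2^(2*x+1) + x) := by
      exact Nat.mul_le_mul_left x (le_of_lt hku)
    have hx2 : x ≤ 2^x := Nat.le_of_lt (Nat.lt_two_pow_self (n := x))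
    have h1 : x * (2^(2*x+1) + x) ≤ 2^x * 2^(2*x+1) + 2^x * 2^x := by
      have := Nat.mul_le_mul hx2 (le_refl (2^(2*x+1)))
      have := Nat.mul_le_mul hx2 hx2
      calc x * (2^(2*x+1) + x) = x * 2^(2*x+1) + x * x := by ring
        _ ≤ 2^x * 2^(2*x+1) + 2^x * 2^x := by
            exact Nat.add_le_add (Nat.mul_le_mul_right _ hx2) (Nat.mul_le_mul hx2 hx2)
    have h2 : 2^x * 2^(2*x+1) + 2^x * 2^x ≤ 2^(3*x+1) + 2^(3*x+1) := by
      have e1 : 2^x * 2^(2*x+1) = 2^(3*x+1) := by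
        rw [← pow_add]; ring_nf
      have e2 : (2:ℕ)^x * 2^x = 2^(2*x) := by rw [← pow_add]; ring_nf
      have e3 : (2:ℕ)^(2*x) ≤ 2^(3*x+1) := Nat.pow_le_pow_right (by norm_num) (by omega)
      omega
    have h4 : 2^(3*x+1) + 2^(3*x+1) = 2^(3*x+2) := by ring
    have h5 : (2:ℕ)^(3*x+2) ≤ 2^(2^x + x) := by
      apply Nat.pow_le_pow_right (by norm_num)
      have := two_mul_add_two_le x h3
      omega
    omega

/-- Reduction rule 2 is safe: let `X` be a vertex cover of `G`,
`q = 2^{2^{|X|}+|X|} + 1`, and `0 < k < 2^{2|X|+1} + |X|`.  If `Q ⊆ V(G) ∖ X` is a set of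
`q + 2k + 1` pairwise false twins whose closed neighborhoods are all in `B`, then some
`v ∈ Q` can be deleted: there is an NCTM of size at most `k` for `B` in `G` iff there is
one for the restriction `B'` of `B` in `G − v`. -/
theorem stmt10 {V : Type*} [Fintype V] (G : SimpleGraph V)
    (X : Set V) (hX : ∀ u v : V, G.Adj u v → u ∈ X ∨ v ∈ X)
    (B : Set (Set V)) (hB : B ⊆ {S | ∃ v : V, S = cN G v})
    (k : ℕ) (hk : 0 < k)
    (hku : k < 2 ^ (2 * X.ncard + 1) + X.ncard)
    (Q : Set V) (hQX : Q ⊆ Xᶜ)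
    (hQcard : Q.ncard = (2 ^ (2 ^ X.ncard + X.ncard) + 1) + 2 * k + 1)
    (htwin : ∀ u ∈ Q, ∀ w ∈ Q, G.neighborSet u = G.neighborSet w)
    (hmem : ∀ u ∈ Q, cN G u ∈ B) :
    ∃ v ∈ Q,
      (HasNCTM G B k ↔
        HasNCTM (G.induce ({v} : Set V)ᶜ) (restrictB G B {v}) k) := by
  classical
  have hpow : 0 < 2 ^ (2 ^ X.ncard + X.ncard) := pow_pos (by norm_num) _
  have hQ3 : ∀ a b : V, ∃ u ∈ Q, u ≠ a ∧ u ≠ b := by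
    intro a b
    have hns : ¬ Q ⊆ {a, b} := by
      intro hsub
      have h1 : Q.ncard ≤ ({a, b} : Set V).ncard := Set.ncard_le_ncard hsub (Set.toFinite _)
      have h2 : ({a, b} : Set V).ncard ≤ 2 := by
        calc ({a, b} : Set V).ncard ≤ ({b} : Set V).ncard + 1 := Set.ncard_insert_le a {b}
          _ = 2 := by rw [Set.ncard_singleton]
      omega
    obtain ⟨u, huQ, hu⟩ := Set.not_subset.1 hns
    refine ⟨u, huQ, ?_, ?_⟩ <;> (intro h; apply hu; simp [h])
  obtain ⟨v₀, hv₀Q⟩ : Q.Nonempty := Set.nonempty_of_ncard_ne_zero (by omega)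
  by_cases hG : HasNCTM G B k
  · obtain ⟨T, hT, hTk⟩ := hG
    set D : Set V := {a | G.Adj v₀ a ∧ cN G a ∈ B} with hD
    have hDX : D ⊆ X := by
      intro a ha
      rcases hX v₀ a ha.1 with h | h
      · exact absurd h (hQX hv₀Q)
      · exact h
    have hDcard : D.ncard ≤ X.ncard := Set.ncard_le_ncard hDX (Set.toFinite _)
    set Bad : Set V := ⋃ a ∈ D, T (cN G a) with hBad
    have hBadcard : Bad.ncard ≤ X.ncard * k := by
      have h1 : Bad.ncard ≤
          (D.toFinite.toFinset.biUnion (fun a => (T (cN G a)).toFinite.toFinset)).card := by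
        rw [← Set.ncard_coe_finset]
        refine Set.ncard_le_ncard ?_ (Set.toFinite _)
        intro x hx
        simp only [hBad, Set.mem_iUnion] at hx
        obtain ⟨a, ha, hxa⟩ := hx
        simp only [Finset.coe_biUnion, Set.mem_iUnion, Finset.mem_coe,
          Set.Finite.mem_toFinset]
        exact ⟨a, ha, hxa⟩
      have h2 : (D.toFinite.toFinset.biUnion (fun a => (T (cN G a)).toFinite.toFinset)).card
          ≤ ∑ a ∈ D.toFinite.toFinset, ((T (cN G a)).toFinite.toFinset).card :=
        Finset.card_biUnion_le
      have h3 : ∑ a ∈ D.toFinite.toFinset, ((T (cN G a)).toFinite.toFinset).card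
          ≤ ∑ _a ∈ D.toFinite.toFinset, k := by
        refine Finset.sum_le_sum ?_
        intro a ha
        rw [Set.Finite.mem_toFinset] at ha
        rw [← Set.ncard_eq_toFinset_card (T (cN G a)) (Set.toFinite _)]
        exact hTk _ ha.2
      have h4 : ∑ _a ∈ D.toFinite.toFinset, k = D.ncard * k := by
        rw [Finset.sum_const, smul_eq_mul, ← Set.ncard_eq_toFinset_card D (Set.toFinite _)]
      have h5 : D.ncard * k ≤ X.ncard * k := Nat.mul_le_mul_right k hDcard
      omega
    have hQBad : ¬ Q ⊆ Bad := by
      intro hsub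
      have h1 : Q.ncard ≤ Bad.ncard := Set.ncard_le_ncard hsub (Set.toFinite _)
      have h2 := arith1 X.ncard k hk hku
      generalize hxk : X.ncard * k = xk at hBadcard h2
      generalize hpw : 2 ^ (2 ^ X.ncard + X.ncard) = Pw at h2 hQcard
      omega
    obtain ⟨v, hvQ, hvBad⟩ := Set.not_subset.1 hQBad
    have hvB : ∀ a : V, G.Adj v a → cN G a ∈ B → v ∉ T (cN G a) := by
      intro a hva haB hvT
      apply hvBad
      rw [hBad]
      exact Set.mem_biUnion ⟨(adj_twin htwin hvQ hv₀Q a).1 hva, haB⟩ hvT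
    exact ⟨v, hvQ, iff_of_true ⟨T, hT, hTk⟩ (forward htwin hQ3 v hvQ T hT hTk hvB)⟩
  · refine ⟨v₀, hv₀Q, iff_of_false hG ?_⟩
    intro h'
    apply hG
    refine backward htwin hQ3 hB hmem hv₀Q ?_ h'
    have hd : (Q \ {v₀}).ncard = Q.ncard - 1 :=
      Set.ncard_diff_singleton_of_mem hv₀Q
    omega
end
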